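/- arXiv:2405.17133 — 7 statements merged into one kernel-verified Lean document; each statement's English description precedes it below -/
import Mathlib

section
/- Let R be an integral domain, let q ≥ 2 be an integer, and let π ∈ R satisfy π ≠ 0 and π^m ≠ 1 for every integer m ≥ 1. Let g ∈ R[[t]] be a formal power series with constant term 0 and coefficients a_i (so g = Σ_{i≥1} a_i t^i), satisfying π·g(t) + g(t)^q = g(π·t + t^q). Then: (i) a_i = 0 for every index i ≥ 0 that is not of the form 1 + (q−1)·n with n ∈ ℤ_{≥0}; (ii) (π^q − π)·a_q = a_1^q − a_1; (iii) (π − π^{2q−1})·a_{2q−1} = q·(π^{q−1} − a_1^{q−1})·a_q. -/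
/-- Substitution of the power series `Φ` into the power series `g`.  When `Φ` has zero
constant coefficient this is the usual composition `g(Φ(t))`, since then
`coeff n (Φ ^ i) = 0` for `i > n`. -/
noncomputable def psSubst {R : Type*} [CommRing R] (Φ g : PowerSeries R) : PowerSeries R :=
  PowerSeries.mk fun n =>
    ∑ i ∈ Finset.range (n + 1), PowerSeries.coeff i g * PowerSeries.coeff n (Φ ^ i)

open PowerSeries Finset

private lemma coeffPhiPow {R : Type*} [CommRing R] (π : R) (q i n : ℕ) :
    (PowerSeries.coeff n) ((C π * X + X ^ q) ^ i)
      = ∑ j ∈ range (i + 1),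
          if n = q * j + (i - j) then (i.choose j : R) * π ^ (i - j) else 0 := by
  rw [add_comm (C π * X), add_pow, map_sum]
  refine sum_congr rfl fun j hj => ?_
  have h : ((X : R⟦X⟧) ^ q) ^ j * (C π * X) ^ (i - j) * (i.choose j : R⟦X⟧)
      = C ((i.choose j : R) * π ^ (i - j)) * X ^ (q * j + (i - j)) := by
    rw [← map_natCast (C (R := R)) (i.choose j), mul_pow, ← map_pow, map_mul, pow_add, ← pow_mul]
    ring
  rw [h, coeff_C_mul, coeff_X_pow]
  split_ifs <;> ring

/-- Coefficient relations for a power series commuting with the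
Lubin–Tate Frobenius series `Φ(t) = π t + t^q`. -/
theorem stmt0 {R : Type*} [CommRing R] [IsDomain R] (q : ℕ) (hq : 2 ≤ q)
    (π : R) (hπ0 : π ≠ 0) (hπ1 : ∀ m : ℕ, 1 ≤ m → π ^ m ≠ 1)
    (g : PowerSeries R) (hg0 : PowerSeries.constantCoeff g = 0)
    (hfe : PowerSeries.C π * g + g ^ q
        = psSubst (PowerSeries.C π * PowerSeries.X + PowerSeries.X ^ q) g) :
    (∀ i : ℕ, (¬ ∃ n : ℕ, i = 1 + (q - 1) * n) → PowerSeries.coeff i g = 0) ∧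
    (π ^ q - π) * PowerSeries.coeff q g
      = (PowerSeries.coeff 1 g) ^ q - PowerSeries.coeff 1 g ∧
    (π - π ^ (2 * q - 1)) * PowerSeries.coeff (2 * q - 1) g
      = (q : R) * (π ^ (q - 1) - (PowerSeries.coeff 1 g) ^ (q - 1))
          * PowerSeries.coeff q g := by
  -- the master coefficient equation
  have master : ∀ n : ℕ, π * coeff n g + coeff n (g ^ q)
      = ∑ i ∈ range (n + 1), coeff i g *
          ∑ j ∈ range (i + 1),
            (if n = q * j + (i - j) then (i.choose j : R) * π ^ (i - j) else 0) := by
    intro n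
    have := congrArg (coeff n) hfe
    simpa [psSubst, coeff_mk, coeffPhiPow] using this
  -- the shifted series h with g = X * h
  set h : R⟦X⟧ := PowerSeries.mk fun n => coeff (n + 1) g with hh_def
  have hgh : g = X * h := by
    ext m
    cases m with
    | zero => simp [hg0]
    | succ m => simp [coeff_succ_X_mul, hh_def]
  -- Part (i)
  have part1 : ∀ n : ℕ, (¬ ∃ m : ℕ, n = 1 + (q - 1) * m) → coeff n g = 0 := by
    intro n
    induction n using Nat.strong_induction_on with
    | _ n IH =>
      intro hn
      push_neg at hn
      rcases Nat.eq_zero_or_pos n with rfl | hn1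
      · simpa using hg0
      have hn2 : 2 ≤ n := by
        rcases Nat.lt_or_ge n 2 with h | h
        · exfalso; exact hn 0 (by omega)
        · exact h
      -- the q-th power has vanishing n-th coefficient
      have hgq : coeff n (g ^ q) = 0 := by
        rw [hgh, mul_pow, coeff_X_pow_mul']
        split_ifs with hle
        · rw [coeff_pow]
          refine Finset.sum_eq_zero fun l hl => ?_
          rw [Finset.mem_finsuppAntidiag] at hl
          by_cases hall : ∀ i ∈ range q, (q - 1) ∣ l i
          · exfalso
            have hdvd : (q - 1) ∣ (n - q) := hl.1 ▸ Finset.dvd_sum hall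
            obtain ⟨m, hm⟩ := hdvd
            exact hn (m + 1) (by rw [Nat.mul_add, ← hm]; omega)
          · push_neg at hall
            obtain ⟨i, hi, hdvd⟩ := hall
            refine Finset.prod_eq_zero hi ?_
            have hle2 : l i ≤ n - q := by
              rw [← hl.1]
              exact Finset.single_le_sum (fun _ _ => Nat.zero_le _) hi
            have hcoe : coeff (l i) h = coeff (l i + 1) g := by simp [hh_def]
            rw [hcoe]
            refine IH (l i + 1) (by omega) ?_
            rintro ⟨m, hm⟩
            exact hdvd ⟨m, by omega⟩
        · rfl
      have hE := master n
      rw [hgq, add_zero] at hE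
      have hRHS : (∑ i ∈ range (n + 1), coeff i g *
          ∑ j ∈ range (i + 1),
            (if n = q * j + (i - j) then (i.choose j : R) * π ^ (i - j) else 0))
          = coeff n g * π ^ n := by
        rw [Finset.sum_eq_single n]
        · congr 1
          rw [Finset.sum_eq_single 0]
          · simp
          · intro j hj hj0
            rw [if_neg]
            have hj1 : 1 ≤ j := Nat.one_le_iff_ne_zero.2 hj0
            have h2j : 2 * j ≤ q * j := Nat.mul_le_mul_right j hq
            rw [Finset.mem_range] at hj
            omega
          · intro h0; exact absurd (Finset.mem_range.2 (by omega)) h0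
        · intro i hi hin
          rw [Finset.mul_sum]
          refine Finset.sum_eq_zero fun j hj => ?_
          rw [Finset.mem_range] at hi hj
          split_ifs with hc
          · have hq1 : q * j = (q - 1) * j + j := by
              have h1j : 1 * j ≤ q * j := Nat.mul_le_mul_right j (by omega)
              rw [Nat.sub_one_mul]; omega
            have hni : n = (q - 1) * j + i := by omega
            have hi1 : 1 ≤ i := by
              by_contra hi0
              have : i = 0 := by omega
              subst this
              have : j = 0 := by omega
              subst this
              simp at hni; omega
            have : coeff i g = 0 := by
              refine IH i (by omega) ?_
              rintro ⟨m, hm⟩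
              refine hn (m + j) ?_
              have hmj : (q - 1) * (m + j) = (q - 1) * m + (q - 1) * j := by ring
              omega
            rw [this, zero_mul]
          · exact mul_zero _
        · intro hnot; exact absurd (Finset.self_mem_range_succ n) hnot
      rw [hRHS] at hE
      have hzero : coeff n g * (π * (π ^ (n - 1) - 1)) = 0 := by
        have hπn : π ^ n = π * π ^ (n - 1) := by
          rw [← pow_succ']; congr 1; omega
        rw [hπn] at hE
        linear_combination -hE
      rcases mul_eq_zero.mp hzero with h | h
      · exact h
      · exfalso
        rcases mul_eq_zero.mp h with h' | h'
        · exact hπ0 h'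
        · exact hπ1 (n - 1) (by omega) (by linear_combination h')
  refine ⟨part1, ?_, ?_⟩
  · -- Part (ii)
    have hE := master q
    have hgq : coeff q (g ^ q) = (coeff 1 g) ^ q := by
      rw [hgh, mul_pow, coeff_X_pow_mul', if_pos le_rfl, Nat.sub_self,
        coeff_zero_eq_constantCoeff, map_pow]
      congr 1
      simp [hh_def]
    rw [hgq] at hE
    have hRHS : (∑ i ∈ range (q + 1), coeff i g *
        ∑ j ∈ range (i + 1),
          (if q = q * j + (i - j) then (i.choose j : R) * π ^ (i - j) else 0))
        = coeff 1 g + coeff q g * π ^ q := by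
      have key : ∀ i ∈ range (q + 1), coeff i g *
          (∑ j ∈ range (i + 1),
            (if q = q * j + (i - j) then (i.choose j : R) * π ^ (i - j) else 0))
          = (if i = 1 then coeff 1 g else 0)
            + (if i = q then coeff q g * π ^ q else 0) := by
        intro i hi
        rw [Finset.mem_range] at hi
        by_cases h1 : i = 1
        · subst h1
          rw [if_pos rfl, if_neg (by omega)]
          have : (∑ j ∈ range 2,
              (if q = q * j + (1 - j) then ((1 : ℕ).choose j : R) * π ^ (1 - j) else 0)) = 1 := by
            rw [Finset.sum_range_succ, Finset.sum_range_one]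
            rw [if_neg (by omega), if_pos (by omega)]
            simp
          rw [this, mul_one, add_zero]
        by_cases h2 : i = q
        · subst h2
          rw [if_neg h1, if_pos rfl, zero_add]
          congr 1
          rw [Finset.sum_eq_single 0]
          · simp
          · intro j hj hj0
            rw [Finset.mem_range] at hj
            rw [if_neg]
            have hj1 : 1 ≤ j := Nat.one_le_iff_ne_zero.2 hj0
            have hql : i * 1 ≤ i * j := Nat.mul_le_mul_left i hj1
            intro hc
            have h2q : i * 2 ≤ i * j → False := by intro h2q; omega
            exact h2q (Nat.mul_le_mul_left i (by omega))
          · intro h0; exact absurd (Finset.mem_range.2 (by omega)) h0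
        · rw [if_neg h1, if_neg h2, add_zero]
          have : (∑ j ∈ range (i + 1),
              (if q = q * j + (i - j) then (i.choose j : R) * π ^ (i - j) else 0)) = 0 := by
            refine Finset.sum_eq_zero fun j hj => ?_
            rw [Finset.mem_range] at hj
            rw [if_neg]
            intro hc
            rcases Nat.eq_zero_or_pos j with rfl | hj1
            · simp at hc; omega
            have hql : q * 1 ≤ q * j := Nat.mul_le_mul_left q hj1
            have hji : j = i := by omega
            subst hji
            have : q * 2 ≤ q * j := Nat.mul_le_mul_left q (by omega)
            omega
          rw [this, mul_zero]
      rw [Finset.sum_congr rfl key, Finset.sum_add_distrib,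
        Finset.sum_ite_eq' (range (q + 1)) 1, Finset.sum_ite_eq' (range (q + 1)) q,
        if_pos (Finset.mem_range.2 (by omega)), if_pos (Finset.mem_range.2 (by omega))]
    rw [hRHS] at hE
    linear_combination -hE
  · -- Part (iii)
    have hE := master (2 * q - 1)
    have hu : ∀ j, j < q - 1 → coeff j (h - C (coeff 1 g)) = 0 := by
      intro j hj
      rw [map_sub, coeff_C]
      rcases Nat.eq_zero_or_pos j with rfl | hj1
      · simp [hh_def]
      · rw [if_neg (by omega), sub_zero]
        have hj' : coeff j h = coeff (j + 1) g := by simp [hh_def]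
        rw [hj']
        refine part1 (j + 1) ?_
        rintro ⟨m, hm⟩
        rcases Nat.eq_zero_or_pos m with rfl | hm1
        · simp at hm; omega
        · have : (q - 1) * 1 ≤ (q - 1) * m := Nat.mul_le_mul_left _ hm1
          omega
    obtain ⟨w, hw⟩ : (X : R⟦X⟧) ^ (q - 1) ∣ (h - C (coeff 1 g)) := X_pow_dvd_iff.mpr hu
    have huq : coeff (q - 1) (h - C (coeff 1 g)) = coeff q g := by
      rw [map_sub, coeff_C, if_neg (by omega), sub_zero]
      have : coeff (q - 1) h = coeff (q - 1 + 1) g := by simp [hh_def]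
      rw [this, show q - 1 + 1 = q by omega]
    have hcu : ∀ m : ℕ, coeff (q - 1) ((h - C (coeff 1 g)) ^ m)
        = if m = 1 then coeff q g else 0 := by
      intro m
      match m with
      | 0 =>
        rw [pow_zero, if_neg (by omega), coeff_one, if_neg (by omega)]
      | 1 => rw [pow_one, if_pos rfl]; exact huq
      | (m + 2) =>
        rw [if_neg (by omega), hw, mul_pow, ← pow_mul, coeff_X_pow_mul', if_neg]
        have : (q - 1) * 2 ≤ (q - 1) * (m + 2) := Nat.mul_le_mul_left _ (by omega)
        omega
    have hgq : coeff (2 * q - 1) (g ^ q)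
        = (q : R) * (coeff 1 g) ^ (q - 1) * coeff q g := by
      conv_lhs => rw [hgh]
      rw [mul_pow, coeff_X_pow_mul', if_pos (by omega),
        show 2 * q - 1 - q = q - 1 by omega,
        show h = C (coeff 1 g) + (h - C (coeff 1 g)) by ring,
        add_pow, map_sum]
      have hterm : ∀ k ∈ range (q + 1),
          coeff (q - 1) ((C (coeff 1 g)) ^ k * (h - C (coeff 1 g)) ^ (q - k)
              * ((q.choose k : ℕ) : R⟦X⟧))
          = if k = q - 1 then (q : R) * (coeff 1 g) ^ (q - 1) * coeff q g else 0 := by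
        intro k hk
        rw [Finset.mem_range] at hk
        have hC : (C (coeff 1 g)) ^ k * (h - C (coeff 1 g)) ^ (q - k)
              * ((q.choose k : ℕ) : R⟦X⟧)
            = C ((coeff 1 g) ^ k * (q.choose k : R)) * (h - C (coeff 1 g)) ^ (q - k) := by
          rw [map_mul, map_pow, map_natCast]; ring
        rw [hC, coeff_C_mul, hcu]
        split_ifs with hc1 hc2
        · have hk' : k = q - 1 := by omega
          subst hk'
          rw [show q.choose (q - 1) = q by
            rw [Nat.choose_symm (by omega : 1 ≤ q), Nat.choose_one_right]]
          ring
        · exact absurd (by omega : k = q - 1) hc2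
        · exact absurd (by omega : q - k = 1) hc1
        · exact mul_zero _
      rw [Finset.sum_congr rfl hterm, Finset.sum_ite_eq' (range (q + 1)) (q - 1),
        if_pos (Finset.mem_range.2 (by omega))]
    rw [hgq] at hE
    have hRHS : (∑ i ∈ range (2 * q - 1 + 1), coeff i g *
        ∑ j ∈ range (i + 1),
          (if 2 * q - 1 = q * j + (i - j) then (i.choose j : R) * π ^ (i - j) else 0))
        = coeff q g * ((q : R) * π ^ (q - 1))
          + coeff (2 * q - 1) g * π ^ (2 * q - 1) := by
      have key : ∀ i ∈ range (2 * q - 1 + 1), coeff i g *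
          (∑ j ∈ range (i + 1),
            (if 2 * q - 1 = q * j + (i - j) then (i.choose j : R) * π ^ (i - j) else 0))
          = (if i = q then coeff q g * ((q : R) * π ^ (q - 1)) else 0)
            + (if i = 2 * q - 1 then coeff (2 * q - 1) g * π ^ (2 * q - 1) else 0) := by
        intro i hi
        rw [Finset.mem_range] at hi
        by_cases h1 : i = q
        · rw [h1, if_pos rfl, if_neg (by omega), add_zero]
          congr 1
          rw [Finset.sum_eq_single 1]
          · rw [if_pos (by omega), Nat.choose_one_right]
          · intro j hj hj1
            rw [Finset.mem_range] at hj
            rw [if_neg]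
            intro hc
            rcases j with _ | _ | j
            · omega
            · exact hj1 rfl
            · have := Nat.mul_le_mul_left q (show 2 ≤ j + 1 + 1 by omega)
              omega
          · intro h0; exact absurd (Finset.mem_range.2 (by omega)) h0
        by_cases h2 : i = 2 * q - 1
        · rw [h2, if_neg (by omega), if_pos rfl, zero_add]
          congr 1
          rw [Finset.sum_eq_single 0]
          · rw [if_pos (by omega)]; simp
          · intro j hj hj0
            rw [Finset.mem_range] at hj
            rw [if_neg]
            intro hc
            have hj1 : 1 ≤ j := by omega
            have hq1 : q * 1 ≤ q * j := Nat.mul_le_mul_left q hj1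
            have h2j : 2 * j ≤ q * j := Nat.mul_le_mul_right j hq
            omega
          · intro h0; exact absurd (Finset.mem_range.2 (by omega)) h0
        · rw [if_neg h1, if_neg h2, add_zero]
          have hS : (∑ j ∈ range (i + 1),
              (if 2 * q - 1 = q * j + (i - j) then (i.choose j : R) * π ^ (i - j) else 0)) = 0 := by
            refine Finset.sum_eq_zero fun j hj => ?_
            rw [Finset.mem_range] at hj
            rw [if_neg]
            intro hc
            rcases j with _ | _ | j
            · omega
            · omega
            · have := Nat.mul_le_mul_left q (show 2 ≤ j + 1 + 1 by omega)
              omega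
          rw [hS, mul_zero]
      rw [Finset.sum_congr rfl key, Finset.sum_add_distrib,
        Finset.sum_ite_eq' (range (2 * q - 1 + 1)) q,
        Finset.sum_ite_eq' (range (2 * q - 1 + 1)) (2 * q - 1),
        if_pos (Finset.mem_range.2 (by omega)), if_pos (Finset.mem_range.2 (by omega))]
    rw [hRHS] at hE
    linear_combination hE
end

section
/- Let R be an integral domain, let q ≥ 2 be an integer, and let π ∈ R satisfy π ≠ 0 and π^m ≠ 1 for every integer m ≥ 1. Let g = Σ_{i≥1} a_i t^i ∈ R[[t]] have constant term 0 and satisfy π·g(t) + g(t)^q = g(π·t + t^q). Then for every integer n > q with (q−1) | (n−1) one has (π − π^n)·a_n = Σ_m binom(m, (n−m)/(q−1))·π^{m − (n−m)/(q−1)}·a_m − c_n, where the sum ranges over the integers m with n ≤ q·m, m < n and (q−1) | (m−1), and where c_n is the coefficient of t^n in g(t)^q, i.e. c_n = Σ (q!/∏_i k_i!)·∏_i a_i^{k_i}, the latter sum ranging over all finitely supported families (k_i)_{i≥1} of integers with 0 ≤ k_i ≤ q, Σ_i k_i = q and Σ_i i·k_i = n. -/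
lemma coeff_phi_pow {R : Type*} [CommRing R] (π : R) (q n m : ℕ) :
    PowerSeries.coeff n ((PowerSeries.C π * PowerSeries.X + PowerSeries.X ^ q) ^ m)
      = ∑ k ∈ Finset.range (m + 1),
          if n = k + q * (m - k) then (m.choose k : R) * π ^ k else 0 := by
  rw [add_pow, map_sum]
  refine Finset.sum_congr rfl fun k hk => ?_
  have : (PowerSeries.C π * PowerSeries.X) ^ k * (PowerSeries.X ^ q) ^ (m - k)
      * (m.choose k : PowerSeries R)
      = PowerSeries.C ((m.choose k : R) * π ^ k) * PowerSeries.X ^ (k + q * (m - k)) := by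
    rw [mul_pow, ← pow_mul, map_mul, map_pow]
    ring_nf
    rw [mul_comm q (m-k), map_natCast (PowerSeries.C)]
  rw [this, PowerSeries.coeff_C_mul, PowerSeries.coeff_X_pow]
  split <;> simp

/-- The recursion for the coefficients of a power series commuting with
the Lubin–Tate Frobenius series `Φ(t) = π t + t^q`.  Here `c_n`, the coefficient of `t^n`
in `g(t)^q`, is expressed as `coeff n (g ^ q)`. -/
theorem stmt1 {R : Type*} [CommRing R] [IsDomain R] (q : ℕ) (hq : 2 ≤ q)
    (π : R) (hπ0 : π ≠ 0) (hπ1 : ∀ m : ℕ, 1 ≤ m → π ^ m ≠ 1)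
    (g : PowerSeries R) (hg0 : PowerSeries.constantCoeff g = 0)
    (hfe : PowerSeries.C π * g + g ^ q
        = psSubst (PowerSeries.C π * PowerSeries.X + PowerSeries.X ^ q) g) :
    ∀ n : ℕ, q < n → (q - 1) ∣ (n - 1) →
      (π - π ^ n) * PowerSeries.coeff n g
        = (∑ m ∈ (Finset.range n).filter (fun m => n ≤ q * m ∧ (q - 1) ∣ (m - 1)),
            (Nat.choose m ((n - m) / (q - 1)) : R) * π ^ (m - (n - m) / (q - 1))
              * PowerSeries.coeff m g)
          - PowerSeries.coeff n (g ^ q) := by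
  intro n hn hdvd
  have hkey := congrArg (PowerSeries.coeff n) hfe
  simp only [map_add, PowerSeries.coeff_C_mul, psSubst, PowerSeries.coeff_mk] at hkey
  rw [Finset.sum_range_succ] at hkey
  -- Step A : coeff n (Φ^n) = π^n
  have hA : PowerSeries.coeff n
      ((PowerSeries.C π * PowerSeries.X + PowerSeries.X ^ q) ^ n) = π ^ n := by
    rw [coeff_phi_pow]
    rw [Finset.sum_eq_single n]
    · simp
    · intro k hk hkn
      rw [if_neg]
      intro habs
      have hk' : k < n := by
        rcases Finset.mem_range.mp hk with h
        omega
      have h2 : 2 * (n - k) ≤ q * (n - k) := Nat.mul_le_mul_right _ hq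
      omega
    · intro h
      exact absurd (Finset.mem_range.mpr (Nat.lt_succ_self n)) h
  rw [hA] at hkey
  -- Step B/C : the sum over range n
  have hsum : ∑ i ∈ Finset.range n,
      PowerSeries.coeff i g * PowerSeries.coeff n
        ((PowerSeries.C π * PowerSeries.X + PowerSeries.X ^ q) ^ i)
      = ∑ m ∈ (Finset.range n).filter (fun m => n ≤ q * m ∧ (q - 1) ∣ (m - 1)),
          (Nat.choose m ((n - m) / (q - 1)) : R) * π ^ (m - (n - m) / (q - 1))
            * PowerSeries.coeff m g := by
    obtain ⟨d, hqd⟩ : ∃ d, q = d + 1 := ⟨q - 1, by omega⟩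
    have hd : q - 1 = d := by omega
    have hd1 : 1 ≤ d := by omega
    have hmul : ∀ x : ℕ, q * x = d * x + x := fun x => by rw [hqd]; ring
    refine Eq.trans (Finset.sum_subset (Finset.filter_subset
        (fun m => n ≤ q * m ∧ (q - 1) ∣ (m - 1)) (Finset.range n)) ?_).symm
      (Finset.sum_congr rfl ?_)
    case refine_1 =>
      intro m hm hnotm
      rw [Finset.mem_range] at hm
      rw [Finset.mem_filter, Finset.mem_range] at hnotm
      rcases Nat.eq_zero_or_pos m with h0 | hm1
      · subst h0
        have : PowerSeries.coeff 0 g = 0 := by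
          rwa [PowerSeries.coeff_zero_eq_constantCoeff]
        rw [this, zero_mul]
      · have hφ : PowerSeries.coeff n
            ((PowerSeries.C π * PowerSeries.X + PowerSeries.X ^ q) ^ m) = 0 := by
          rw [coeff_phi_pow]
          refine Finset.sum_eq_zero fun k hk => ?_
          rw [Finset.mem_range] at hk
          rw [if_neg]
          intro habs
          have hkm : k ≤ m := by omega
          have hq1 := hmul (m - k)
          have h1 : n = m + d * (m - k) := by omega
          have h2 : n ≤ q * m := by
            have hle : d * (m - k) ≤ d * m := Nat.mul_le_mul_left _ (Nat.sub_le m k)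
            have := hmul m
            omega
          have h3 : (q - 1) ∣ (m - 1) := by
            have hdvd' : (q - 1) ∣ (n - m) := ⟨m - k, by rw [hd]; omega⟩
            have := Nat.dvd_sub hdvd hdvd'
            have heq : n - 1 - (n - m) = m - 1 := by omega
            rwa [heq] at this
          exact hnotm ⟨hm, h2, h3⟩
        rw [hφ, mul_zero]
    case refine_2 =>
      intro m hm
      rw [Finset.mem_filter, Finset.mem_range] at hm
      obtain ⟨hmn, hqm, hdm⟩ := hm
      have hm1 : 1 ≤ m := by
        rcases Nat.eq_zero_or_pos m with h | h
        · subst h; omega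
        · exact h
      have hdnm : (q - 1) ∣ (n - m) := by
        have := Nat.dvd_sub hdvd hdm
        have h1 : n - 1 - (m - 1) = n - m := by omega
        rwa [h1] at this
      set j := (n - m) / (q - 1) with hj
      have hdj : (q - 1) * j = n - m := Nat.mul_div_cancel' hdnm
      rw [hd] at hdj
      have hjm : j ≤ m := by
        have hle : n - m ≤ d * m := by
          have := hmul m
          omega
        have : d * j ≤ d * m := by omega
        exact Nat.le_of_mul_le_mul_left this (by omega)
      have hsub : m - (m - j) = j := Nat.sub_sub_self hjm
      have hqj := hmul j
      have hk0 : n = (m - j) + q * (m - (m - j)) := by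
        rw [hsub]; omega
      rw [coeff_phi_pow, Finset.sum_eq_single (m - j)]
      · rw [if_pos hk0, Nat.choose_symm hjm]
        ring
      · intro k hk hkne
        rw [Finset.mem_range] at hk
        rw [if_neg]
        intro habs
        have hkm : k ≤ m := by omega
        have hq1 := hmul (m - k)
        have h1 : n = m + d * (m - k) := by omega
        have h2 : n = m + d * j := by omega
        have h3 : d * (m - k) = d * j := by omega
        have h4 : m - k = j := Nat.eq_of_mul_eq_mul_left (by omega) h3
        omega
      · intro h
        exact absurd (Finset.mem_range.mpr (by omega)) h
  rw [hsum] at hkey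
  linear_combination hkey
end

section
/- Let R be an integral domain, let q ≥ 2 be an integer, and let π ∈ R satisfy π ≠ 0 and π^{q−1} ≠ 1. Let g = Σ_{i≥1} a_i t^i and g' = Σ_{i≥1} a'_i t^i in R[[t]] both have constant term 0 and both satisfy the functional equation π·h(t) + h(t)^q = h(π·t + t^q), and let b_i denote the coefficients of the composite power series g(g'(t)). Then b_1 = a_1·a'_1 and b_q = a_q·a'_1 + a'_q·a_1 + (π^q − π)·a_q·a'_q. In particular π divides b_q − a_q·a'_1 − a'_q·a_1, which expresses the relation a_{γγ',q}/a_{γγ',1} = a_{γ,q}/a_{γ,1} + a_{γ',q}/a_{γ',1} modulo π whenever a_1 and a'_1 are invertible modulo π. -/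
namespace Stmt2Aux

open PowerSeries Finset

variable {R : Type*} [CommRing R]

lemma coeff_psSubst (Φ g : PowerSeries R) (n : ℕ) :
    PowerSeries.coeff n (psSubst Φ g)
      = ∑ i ∈ Finset.range (n + 1),
          PowerSeries.coeff i g * PowerSeries.coeff n (Φ ^ i) := by
  simp [psSubst]

/-- Coefficients of powers of the Frobenius series `Φ = π t + t^q`. -/
lemma coeff_phi_pow (q : ℕ) (π : R) (i n : ℕ) :
    PowerSeries.coeff n ((PowerSeries.C π * PowerSeries.X + PowerSeries.X ^ q) ^ i)
      = ∑ k ∈ Finset.range (i + 1),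
          if n = k + q * (i - k) then π ^ k * (i.choose k) else 0 := by
  rw [add_pow, map_sum]
  refine Finset.sum_congr rfl fun k hk => ?_
  have h1 : (PowerSeries.C π * PowerSeries.X) ^ k * (PowerSeries.X ^ q) ^ (i - k)
        * ((i.choose k : ℕ) : PowerSeries R)
      = PowerSeries.C (π ^ k * (i.choose k : R)) * PowerSeries.X ^ (k + q * (i - k)) := by
    rw [← map_natCast (PowerSeries.C (R := R)) (i.choose k), mul_pow, map_mul, map_pow,
      pow_add, pow_mul]
    ring
  rw [h1, coeff_C_mul, coeff_X_pow, mul_ite, mul_one, mul_zero]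

lemma coeff_phi_pow_small (q : ℕ) (π : R) {i n : ℕ} (hn1 : 1 ≤ n) (hnq : n ≤ q - 1)
    (hqn : 2 ≤ q) (hi : i ≤ n) :
    PowerSeries.coeff n ((PowerSeries.C π * PowerSeries.X + PowerSeries.X ^ q) ^ i)
      = if i = n then π ^ n else 0 := by
  rw [coeff_phi_pow]
  by_cases h : i = n
  · subst h
    rw [if_pos rfl, Finset.sum_eq_single i]
    · simp
    · intro k hk hkne
      rw [Finset.mem_range] at hk
      have hki : k < i := by omega
      have h2 : q ≤ q * (i - k) := Nat.le_mul_of_pos_right q (by omega)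
      rw [if_neg (by omega)]
    · intro h; exact absurd (Finset.self_mem_range_succ i) h
  · rw [if_neg h]
    apply Finset.sum_eq_zero
    intro k hk
    rw [Finset.mem_range] at hk
    have hki : k ≤ i := by omega
    rcases Nat.lt_or_ge k i with hlt | hge
    · have h2 : q ≤ q * (i - k) := Nat.le_mul_of_pos_right q (by omega)
      rw [if_neg (by omega)]
    · have : k = i := by omega
      subst this
      rw [if_neg (by simp only [Nat.sub_self, Nat.mul_zero, Nat.add_zero]; omega)]

lemma coeff_phi_pow_q (q : ℕ) (hq : 2 ≤ q) (π : R) {i : ℕ} (hi : i ≤ q) :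
    PowerSeries.coeff q ((PowerSeries.C π * PowerSeries.X + PowerSeries.X ^ q) ^ i)
      = if i = q then π ^ q else if i = 1 then 1 else 0 := by
  rw [coeff_phi_pow]
  have key : ∀ k, k ≤ i → k ≠ i → ¬(q = k + q * (i - k)) ∨ (i = 1 ∧ k = 0) := by
    intro k hk hkne
    by_cases hd : i - k = 1
    · by_cases hk0 : k = 0
      · right; constructor <;> omega
      · left; simp only [hd, Nat.mul_one]; omega
    · left
      have : 2 ≤ i - k := by omega
      have h2 : q * 2 ≤ q * (i - k) := Nat.mul_le_mul_left q this
      omega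
  by_cases h : i = q
  · subst h
    rw [if_pos rfl, Finset.sum_eq_single i]
    · simp
    · intro k hk hkne
      rw [Finset.mem_range] at hk
      rcases key k (by omega) hkne with h' | ⟨h1, _⟩
      · rw [if_neg h']
      · omega
    · intro h; exact absurd (Finset.self_mem_range_succ i) h
  · rw [if_neg h]
    by_cases h1 : i = 1
    · subst h1
      rw [if_pos rfl]
      rw [Finset.sum_range_succ, Finset.sum_range_one]
      simp only [Nat.sub_zero, mul_one, Nat.sub_self, mul_zero, add_zero]
      rw [if_pos (by omega), if_neg (by omega)]
      simp
    · rw [if_neg h1]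
      apply Finset.sum_eq_zero
      intro k hk
      rw [Finset.mem_range] at hk
      by_cases hkeq : k = i
      · subst hkeq
        rw [if_neg (by simp only [Nat.sub_self, Nat.mul_zero, Nat.add_zero]; omega)]
      · rcases key k (by omega) hkeq with h' | ⟨h1', _⟩
        · rw [if_neg h']
        · exact absurd h1' h1

lemma coeff_pow_lt {h : PowerSeries R} (h0 : PowerSeries.constantCoeff h = 0)
    {n q : ℕ} (hn : n < q) : PowerSeries.coeff n (h ^ q) = 0 := by
  have hd : (PowerSeries.X : PowerSeries R) ∣ h := X_dvd_iff.mpr h0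
  have : (PowerSeries.X : PowerSeries R) ^ q ∣ h ^ q := pow_dvd_pow_of_dvd hd q
  exact X_pow_dvd_iff.mp this n hn

lemma coeff_pow_self {h : PowerSeries R} (h0 : PowerSeries.constantCoeff h = 0)
    (q : ℕ) : PowerSeries.coeff q (h ^ q) = (PowerSeries.coeff 1 h) ^ q := by
  obtain ⟨u, hu⟩ := X_dvd_iff.mpr h0
  subst hu
  have h1 : PowerSeries.coeff 1 (PowerSeries.X * u) = PowerSeries.constantCoeff u := by
    rw [mul_comm, ← pow_one (PowerSeries.X : PowerSeries R), coeff_mul_X_pow']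
    simp
  rw [h1, mul_pow, mul_comm, coeff_mul_X_pow']
  simp [← map_pow]

/-- Level-`n` consequence of the functional equation for `2 ≤ n ≤ q - 1`. -/
lemma eqA (q : ℕ) (hq : 2 ≤ q) (π : R) {h : PowerSeries R}
    (h0 : PowerSeries.constantCoeff h = 0)
    (hfe : PowerSeries.C π * h + h ^ q
        = psSubst (PowerSeries.C π * PowerSeries.X + PowerSeries.X ^ q) h)
    {n : ℕ} (h2 : 2 ≤ n) (hm : n ≤ q - 1) :
    π * PowerSeries.coeff n h = π ^ n * PowerSeries.coeff n h := by
  have hc := congrArg (PowerSeries.coeff n) hfe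
  rw [map_add, coeff_C_mul, coeff_psSubst, coeff_pow_lt h0 (by omega)] at hc
  rw [Finset.sum_eq_single n] at hc
  · rw [coeff_phi_pow_small q π (by omega) hm hq le_rfl, if_pos rfl] at hc
    linear_combination hc
  · intro i hi hine
    rw [Finset.mem_range] at hi
    rw [coeff_phi_pow_small q π (by omega) hm hq (by omega), if_neg hine, mul_zero]
  · intro hn; exact absurd (Finset.self_mem_range_succ n) hn

/-- Level-`q` consequence of the functional equation. -/
lemma eqB (q : ℕ) (hq : 2 ≤ q) (π : R) {h : PowerSeries R}
    (h0 : PowerSeries.constantCoeff h = 0)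
    (hfe : PowerSeries.C π * h + h ^ q
        = psSubst (PowerSeries.C π * PowerSeries.X + PowerSeries.X ^ q) h) :
    π * PowerSeries.coeff q h + (PowerSeries.coeff 1 h) ^ q
      = PowerSeries.coeff 1 h + π ^ q * PowerSeries.coeff q h := by
  have hc := congrArg (PowerSeries.coeff q) hfe
  rw [map_add, coeff_C_mul, coeff_psSubst, coeff_pow_self h0] at hc
  rw [← Finset.sum_subset (s₁ := ({1, q} : Finset ℕ))
      (by intro x hx; simp only [Finset.mem_insert, Finset.mem_singleton] at hx
          rcases hx with rfl | rfl <;> simp [Finset.mem_range] <;> omega)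
      (by intro i hi hni
          rw [Finset.mem_range] at hi
          simp only [Finset.mem_insert, Finset.mem_singleton, not_or] at hni
          rw [coeff_phi_pow_q q hq π (by omega), if_neg hni.2, if_neg hni.1, mul_zero])] at hc
  rw [Finset.sum_pair (by omega : (1 : ℕ) ≠ q)] at hc
  rw [coeff_phi_pow_q q hq π (by omega : 1 ≤ q), coeff_phi_pow_q q hq π le_rfl] at hc
  rw [if_neg (by omega), if_pos rfl, if_pos rfl, mul_one] at hc
  linear_combination hc

variable [IsDomain R]

/-- Vanishing of intermediate coefficients unless `π` is a suitable root of unity. -/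
lemma coeff_vanish (q : ℕ) (hq : 2 ≤ q) (π : R) (hπ0 : π ≠ 0) {h : PowerSeries R}
    (h0 : PowerSeries.constantCoeff h = 0)
    (hfe : PowerSeries.C π * h + h ^ q
        = psSubst (PowerSeries.C π * PowerSeries.X + PowerSeries.X ^ q) h)
    {n : ℕ} (h2 : 2 ≤ n) (hm : n ≤ q - 1) (hroot : π ^ (n - 1) ≠ 1) :
    PowerSeries.coeff n h = 0 := by
  have hA := eqA q hq π h0 hfe h2 hm
  have hz : (π ^ n - π) * PowerSeries.coeff n h = 0 := by
    linear_combination -hA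
  rcases mul_eq_zero.mp hz with hz | hz
  · exfalso
    apply hroot
    have hn : n - 1 + 1 = n := by omega
    have : π * π ^ (n - 1) = π * 1 := by
      rw [mul_one, ← pow_succ', hn]
      linear_combination hz
    exact mul_left_cancel₀ hπ0 this
  · exact hz

/-- The `q`-th coefficient of `h ^ i` vanishes for intermediate `i` when `π ^ (i-1) = 1`. -/
lemma coeff_q_pow_zero (q : ℕ) (hq : 2 ≤ q) (π : R) (hπ0 : π ≠ 0)
    (hπ1 : π ^ (q - 1) ≠ 1) {h : PowerSeries R}
    (h0 : PowerSeries.constantCoeff h = 0)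
    (hfe : PowerSeries.C π * h + h ^ q
        = psSubst (PowerSeries.C π * PowerSeries.X + PowerSeries.X ^ q) h)
    {i : ℕ} (h2 : 2 ≤ i) (hiq : i ≤ q - 1) (hroot : π ^ (i - 1) = 1) :
    PowerSeries.coeff q (h ^ i) = 0 := by
  rw [PowerSeries.coeff_pow]
  apply Finset.sum_eq_zero
  intro l hl
  rw [Finset.mem_finsuppAntidiag] at hl
  by_contra hne
  have hfac : ∀ j ∈ Finset.range i, PowerSeries.coeff (l j) h ≠ 0 := by
    intro j hj hzero
    exact hne (Finset.prod_eq_zero hj hzero)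
  have h1 : ∀ j ∈ Finset.range i, 1 ≤ l j := by
    intro j hj
    rcases Nat.eq_zero_or_pos (l j) with h' | h'
    · exfalso
      apply hfac j hj
      rw [h', PowerSeries.coeff_zero_eq_constantCoeff]
      exact h0
    · exact h'
  have hub : ∀ j ∈ Finset.range i, l j ≤ q - 1 := by
    intro j hj
    have hsq : ∑ k ∈ Finset.range i, l k = q := hl.1
    have hsplit : ∑ k ∈ Finset.range i, l k
        = l j + ∑ k ∈ (Finset.range i).erase j, l k := (Finset.add_sum_erase _ l hj).symm
    have hcard : ((Finset.range i).erase j).card = i - 1 := by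
      rw [Finset.card_erase_of_mem hj, Finset.card_range]
    have hge : (i - 1) • 1 ≤ ∑ k ∈ (Finset.range i).erase j, l k := by
      rw [← hcard]
      exact Finset.card_nsmul_le_sum _ _ _ fun x hx => h1 x (Finset.mem_of_mem_erase hx)
    simp only [smul_eq_mul, mul_one] at hge
    omega
  have hpow : ∀ j ∈ Finset.range i, π ^ (l j - 1) = 1 := by
    intro j hj
    by_cases hlj : l j = 1
    · rw [hlj]; simp
    · have hlj2 : 2 ≤ l j := by have := h1 j hj; omega
      by_contra hne2
      exact hfac j hj (coeff_vanish q hq π hπ0 h0 hfe hlj2 (hub j hj) hne2)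
  have hprod : π ^ (∑ j ∈ Finset.range i, (l j - 1)) = 1 := by
    rw [← Finset.prod_pow_eq_pow_sum]
    exact Finset.prod_eq_one hpow
  have hsum : ∑ j ∈ Finset.range i, (l j - 1) = q - i := by
    have hsq : ∑ j ∈ Finset.range i, l j = q := hl.1
    have : ∑ j ∈ Finset.range i, (l j - 1 + 1) = q := by
      rw [Finset.sum_congr rfl fun j hj => by rw [Nat.sub_add_cancel (h1 j hj)]]
      exact hsq
    rw [Finset.sum_add_distrib, Finset.sum_const, Finset.card_range, smul_eq_mul,
      mul_one] at this
    omega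
  apply hπ1
  have hfin : π ^ (q - i) * π ^ (i - 1) = 1 := by
    rw [hsum] at hprod
    rw [hprod, hroot, mul_one]
  rw [← pow_add ] at hfin
  have : q - i + (i - 1) = q - 1 := by omega
  rwa [this] at hfin

end Stmt2Aux

open Stmt2Aux in
/-- The additivity relation for the `q`-th coefficients under composition
of two power series each commuting with the Lubin–Tate Frobenius series
`Φ(t) = π t + t^q`. -/
theorem stmt2 {R : Type*} [CommRing R] [IsDomain R] (q : ℕ) (hq : 2 ≤ q)
    (π : R) (hπ0 : π ≠ 0) (hπ1 : π ^ (q - 1) ≠ 1)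
    (g g' : PowerSeries R)
    (hg0 : PowerSeries.constantCoeff g = 0) (hg'0 : PowerSeries.constantCoeff g' = 0)
    (hfe : PowerSeries.C π * g + g ^ q
        = psSubst (PowerSeries.C π * PowerSeries.X + PowerSeries.X ^ q) g)
    (hfe' : PowerSeries.C π * g' + g' ^ q
        = psSubst (PowerSeries.C π * PowerSeries.X + PowerSeries.X ^ q) g') :
    PowerSeries.coeff 1 (psSubst g' g)
        = PowerSeries.coeff 1 g * PowerSeries.coeff 1 g' ∧
    PowerSeries.coeff q (psSubst g' g)
        = PowerSeries.coeff q g * PowerSeries.coeff 1 g'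
          + PowerSeries.coeff q g' * PowerSeries.coeff 1 g
          + (π ^ q - π) * PowerSeries.coeff q g * PowerSeries.coeff q g' ∧
    π ∣ (PowerSeries.coeff q (psSubst g' g)
          - PowerSeries.coeff q g * PowerSeries.coeff 1 g'
          - PowerSeries.coeff q g' * PowerSeries.coeff 1 g) := by
  have hb1 : PowerSeries.coeff 1 (psSubst g' g)
      = PowerSeries.coeff 1 g * PowerSeries.coeff 1 g' := by
    rw [coeff_psSubst, Finset.sum_range_succ, Finset.sum_range_one]
    rw [PowerSeries.coeff_zero_eq_constantCoeff]
    simp [hg0]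
  have hbq : PowerSeries.coeff q (psSubst g' g)
      = PowerSeries.coeff 1 g * PowerSeries.coeff q g'
        + PowerSeries.coeff q g * (PowerSeries.coeff 1 g') ^ q := by
    rw [coeff_psSubst]
    rw [← Finset.sum_subset (s₁ := ({1, q} : Finset ℕ))
        (by intro x hx; simp only [Finset.mem_insert, Finset.mem_singleton] at hx
            rcases hx with rfl | rfl <;> simp [Finset.mem_range] <;> omega)
        (by intro i hi hni
            rw [Finset.mem_range] at hi
            simp only [Finset.mem_insert, Finset.mem_singleton, not_or] at hni
            by_cases hi0 : i = 0
            · subst hi0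
              simp [PowerSeries.coeff_zero_eq_constantCoeff, hg0]
            · have hi2 : 2 ≤ i := by omega
              have hiq : i ≤ q - 1 := by omega
              by_cases hroot : π ^ (i - 1) = 1
              · rw [coeff_q_pow_zero q hq π hπ0 hπ1 hg'0 hfe' hi2 hiq hroot, mul_zero]
              · rw [coeff_vanish q hq π hπ0 hg0 hfe hi2 hiq hroot, zero_mul])]
    rw [Finset.sum_pair (by omega : (1 : ℕ) ≠ q)]
    rw [pow_one, coeff_pow_self hg'0]
  have hB' := eqB q hq π hg'0 hfe'
  refine ⟨hb1, ?_, ?_⟩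
  · rw [hbq]
    linear_combination PowerSeries.coeff q g * hB'
  · have hpq : π ^ q = π * π ^ (q - 1) := by
      conv_lhs => rw [show q = q - 1 + 1 by omega]
      rw [pow_succ']
    refine ⟨(π ^ (q - 1) - 1) * PowerSeries.coeff q g * PowerSeries.coeff q g', ?_⟩
    rw [hbq]
    linear_combination PowerSeries.coeff q g * hB'
      + (PowerSeries.coeff q g * PowerSeries.coeff q g') * hpq
end

section
/- Let p be a prime number, let f ≥ 2 be an integer, and set q = p^f. Let R be a discrete valuation ring whose maximal ideal is generated by the image of p (in particular p ≠ 0 in R and p is not a unit). Let g = Σ_{i≥1} a_i t^i ∈ R[[t]] have constant term 0 and satisfy p·g(t) + g(t)^q = g(p·t + t^q), and assume a_1 is a unit of R with a_1^q ≡ a_1 (mod p). Then: (i) for every integer r with 0 < r < p, setting n_r = (r·p^{f−1} + 1)·(q−1) + 1, one has p·a_{n_r} ≡ −binom(p, r)·a_1^{q − r·p^{f−1}}·a_q^{r·p^{f−1}} (mod p²); (ii) for every integer n with q < n < q² and (q−1) | (n−1) that is not equal to n_r for any 0 < r < p, one has a_n ≡ 0 (mod p). -/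
open PowerSeries Finset

namespace Stmt3Aux

variable {A : Type*} [CommRing A]

lemma psC_dvd_of_forall (r : A) (φ : PowerSeries A)
    (h : ∀ m, r ∣ PowerSeries.coeff m φ) : (PowerSeries.C r) ∣ φ := by
  refine ⟨PowerSeries.mk fun m => (h m).choose, ?_⟩
  ext m
  rw [PowerSeries.coeff_C_mul, PowerSeries.coeff_mk]
  exact (h m).choose_spec

lemma dvd_coeff_of_psC_dvd {r : A} {φ : PowerSeries A}
    (h : (PowerSeries.C r) ∣ φ) (m : ℕ) : r ∣ PowerSeries.coeff m φ := by
  obtain ⟨ψ, rfl⟩ := h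
  rw [PowerSeries.coeff_C_mul]
  exact Dvd.intro _ rfl

/-- Frobenius for power series over char p rings, single step. -/
lemma coeff_pow_p {p : ℕ} (hp : p.Prime) [CharP A p] (h : PowerSeries A) (m : ℕ) :
    PowerSeries.coeff m (h ^ p) =
      if p ∣ m then (PowerSeries.coeff (m / p) h) ^ p else 0 := by
  haveI : Fact p.Prime := ⟨hp⟩
  set T : Polynomial A := PowerSeries.trunc (m + 1) h with hT
  have hdvd : (PowerSeries.X : PowerSeries A) ^ (m + 1) ∣ h ^ p - (T : PowerSeries A) ^ p := by
    refine dvd_trans ?_ (sub_dvd_pow_sub_pow h (T : PowerSeries A) p)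
    rw [PowerSeries.X_pow_dvd_iff]
    intro k hk
    rw [map_sub, Polynomial.coeff_coe, PowerSeries.coeff_trunc, if_pos hk, sub_self]
  have h0 : PowerSeries.coeff m (h ^ p - (T : PowerSeries A) ^ p) = 0 := by
    rw [PowerSeries.X_pow_dvd_iff] at hdvd
    exact hdvd m (Nat.lt_succ_self m)
  have h1 : PowerSeries.coeff m (h ^ p) = PowerSeries.coeff m ((T : PowerSeries A) ^ p) := by
    rw [map_sub] at h0
    exact sub_eq_zero.mp h0
  rw [h1, ← Polynomial.coe_pow, Polynomial.coeff_coe]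
  rw [← Polynomial.map_frobenius_expand p T]
  rw [Polynomial.coeff_map, Polynomial.coeff_expand hp.pos]
  rw [frobenius_def]
  split_ifs with hd
  · congr 1
    rw [PowerSeries.coeff_trunc, if_pos (Nat.lt_succ_of_le (Nat.div_le_self m p))]
  · exact zero_pow hp.ne_zero

lemma coeff_pow_p_pow {p : ℕ} (hp : p.Prime) [CharP A p] (h : PowerSeries A) (e m : ℕ) :
    PowerSeries.coeff m (h ^ p ^ e) =
      if p ^ e ∣ m then (PowerSeries.coeff (m / p ^ e) h) ^ p ^ e else 0 := by
  induction e generalizing m with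
  | zero => simp
  | succ e ih =>
    have : h ^ p ^ (e + 1) = (h ^ p ^ e) ^ p := by rw [← pow_mul, pow_succ]
    rw [this, coeff_pow_p hp, ih]
    by_cases hd : p ∣ m
    · by_cases hd2 : p ^ e ∣ m / p
      · have hde : p ^ (e + 1) ∣ m := by
          obtain ⟨c, hc⟩ := hd
          obtain ⟨d, hdd⟩ := hd2
          refine ⟨d, ?_⟩
          rw [hc] at hdd ⊢
          rw [Nat.mul_div_cancel_left c hp.pos] at hdd
          rw [hdd]; ring
        rw [if_pos hd, if_pos hd2, if_pos hde, ← pow_mul, ← pow_succ]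
        congr 2
        rw [Nat.div_div_eq_div_mul, ← pow_succ']
      · have hde : ¬ p ^ (e + 1) ∣ m := by
          intro hc
          exact hd2 (Nat.dvd_div_of_mul_dvd (by rwa [← pow_succ'] ) )
        rw [if_pos hd, if_neg hd2, if_neg hde, zero_pow hp.ne_zero]
    · have hde : ¬ p ^ (e + 1) ∣ m := fun hc => hd (dvd_trans (dvd_pow_self p (Nat.succ_ne_zero e)) hc)
      rw [if_neg hd, if_neg hde]

end Stmt3Aux

namespace Stmt3Aux

variable {R : Type*} [CommRing R]

lemma frob_congr {p : ℕ} (hp : p.Prime) (hne : Ideal.span {(p : R)} ≠ ⊤)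
    (g : PowerSeries R) (e : ℕ) :
    (PowerSeries.C (p : R)) ∣ g ^ p ^ e -
      PowerSeries.mk (fun m => if p ^ e ∣ m then (PowerSeries.coeff (m / p ^ e) g) ^ p ^ e else 0) := by
  set I := Ideal.span {(p : R)} with hI
  haveI : Nontrivial (R ⧸ I) := Ideal.Quotient.nontrivial_iff.mpr hne
  have hps : (p : R ⧸ I) = 0 := by
    have : ((p : R) : R ⧸ I) = 0 := by
      rw [Ideal.Quotient.eq_zero_iff_mem]
      exact Ideal.subset_span rfl
    simpa using this
  haveI : CharP (R ⧸ I) p := (CharP.charP_iff_prime_eq_zero hp).mpr hps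
  set π := Ideal.Quotient.mk I with hπ
  apply psC_dvd_of_forall
  intro m
  have hmap : π (PowerSeries.coeff m (g ^ p ^ e -
      PowerSeries.mk (fun m => if p ^ e ∣ m then (PowerSeries.coeff (m / p ^ e) g) ^ p ^ e else 0))) = 0 := by
    have hmp : π (PowerSeries.coeff m (g ^ p ^ e)) =
        PowerSeries.coeff m ((PowerSeries.map π g) ^ p ^ e) := by
      rw [show (PowerSeries.map π g) ^ p ^ e = PowerSeries.map π (g ^ p ^ e) from
        (map_pow _ _ _).symm, PowerSeries.coeff_map]
    rw [map_sub, map_sub, hmp, coeff_pow_p_pow hp, PowerSeries.coeff_mk]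
    rw [apply_ite π, map_pow, map_zero, PowerSeries.coeff_map]
    exact sub_self _
  rw [← Ideal.mem_span_singleton, ← hI, ← Ideal.Quotient.eq_zero_iff_mem]
  exact hmap

end Stmt3Aux

namespace Stmt3Aux

variable {R : Type*} [CommRing R]

lemma coeff_Phi_pow_sq_dvd {p q : ℕ} (hq1 : 1 < q) {n : ℕ} (hqn : ¬ q ∣ n)
    (h1 : n % q = 1 → p ∣ ((n - 1) / q + 1)) (i : ℕ) (hi : 1 ≤ i) :
    (p : R) ^ 2 ∣ PowerSeries.coeff n
      ((PowerSeries.C (p : R) * PowerSeries.X + PowerSeries.X ^ q) ^ i) := by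
  rw [add_pow, map_sum]
  apply Finset.dvd_sum
  intro j hj
  have hterm : (PowerSeries.C (p : R) * PowerSeries.X) ^ j * (PowerSeries.X ^ q) ^ (i - j) *
      ((i.choose j : ℕ) : PowerSeries R)
      = PowerSeries.C ((p : R) ^ j * (i.choose j : R)) * PowerSeries.X ^ (j + q * (i - j)) := by
    rw [mul_pow, ← pow_mul, ← map_pow,
      show ((i.choose j : ℕ) : PowerSeries R) = PowerSeries.C ((i.choose j : ℕ) : R) from
        (map_natCast _ _).symm, map_mul, pow_add]
    ring
  rw [hterm, PowerSeries.coeff_C_mul, PowerSeries.coeff_X_pow]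
  by_cases hn : n = j + q * (i - j)
  · rw [if_pos hn, mul_one]
    rcases Nat.lt_or_ge j 2 with hj2 | hj2
    · interval_cases j
      · exfalso
        apply hqn
        rw [hn, zero_add]
        exact Dvd.intro _ rfl
      · -- j = 1
        have hmod : n % q = 1 := by
          rw [hn]
          rw [Nat.add_mul_mod_self_left]
          exact Nat.mod_eq_of_lt hq1
        have hdiv : (n - 1) / q + 1 = i := by
          rw [hn]
          simp only [Nat.add_sub_cancel_left]
          rw [Nat.mul_div_cancel_left _ (Nat.lt_of_lt_of_le Nat.zero_lt_one hq1.le)]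
          omega
        obtain ⟨c, hc⟩ := h1 hmod
        rw [hdiv] at hc
        have : (i.choose 1 : R) = (p : R) * (c : R) := by
          rw [Nat.choose_one_right, hc]
          push_cast
          ring
        rw [this, pow_one]
        refine ⟨(c : R), by ring⟩
    · exact Dvd.dvd.mul_right (pow_dvd_pow _ hj2) _
  · rw [if_neg hn, mul_zero]
    exact dvd_zero _

end Stmt3Aux

namespace Stmt3Aux

lemma aux_sum_mod (m : ℕ) (t : Multiset ℕ) (h : ∀ x ∈ t, x % m = 1) :
    ∃ k, t.sum = Multiset.card t + m * k := by
  induction t using Multiset.induction_on with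
  | empty => exact ⟨0, by simp⟩
  | cons a t ih =>
    obtain ⟨k, hk⟩ := ih (fun x hx => h x (Multiset.mem_cons_of_mem hx))
    have ha : a % m = 1 := h a (Multiset.mem_cons_self a t)
    have hdm : a = m * (a / m) + 1 := by
      conv_lhs => rw [← Nat.div_add_mod a m, ha]
    refine ⟨a / m + k, ?_⟩
    rw [Multiset.sum_cons, Multiset.card_cons, hk]
    conv_lhs => rw [hdm]
    ring

lemma aux_all_eq (c : ℕ) (t : Multiset ℕ) (hall : ∀ x ∈ t, c ≤ x)
    (hsum : t.sum = c * Multiset.card t) : ∀ x ∈ t, x = c := by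
  intro x hx
  by_contra hne
  have hxc : c + 1 ≤ x := lt_of_le_of_ne (hall x hx) (fun h => hne h.symm)
  have hrest : c * Multiset.card (t.erase x) ≤ (t.erase x).sum := by
    have := Multiset.card_nsmul_le_sum (s := t.erase x) (a := c)
      (fun y hy => hall y (Multiset.mem_of_mem_erase hy))
    rwa [smul_eq_mul, mul_comm] at this
  have hcons : t = x ::ₘ t.erase x := (Multiset.cons_erase hx).symm
  have hsum2 : t.sum = x + (t.erase x).sum := by
    conv_lhs => rw [hcons]
    rw [Multiset.sum_cons]
  have hcard : Multiset.card t = 1 + Multiset.card (t.erase x) := by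
    conv_lhs => rw [hcons]
    rw [Multiset.card_cons]; ring
  have hexp : c * Multiset.card t = c + c * Multiset.card (t.erase x) := by
    rw [hcard]; ring
  omega

lemma key_multiset {p f q : ℕ} (hp : p.Prime) (hf : 2 ≤ f) (hq : q = p ^ f) {r : ℕ}
    (hr0 : 0 < r) (hrp : r < p) (s : Multiset ℕ) (hcard : Multiset.card s = p)
    (hsum : s.sum = r * (q - 1) + p)
    (hmem : ∀ x ∈ s, 0 < x ∧ (x % q = 1 ∨ q ∣ x ∨ p ^ (f - 1) ∣ x ∧ q < x)) :
    ∀ x ∈ s, x = 1 ∨ x = q := by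
  set m := p ^ (f - 1) with hm
  have hp2 : 2 ≤ p := hp.two_le
  have hmp : m * p = q := by
    rw [hm, hq, ← pow_succ]
    congr 1
    omega
  have hpm : p ≤ m := by
    rw [hm]
    calc p = p ^ 1 := (pow_one p).symm
    _ ≤ p ^ (f - 1) := Nat.pow_le_pow_right (by omega) (by omega)
  have hm1 : 1 < m := by omega
  have hq1 : 1 < q := by
    have h4 : 2 * 2 ≤ m * p := Nat.mul_le_mul hm1 hp2
    omega
  have hsum' : s.sum + r = r * q + p := by
    have hmul : r * (q - 1) + r = r * q := by
      have : r * ((q - 1) + 1) = r * (q - 1) + r := Nat.mul_succ r (q-1)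
      rw [← this]
      congr 1
      omega
    omega
  set t1 := s.filter (fun x => x % q = 1) with ht1
  set t0 := s.filter (fun x => ¬ x % q = 1) with ht0
  have hsplit : t1 + t0 = s := Multiset.filter_add_not _ s
  have hmdq : m ∣ q := ⟨p, hmp.symm⟩
  have ht1mem : ∀ x ∈ t1, x % m = 1 := by
    intro x hx
    have hxq : x % q = 1 := (Multiset.mem_filter.mp hx).2
    rw [← Nat.mod_mod_of_dvd x hmdq, hxq]
    exact Nat.mod_eq_of_lt hm1
  have ht0mem : ∀ x ∈ t0, m ∣ x ∧ q ≤ x := by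
    intro x hx
    obtain ⟨hxs, hxq⟩ := Multiset.mem_filter.mp hx
    obtain ⟨hx0, hcase⟩ := hmem x hxs
    rcases hcase with h | h | h
    · exact absurd h hxq
    · exact ⟨dvd_trans hmdq h, Nat.le_of_dvd hx0 h⟩
    · exact ⟨h.1, h.2.le⟩
  obtain ⟨k1, hk1⟩ := aux_sum_mod m t1 ht1mem
  obtain ⟨k0, hk0⟩ := Multiset.dvd_sum (fun x hx => (ht0mem x hx).1)
  set A := Multiset.card t1 with hA
  set B := Multiset.card t0 with hB
  have hABp : A + B = p := by
    rw [hA, hB, ← hcard, ← hsplit, Multiset.card_add]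
  have hsum2 : t1.sum + t0.sum = s.sum := by rw [← hsplit, Multiset.sum_add]
  have heq : A + m * k1 + m * k0 + r = r * (m * p) + p := by
    have h5 : t1.sum + t0.sum + r = r * q + p := by rw [hsum2]; exact hsum'
    rw [hk1, hk0, ← hmp] at h5
    omega
  have hAp : A ≤ p := by omega
  have hAr : A + r = p := by
    have heqz : (A : ℤ) + m * k1 + m * k0 + r = r * (m * p) + p := by exact_mod_cast heq
    have hdvd : (m : ℤ) ∣ ((A : ℤ) + r - p) := by
      refine ⟨(r * p : ℤ) - k1 - k0, ?_⟩
      linear_combination heqz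
    have habs : |(A : ℤ) + r - p| < m := by
      rw [abs_lt]
      constructor <;> push_cast <;> omega
    have := Int.eq_zero_of_abs_lt_dvd hdvd habs
    omega
  have hBr : B = r := by omega
  have ht0ge : q * B ≤ t0.sum := by
    have h := Multiset.card_nsmul_le_sum (s := t0) (a := q) (fun x hx => (ht0mem x hx).2)
    rw [smul_eq_mul, mul_comm] at h
    exact h
  have ht1s : ∀ x ∈ t1, x ∈ s := fun x hx => (Multiset.mem_filter.mp hx).1
  have ht1ge : A ≤ t1.sum := by
    have h := Multiset.card_nsmul_le_sum (s := t1) (a := 1)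
      (fun x hx => (hmem x (ht1s x hx)).1)
    rw [smul_eq_mul, mul_one] at h
    exact h
  have hqB : q * B = r * q := by rw [hBr]; ring
  have ht0sum : t0.sum = q * B := by omega
  have ht1sum : t1.sum = A := by omega
  have ht1all : ∀ x ∈ t1, x = 1 := by
    apply aux_all_eq 1 t1
    · intro x hx; exact (hmem x (ht1s x hx)).1
    · rw [ht1sum, one_mul]
  have ht0all : ∀ x ∈ t0, x = q := by
    apply aux_all_eq q t0
    · intro x hx; exact (ht0mem x hx).2
    · rw [ht0sum, hB]
  intro x hx
  rcases Multiset.mem_add.mp (by rw [hsplit]; exact hx : x ∈ t1 + t0) with h | h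
  · exact Or.inl (ht1all x h)
  · exact Or.inr (ht0all x h)

end Stmt3Aux

namespace Stmt3Aux

variable {A : Type*} [CommRing A]

lemma coeff_one_ne (n : ℕ) (h : PowerSeries.coeff n (1 : PowerSeries A) ≠ 0) : n = 0 := by
  by_contra hn
  rw [PowerSeries.coeff_one, if_neg hn] at h
  exact h rfl

lemma pow_support_multiset (d : ℕ) (P : ℕ → Prop) (φ : PowerSeries A)
    (hφ : ∀ m, PowerSeries.coeff m φ ≠ 0 → ∃ i, P i ∧ m = d * i)
    (k : ℕ) : ∀ n, PowerSeries.coeff n (φ ^ k) ≠ 0 →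
      ∃ s : Multiset ℕ, Multiset.card s = k ∧ (∀ x ∈ s, P x) ∧ n = d * s.sum := by
  induction k with
  | zero =>
    intro n h
    rw [pow_zero] at h
    exact ⟨0, by simp, by simp, by simp [coeff_one_ne n h]⟩
  | succ k ih =>
    intro n h
    rw [pow_succ, PowerSeries.coeff_mul] at h
    obtain ⟨pr, hpr, hne⟩ := Finset.exists_ne_zero_of_sum_ne_zero h
    have h1 : PowerSeries.coeff pr.1 (φ ^ k) ≠ 0 := fun hz => hne (by rw [hz, zero_mul])
    have h2 : PowerSeries.coeff pr.2 φ ≠ 0 := fun hz => hne (by rw [hz, mul_zero])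
    obtain ⟨s, hs1, hs2, hs3⟩ := ih pr.1 h1
    obtain ⟨i, hi, hm⟩ := hφ pr.2 h2
    refine ⟨i ::ₘ s, by simp [hs1], ?_, ?_⟩
    · intro x hx
      rcases Multiset.mem_cons.mp hx with rfl | hx
      · exact hi
      · exact hs2 x hx
    · have hsum : pr.1 + pr.2 = n := Finset.HasAntidiagonal.mem_antidiagonal.mp hpr
      rw [Multiset.sum_cons, ← hsum, hs3, hm]
      ring

lemma coeff_binom_monomials (b c : A) (u v k n : ℕ) :
    PowerSeries.coeff n ((PowerSeries.C b * PowerSeries.X ^ u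
        + PowerSeries.C c * PowerSeries.X ^ v) ^ k)
    = ∑ j ∈ Finset.range (k + 1),
        if n = u * j + v * (k - j) then (k.choose j : A) * b ^ j * c ^ (k - j) else 0 := by
  rw [add_pow, map_sum]
  refine Finset.sum_congr rfl ?_
  intro j hj
  have hterm : (PowerSeries.C b * PowerSeries.X ^ u) ^ j *
      (PowerSeries.C c * PowerSeries.X ^ v) ^ (k - j) * ((k.choose j : ℕ) : PowerSeries A)
      = PowerSeries.C ((k.choose j : A) * b ^ j * c ^ (k - j)) *
        PowerSeries.X ^ (u * j + v * (k - j)) := by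
    rw [mul_pow, mul_pow, ← pow_mul, ← pow_mul, ← map_pow, ← map_pow,
      show ((k.choose j : ℕ) : PowerSeries A) = PowerSeries.C ((k.choose j : ℕ) : A) from
        (map_natCast _ _).symm, map_mul, map_mul, pow_add, mul_comm u j, mul_comm v (k-j)]
    ring
  rw [hterm, PowerSeries.coeff_C_mul, PowerSeries.coeff_X_pow, mul_ite, mul_one, mul_zero]

end Stmt3Aux

namespace Stmt3Aux

variable {A : Type*} [CommRing A]

lemma pow_support_dvd (d : ℕ) (φ : PowerSeries A)
    (hφ : ∀ m, ¬ d ∣ m → PowerSeries.coeff m φ = 0) (k : ℕ) :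
    ∀ n, ¬ d ∣ n → PowerSeries.coeff n (φ ^ k) = 0 := by
  induction k with
  | zero =>
    intro n hn
    rw [pow_zero, PowerSeries.coeff_one, if_neg]
    intro h0
    exact hn (h0 ▸ dvd_zero d)
  | succ k ih =>
    intro n hn
    rw [pow_succ, PowerSeries.coeff_mul]
    apply Finset.sum_eq_zero
    intro pr hpr
    have hsum : pr.1 + pr.2 = n := Finset.HasAntidiagonal.mem_antidiagonal.mp hpr
    by_cases h1 : d ∣ pr.1
    · have h2 : ¬ d ∣ pr.2 := fun h => hn (hsum ▸ Nat.dvd_add h1 h)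
      rw [hφ pr.2 h2, mul_zero]
    · rw [ih pr.1 h1, zero_mul]

end Stmt3Aux

namespace Stmt3Aux

lemma arith_part1 {p q m r : ℕ} (hp2 : 2 ≤ p) (hm2 : 2 ≤ m)
    (hmp : m * p = q) (hr0 : 0 < r) (hrp : r < p) :
    (r * m + 1) * (q - 1) + 1 = m * (r * (q - 1) + p) ∧
    ¬ q ∣ ((r * m + 1) * (q - 1) + 1) ∧
    ((r * m + 1) * (q - 1) + 1) % q ≠ 1 := by
  have hq4 : 4 ≤ q := by nlinarith
  set n := (r * m + 1) * (q - 1) + 1 with hn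
  have hmr : m * r + m ≤ m * p := by
    have h := Nat.mul_le_mul_left m (show r + 1 ≤ p by omega)
    rw [Nat.mul_succ] at h
    exact h
  have hmrq : m * r + 2 ≤ q := by omega
  have hexp1 : (r * m + 1) * (q - 1) = r * m * (q - 1) + (q - 1) := by ring
  have hexp2 : m * (r * (q - 1) + p) = m * (r * (q - 1)) + m * p := by ring
  have hexp3 : m * (r * (q - 1)) = r * m * (q - 1) := by ring
  have hexp4 : r * m * (q - 1) + r * m = r * m * q := by
    have h5 : r * m * ((q - 1) + 1) = r * m * (q - 1) + r * m := by ring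
    rw [← h5]
    congr 1
    omega
  have hrm : r * m = m * r := by ring
  have ha : n = m * (r * (q - 1) + p) := by omega
  have hqrm : q * (m * r) = r * m * q := by ring
  have hmrpos : 0 < m * r := Nat.mul_pos (by omega) hr0
  have hmod : n % q = q - m * r := by
    have hid : n = (q - m * r) + q * (m * r) := by omega
    rw [hid, Nat.add_mul_mod_self_left]
    exact Nat.mod_eq_of_lt (by omega)
  refine ⟨ha, ?_, ?_⟩
  · intro hdvd
    have h0 : n % q = 0 := Nat.mod_eq_zero_of_dvd hdvd
    omega
  · rw [hmod]
    omega

end Stmt3Aux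

namespace Stmt3Aux

lemma arith_part2 {p f q m n : ℕ} (hp2 : 2 ≤ p) (hf : 2 ≤ f) (hm2 : 2 ≤ m)
    (hpm : p ≤ m) (hmp : m * p = q) (hfpos : 0 < f)
    (hn1 : q < n) (hn2 : n < q * q) (hdvd : (q - 1) ∣ (n - 1))
    (hexc : ∀ r : ℕ, 0 < r → r < p → n ≠ (r * m + 1) * (q - 1) + 1)
    (hpq : p ∣ q) :
    ¬ q ∣ n ∧ (n % q = 1 → p ∣ (n - 1) / q + 1) ∧ ¬ m ∣ n := by
  have hq4 : 4 ≤ q := by nlinarith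
  obtain ⟨k, hk⟩ := hdvd
  have hkn : n = (q - 1) * k + 1 := by omega
  -- bounds on k
  have hk2 : 2 ≤ k := by
    by_contra h
    push_neg at h
    interval_cases k <;> omega
  have hkq : k ≤ q := by
    by_contra h
    push_neg at h
    have h1 : (q - 1) * (q + 1) ≤ (q - 1) * k := Nat.mul_le_mul_left _ (by omega)
    have h2 : (q - 1) * (q + 1) + 1 = q * q := by
      cases' Nat.exists_eq_add_of_le (show 1 ≤ q by omega) with Q hQ
      subst hQ
      simp [Nat.add_sub_cancel_left]
      ring
    omega
  constructor
  · -- ¬ q ∣ n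
    rintro ⟨c, hc⟩
    have hc2 : 2 ≤ c := by
      by_contra h
      push_neg at h
      have := Nat.mul_le_mul_left q (show c ≤ 1 by omega)
      simp only [mul_one] at this
      omega
    have hcq : c < q := by
      by_contra h
      push_neg at h
      have := Nat.mul_le_mul_left q h
      omega
    -- (q-1) ∣ (c - 1) in ℤ : c - 1 = (q-1)*(k - c)
    have hdz : ((q : ℤ) - 1) ∣ ((c : ℤ) - 1) := by
      refine ⟨(k : ℤ) - c, ?_⟩
      have h1 : (n : ℤ) = ((q : ℤ) - 1) * k + 1 := by
        have h := congrArg (Nat.cast : ℕ → ℤ) hkn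
        push_cast [Nat.cast_sub (show 1 ≤ q by omega)] at h
        exact h
      have h2 : (n : ℤ) = (q : ℤ) * c := by
        have h := congrArg (Nat.cast : ℕ → ℤ) hc
        push_cast at h
        exact h
      linarith [h1, h2]
    have habs : |(c : ℤ) - 1| < (q : ℤ) - 1 := by
      rw [abs_lt]
      constructor <;> push_cast <;> omega
    have := Int.eq_zero_of_abs_lt_dvd hdz habs
    omega
  constructor
  · -- n % q = 1 → p ∣ (n-1)/q + 1
    intro hmod
    have hq0 : 0 < q := by omega
    have hqn1 : q ∣ (n - 1) := by
      have := Nat.div_add_mod n q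
      rw [hmod] at this
      exact ⟨n / q, by omega⟩
    have hcop : Nat.Coprime q (q - 1) := by
      have h : Nat.Coprime (1 + (q - 1)) (q - 1) :=
        Nat.coprime_add_self_left.mpr (Nat.coprime_one_left _)
      rwa [show 1 + (q - 1) = q by omega] at h
    have hqk : q ∣ k := by
      apply hcop.dvd_of_dvd_mul_left
      rw [hk] at hqn1
      exact hqn1
    have hkq' : k = q := by
      have := Nat.le_of_dvd (by omega) hqk
      omega
    have hdivq : (n - 1) / q = q - 1 := by
      rw [hk, hkq', Nat.mul_div_cancel _ hq0]
    rw [hdivq, show q - 1 + 1 = q by omega]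
    exact hpq
  · -- ¬ m ∣ n
    rintro ⟨c, hc⟩
    -- m ∣ k - 1 in ℤ
    have hdz : (m : ℤ) ∣ ((k : ℤ) - 1) := by
      refine ⟨(p : ℤ) * k - c, ?_⟩
      have h1 : (n : ℤ) = ((q : ℤ) - 1) * k + 1 := by
        have h := congrArg (Nat.cast : ℕ → ℤ) hkn
        push_cast [Nat.cast_sub (show 1 ≤ q by omega)] at h
        exact h
      have h2 : (n : ℤ) = (m : ℤ) * c := by
        have h := congrArg (Nat.cast : ℕ → ℤ) hc
        push_cast at h
        exact h
      have h3 : (m : ℤ) * p = q := by exact_mod_cast congrArg (Nat.cast : ℕ → ℤ) hmp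
      linear_combination h1 - h2 - k * h3
    obtain ⟨s, hs⟩ : m ∣ (k - 1) := by
      have h1 : ((k - 1 : ℕ) : ℤ) = (k : ℤ) - 1 := by
        push_cast [Nat.cast_sub (show 1 ≤ k by omega)]
        ring
      exact Int.natCast_dvd_natCast.mp (by rw [h1]; exact hdz)
    have hs1 : 1 ≤ s := by
      rcases Nat.eq_zero_or_pos s with rfl | h
      · omega
      · exact h
    have hsp : s < p := by
      by_contra h
      push_neg at h
      have := Nat.mul_le_mul_left m h
      omega
    refine hexc s hs1 hsp ?_
    have hks : k = s * m + 1 := by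
      rw [mul_comm] at hs
      omega
    rw [hkn, hks]
    ring

end Stmt3Aux



/-- Congruences modulo `p` and `p²` for the coefficients `a_n` with
`q < n < q²` of a power series commuting with the Lubin–Tate Frobenius series
`Φ(t) = p t + t^q`, over a discrete valuation ring whose maximal ideal is generated by
(the image of) the prime `p`, with `q = p^f`, `f ≥ 2`. -/
theorem stmt3 {R : Type*} [CommRing R] [IsDomain R] [IsDiscreteValuationRing R]
    (p : ℕ) (hp : p.Prime) (f : ℕ) (hf : 2 ≤ f)
    (hmax : IsLocalRing.maximalIdeal R = Ideal.span {(p : R)})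
    (g : PowerSeries R) (hg0 : PowerSeries.constantCoeff g = 0)
    (hfe : PowerSeries.C (p : R) * g + g ^ (p ^ f)
        = psSubst (PowerSeries.C (p : R) * PowerSeries.X + PowerSeries.X ^ (p ^ f)) g)
    (ha1 : IsUnit (PowerSeries.coeff 1 g))
    (ha1q : (p : R) ∣ ((PowerSeries.coeff 1 g) ^ (p ^ f) - PowerSeries.coeff 1 g)) :
    (∀ r : ℕ, 0 < r → r < p →
      (p : R) ^ 2 ∣
        ((p : R) * PowerSeries.coeff ((r * p ^ (f - 1) + 1) * (p ^ f - 1) + 1) g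
          + (Nat.choose p r : R) * (PowerSeries.coeff 1 g) ^ (p ^ f - r * p ^ (f - 1))
            * (PowerSeries.coeff (p ^ f) g) ^ (r * p ^ (f - 1)))) ∧
    (∀ n : ℕ, p ^ f < n → n < p ^ (2 * f) → (p ^ f - 1) ∣ (n - 1) →
      (∀ r : ℕ, 0 < r → r < p → n ≠ (r * p ^ (f - 1) + 1) * (p ^ f - 1) + 1) →
      (p : R) ∣ PowerSeries.coeff n g) := by
  classical
  open Stmt3Aux in
  set q := p ^ f with hqdef
  set m := p ^ (f - 1) with hmdef
  have hp2 : 2 ≤ p := hp.two_le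
  have hfpos : 0 < f := by omega
  have hmp : m * p = q := by
    rw [hmdef, hqdef, ← pow_succ]
    congr 1
    omega
  have hpm : p ≤ m := by
    rw [hmdef]
    calc p = p ^ 1 := (pow_one p).symm
    _ ≤ p ^ (f - 1) := Nat.pow_le_pow_right (by omega) (by omega)
  have hm2 : 2 ≤ m := by omega
  have hq4 : 4 ≤ q := by nlinarith
  have hmpos : 0 < m := by omega
  -- basic ring facts
  have hspan_ne_bot : Ideal.span {(p : R)} ≠ ⊥ := by
    rw [← hmax]
    exact IsDiscreteValuationRing.not_a_field R
  have hp0 : (p : R) ≠ 0 := by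
    intro h
    apply hspan_ne_bot
    rw [h, Ideal.span_singleton_eq_bot]
  haveI hmaxI : (Ideal.span {(p : R)}).IsMaximal := hmax ▸ (IsLocalRing.maximalIdeal.isMaximal R)
  have hne_top : Ideal.span {(p : R)} ≠ ⊤ := hmaxI.ne_top
  have hCp : ((p : ℕ) : PowerSeries R) = PowerSeries.C (p : R) := (map_natCast _ p).symm
  set Φ : PowerSeries R := PowerSeries.C (p : R) * PowerSeries.X + PowerSeries.X ^ q with hΦ
  -- coefficient form of the functional equation
  have hcoeq : ∀ n : ℕ, (p : R) * PowerSeries.coeff n g + PowerSeries.coeff n (g ^ q) =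
      ∑ i ∈ Finset.range (n + 1),
        PowerSeries.coeff i g * PowerSeries.coeff n (Φ ^ i) := by
    intro n
    have h := congrArg (PowerSeries.coeff (R := R) n) hfe
    rw [map_add, PowerSeries.coeff_C_mul] at h
    rw [h, psSubst, PowerSeries.coeff_mk]
  -- divisibility of the RHS
  have hsubst_dvd : ∀ n : ℕ, ¬ q ∣ n → (n % q = 1 → p ∣ (n - 1) / q + 1) →
      (p : R) ^ 2 ∣ ∑ i ∈ Finset.range (n + 1),
        PowerSeries.coeff i g * PowerSeries.coeff n (Φ ^ i) := by
    intro n h1 h2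
    apply Finset.dvd_sum
    intro i hi
    rcases Nat.eq_zero_or_pos i with rfl | hipos
    · rw [PowerSeries.coeff_zero_eq_constantCoeff, hg0, zero_mul]
      exact dvd_zero _
    · exact Dvd.dvd.mul_left (coeff_Phi_pow_sq_dvd (by omega) h1 h2 i hipos) _
  -- the series G
  set G : PowerSeries R := PowerSeries.mk
    (fun m' => if m ∣ m' then (PowerSeries.coeff (m' / m) g) ^ m else 0) with hGdef
  have hGsupp : ∀ m', ¬ m ∣ m' → PowerSeries.coeff m' G = 0 := by
    intro m' h
    rw [hGdef, PowerSeries.coeff_mk, if_neg h]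
  have hsq1 : (PowerSeries.C (p : R)) ^ 2 ∣ g ^ q - G ^ p := by
    have h1 : PowerSeries.C (p : R) ∣ g ^ p ^ (f - 1) - G := by
      have h := frob_congr hp hne_top g (f - 1)
      rwa [← hmdef] at h
    rw [← hCp] at h1 ⊢
    have h2 := dvd_sub_pow_of_dvd_sub h1 1
    rw [pow_one, ← pow_mul, ← hmdef, hmp] at h2
    exact h2
  have hGp_lt : ∀ n', n' < q → PowerSeries.coeff n' (G ^ p) = 0 := by
    have hXm : (PowerSeries.X : PowerSeries R) ^ m ∣ G := by
      rw [PowerSeries.X_pow_dvd_iff]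
      intro k hk
      rw [hGdef, PowerSeries.coeff_mk]
      rcases Nat.eq_zero_or_pos k with rfl | hkpos
      · rw [if_pos (dvd_zero m), Nat.zero_div,
          PowerSeries.coeff_zero_eq_constantCoeff, hg0, zero_pow (by omega)]
      · rw [if_neg]
        intro hdvd
        exact absurd (Nat.le_of_dvd hkpos hdvd) (by omega)
    have hXq : (PowerSeries.X : PowerSeries R) ^ q ∣ G ^ p := by
      have := pow_dvd_pow_of_dvd hXm p
      rwa [← pow_mul, hmp] at this
    intro n' hn'
    exact PowerSeries.X_pow_dvd_iff.mp hXq n' hn'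
  -- key lemma Z : coefficients divisible by p
  have hZ : ∀ n, ¬ q ∣ n → (n % q = 1 → p ∣ (n - 1) / q + 1) → (¬ m ∣ n ∨ n < q) →
      (p : R) ∣ PowerSeries.coeff n g := by
    intro n h1 h2 h3
    have hd := hsubst_dvd n h1 h2
    have hGp0 : PowerSeries.coeff n (G ^ p) = 0 := by
      rcases h3 with h3 | h3
      · exact pow_support_dvd m G hGsupp p n h3
      · exact hGp_lt n h3
    have hcg : (p : R) ^ 2 ∣ PowerSeries.coeff n (g ^ q) := by
      have hc : PowerSeries.coeff n (g ^ q) =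
          PowerSeries.coeff n (g ^ q - G ^ p) := by
        rw [map_sub, hGp0, sub_zero]
      rw [hc]
      have : PowerSeries.C ((p : R) ^ 2) ∣ g ^ q - G ^ p := by
        rw [map_pow]; exact hsq1
      exact dvd_coeff_of_psC_dvd this n
    have hpa : (p : R) ^ 2 ∣ (p : R) * PowerSeries.coeff n g := by
      have h := hcoeq n
      have : (p : R) * PowerSeries.coeff n g =
          (∑ i ∈ Finset.range (n + 1),
            PowerSeries.coeff i g * PowerSeries.coeff n (Φ ^ i))
          - PowerSeries.coeff n (g ^ q) := eq_sub_of_add_eq h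
      rw [this]
      exact dvd_sub hd hcg
    obtain ⟨x, hx⟩ := hpa
    refine ⟨x, ?_⟩
    apply mul_left_cancel₀ hp0
    rw [hx]
    ring
  constructor
  · -- part (i)
    intro r hr0 hrp
    obtain ⟨ha_eq, hnq, hnmod⟩ := arith_part1 (q := q) hp2 hm2 hmp hr0 hrp
    set n := (r * m + 1) * (q - 1) + 1 with hndef
    set N := r * (q - 1) + p with hNdef
    set b1 : R := (PowerSeries.coeff 1 g) ^ m with hb1
    set bq : R := (PowerSeries.coeff q g) ^ m with hbq
    set PB : ℕ → Prop := fun i => 0 < i ∧ i ≠ 1 ∧ i ≠ q ∧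
      (i % q = 1 ∨ q ∣ i ∨ (m ∣ i ∧ q < i)) with hPB
    set W : PowerSeries R := PowerSeries.C b1 * PowerSeries.X ^ m
      + PowerSeries.C bq * PowerSeries.X ^ (m * q) with hW
    set EB : PowerSeries R := PowerSeries.mk
      (fun m' => if m ∣ m' ∧ PB (m' / m) then PowerSeries.coeff m' G else 0) with hEB
    have hEBsupp : ∀ m', PowerSeries.coeff m' EB ≠ 0 → ∃ i, PB i ∧ m' = m * i := by
      intro m' h
      rw [hEB, PowerSeries.coeff_mk] at h
      by_cases hc : m ∣ m' ∧ PB (m' / m)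
      · exact ⟨m' / m, hc.2, (Nat.mul_div_cancel' hc.1).symm⟩
      · rw [if_neg hc] at h
        exact absurd rfl h
    have hWc : ∀ m', PowerSeries.coeff m' W
        = (if m' = m then b1 else 0) + (if m' = m * q then bq else 0) := by
      intro m'
      rw [hW, map_add, PowerSeries.coeff_C_mul, PowerSeries.coeff_C_mul,
        PowerSeries.coeff_X_pow, PowerSeries.coeff_X_pow, mul_ite, mul_ite,
        mul_one, mul_zero, mul_one, mul_zero]
    have hsq2 : PowerSeries.C (p : R) ∣ G - (W + EB) := by
      apply psC_dvd_of_forall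
      intro m'
      rw [map_sub, map_add, hWc m']
      by_cases hdm : m ∣ m'
      · obtain ⟨i, rfl⟩ := hdm
        have hdiv : m * i / m = i := Nat.mul_div_cancel_left i hmpos
        have hGc : PowerSeries.coeff (m * i) G = (PowerSeries.coeff i g) ^ m := by
          rw [hGdef, PowerSeries.coeff_mk, if_pos ⟨i, rfl⟩, hdiv]
        have hEBc : PowerSeries.coeff (m * i) EB
            = if PB i then (PowerSeries.coeff i g) ^ m else 0 := by
          rw [hEB, PowerSeries.coeff_mk, hdiv]
          by_cases hPBi : PB i
          · rw [if_pos ⟨⟨i, rfl⟩, hPBi⟩, if_pos hPBi]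
            exact hGc
          · rw [if_neg (fun hc => hPBi hc.2), if_neg hPBi]
        have hne_mq : ∀ hii : i ≠ q, ¬ m * i = m * q :=
          fun hii hc => hii (Nat.eq_of_mul_eq_mul_left hmpos hc)
        have hne_m1 : ∀ hii : i ≠ 1, ¬ m * i = m :=
          fun hii hc => hii (Nat.eq_of_mul_eq_mul_left hmpos (by rw [mul_one]; exact hc))
        by_cases hi1 : i = 1
        · subst hi1
          rw [hGc, hEBc, if_neg (show ¬ PB 1 from fun hc => hc.2.1 rfl),
            if_pos (mul_one m), if_neg (hne_mq (by omega))]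
          rw [hb1]
          simp
        by_cases hiq : i = q
        · subst hiq
          rw [hGc, hEBc, if_neg (show ¬ PB q from fun hc => hc.2.2.1 rfl),
            if_neg (hne_m1 (by omega)), if_pos rfl]
          rw [hbq]
          simp
        by_cases hi0 : i = 0
        · subst hi0
          rw [hGc, hEBc, if_neg (show ¬ PB 0 from fun hc => absurd hc.1 (lt_irrefl 0)),
            if_neg (hne_m1 (by omega)), if_neg (hne_mq (by omega))]
          rw [PowerSeries.coeff_zero_eq_constantCoeff, hg0, zero_pow (show m ≠ 0 by omega)]
          simp
        by_cases hPBi : PB i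
        · rw [hGc, hEBc, if_pos hPBi, if_neg (hne_m1 hi1), if_neg (hne_mq hiq)]
          simp
        · rw [hGc, hEBc, if_neg hPBi, if_neg (hne_m1 hi1), if_neg (hne_mq hiq)]
          have hipos : 0 < i := by omega
          have hdisj : ¬ (i % q = 1 ∨ q ∣ i ∨ (m ∣ i ∧ q < i)) := by
            intro h
            exact hPBi ⟨hipos, hi1, hiq, h⟩
          push_neg at hdisj
          obtain ⟨hd1, hd2, hd3⟩ := hdisj
          have hpdvd : (p : R) ∣ PowerSeries.coeff i g := by
            apply hZ i hd2 (fun h => absurd h hd1)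
            by_cases hmi : m ∣ i
            · right
              have := hd3 hmi
              omega
            · exact Or.inl hmi
          have hdp : (p : R) ∣ (PowerSeries.coeff i g) ^ m :=
            dvd_pow hpdvd (by omega)
          obtain ⟨c, hc⟩ := hdp
          exact ⟨c, by rw [hc]; ring⟩
      · rw [hGsupp m' hdm, hEB, PowerSeries.coeff_mk,
          if_neg (fun hc : m ∣ m' ∧ _ => hdm hc.1),
          if_neg (fun hc : m' = m => hdm (hc ▸ dvd_refl m)),
          if_neg (fun hc : m' = m * q => hdm (hc ▸ Dvd.intro q rfl))]
        simp
    have hsq2p : (PowerSeries.C (p : R)) ^ 2 ∣ G ^ p - (W + EB) ^ p := by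
      rw [← hCp] at hsq2 ⊢
      have h2 := dvd_sub_pow_of_dvd_sub hsq2 1
      rwa [pow_one] at h2
    -- cross terms vanish
    have hcross : ∀ j, j < p → PowerSeries.coeff n (W ^ j * EB ^ (p - j)) = 0 := by
      intro j hj
      rw [PowerSeries.coeff_mul]
      apply Finset.sum_eq_zero
      rintro ⟨u, v⟩ hpr
      by_contra hne0
      have huv : u + v = n := Finset.HasAntidiagonal.mem_antidiagonal.mp hpr
      have hu : PowerSeries.coeff u (W ^ j) ≠ 0 :=
        fun h => hne0 (by rw [h, zero_mul])
      have hv : PowerSeries.coeff v (EB ^ (p - j)) ≠ 0 :=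
        fun h => hne0 (by rw [h, mul_zero])
      rw [hW, coeff_binom_monomials] at hu
      obtain ⟨jj, hjj_mem, hjjne⟩ := Finset.exists_ne_zero_of_sum_ne_zero hu
      have hjjle : jj ≤ j := Nat.lt_succ_iff.mp (Finset.mem_range.mp hjj_mem)
      have hcond : u = m * jj + (m * q) * (j - jj) := by
        by_contra h
        rw [if_neg h] at hjjne
        exact hjjne rfl
      obtain ⟨s, hs_card, hs_all, hs_sum⟩ := pow_support_multiset m PB EB hEBsupp (p - j) v hv
      have hNsum : N = jj + q * (j - jj) + s.sum := by
        apply Nat.eq_of_mul_eq_mul_left hmpos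
        rw [← ha_eq, ← huv, hcond, hs_sum]
        ring
      set S := Multiset.replicate jj 1 + Multiset.replicate (j - jj) q + s with hS
      have hS_card : Multiset.card S = p := by
        rw [hS, Multiset.card_add, Multiset.card_add,
          Multiset.card_replicate, Multiset.card_replicate, hs_card]
        omega
      have hS_sum : S.sum = r * (q - 1) + p := by
        rw [hS, Multiset.sum_add, Multiset.sum_add,
          Multiset.sum_replicate, Multiset.sum_replicate, smul_eq_mul, smul_eq_mul]
        have hc1 : (j - jj) * q = q * (j - jj) := mul_comm _ _
        rw [← hNdef]
        omega
      have hS_mem : ∀ x ∈ S, 0 < x ∧ (x % q = 1 ∨ q ∣ x ∨ p ^ (f - 1) ∣ x ∧ q < x) := by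
        intro x hx
        rw [hS] at hx
        rcases Multiset.mem_add.mp hx with hx' | hx'
        · rcases Multiset.mem_add.mp hx' with hx'' | hx''
          · have : x = 1 := Multiset.eq_of_mem_replicate hx''
            subst this
            exact ⟨one_pos, Or.inl (Nat.mod_eq_of_lt (by omega))⟩
          · have : x = q := Multiset.eq_of_mem_replicate hx''
            subst this
            exact ⟨by omega, Or.inr (Or.inl dvd_rfl)⟩
        · obtain ⟨hx0, _, _, hdisj⟩ := hs_all x hx'
          exact ⟨hx0, by rw [← hmdef]; exact hdisj⟩
      have hall := key_multiset hp hf hqdef hr0 hrp S hS_card hS_sum hS_mem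
      have hsne : ∃ x, x ∈ s := by
        apply Multiset.exists_mem_of_ne_zero
        intro h0
        rw [h0] at hs_card
        simp at hs_card
        omega
      obtain ⟨x, hxs⟩ := hsne
      have hxS : x ∈ S := by
        rw [hS]
        exact Multiset.mem_add.mpr (Or.inr hxs)
      obtain ⟨_, hx1, hxq, _⟩ := hs_all x hxs
      rcases hall x hxS with h | h
      · exact hx1 h
      · exact hxq h
    -- the main coefficient of (W + EB)^p
    have hWEB : PowerSeries.coeff n ((W + EB) ^ p)
        = (p.choose (p - r) : R) * b1 ^ (p - r) * bq ^ (p - (p - r)) := by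
      rw [add_pow, map_sum]
      rw [Finset.sum_eq_single_of_mem p (Finset.self_mem_range_succ p)]
      · rw [Nat.sub_self, pow_zero, mul_one, Nat.choose_self, Nat.cast_one, mul_one]
        rw [hW, coeff_binom_monomials]
        rw [Finset.sum_eq_single_of_mem (p - r) (Finset.mem_range.mpr (by omega))]
        · rw [if_pos ?_]
          have hqr : q * r = r * (q - 1) + r := by
            have h1 : r * ((q - 1) + 1) = r * (q - 1) + r := by ring
            rw [← h1, mul_comm]
            congr 1
            omega
          have h2 : m * (p - r) + m * q * (p - (p - r)) = m * ((p - r) + q * r) := by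
            rw [show p - (p - r) = r by omega]
            ring
          rw [ha_eq, h2]
          congr 1
          rw [hNdef]
          omega
        · intro jj hjj hne
          rw [if_neg ?_]
          intro hcontra
          apply hne
          have hjjle : jj ≤ p := Nat.lt_succ_iff.mp (Finset.mem_range.mp hjj)
          have h3 : N = jj + q * (p - jj) := by
            apply Nat.eq_of_mul_eq_mul_left hmpos
            rw [← ha_eq, hcontra]
            ring
          have h4 : q * (p - jj) = (p - jj) * (q - 1) + (p - jj) := by
            have h1 : (p - jj) * ((q - 1) + 1) = (p - jj) * (q - 1) + (p - jj) := by ring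
            rw [← h1, mul_comm]
            congr 1
            omega
          have h5 : (p - jj) * (q - 1) = r * (q - 1) := by
            rw [hNdef] at h3
            omega
          have h6 : p - jj = r := Nat.eq_of_mul_eq_mul_right (by omega) h5
          omega
      · intro j hjmem hjne
        have hj : j < p := lt_of_le_of_ne (Nat.lt_succ_iff.mp (Finset.mem_range.mp hjmem)) hjne
        rw [show ((p.choose j : ℕ) : PowerSeries R) = PowerSeries.C ((p.choose j : ℕ) : R) from
          (map_natCast _ _).symm]
        rw [mul_comm (W ^ j * EB ^ (p - j)) (PowerSeries.C ((p.choose j : ℕ) : R)),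
          PowerSeries.coeff_C_mul, hcross j hj, mul_zero]
    -- identify the target term
    have hT : (p.choose (p - r) : R) * b1 ^ (p - r) * bq ^ (p - (p - r))
        = (p.choose r : R) * (PowerSeries.coeff 1 g) ^ (q - r * m)
          * (PowerSeries.coeff q g) ^ (r * m) := by
      have e1 : m * (p - r) = q - r * m := by
        have h1 : m * (p - r) + m * r = m * p := by
          have : m * ((p - r) + r) = m * (p - r) + m * r := by ring
          rw [← this]
          congr 1
          omega
        have h2 : m * r = r * m := mul_comm _ _
        omega
      have e2 : m * r = r * m := mul_comm _ _
      rw [hb1, hbq, ← pow_mul, ← pow_mul, Nat.choose_symm hrp.le,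
        show p - (p - r) = r by omega, e1, e2]
    have heq := hcoeq n
    have hkey : (p : R) * PowerSeries.coeff n g
        + (p.choose r : R) * (PowerSeries.coeff 1 g) ^ (q - r * m)
          * (PowerSeries.coeff q g) ^ (r * m)
        = (∑ i ∈ Finset.range (n + 1),
            PowerSeries.coeff i g * PowerSeries.coeff n (Φ ^ i))
          - (PowerSeries.coeff n (g ^ q) - PowerSeries.coeff n ((W + EB) ^ p)) := by
      rw [← hT, ← hWEB]
      linear_combination heq
    rw [hkey]
    apply dvd_sub (hsubst_dvd n hnq (fun h => absurd h hnmod))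
    have hsplit2 : PowerSeries.coeff n (g ^ q) - PowerSeries.coeff n ((W + EB) ^ p)
        = PowerSeries.coeff n ((g ^ q - G ^ p) + (G ^ p - (W + EB) ^ p)) := by
      rw [map_add, map_sub, map_sub]
      ring
    rw [hsplit2]
    have hdvd2 : PowerSeries.C ((p : R) ^ 2) ∣ (g ^ q - G ^ p) + (G ^ p - (W + EB) ^ p) := by
      rw [map_pow]
      exact dvd_add hsq1 hsq2p
    exact dvd_coeff_of_psC_dvd hdvd2 n

  · -- part (ii)
    intro n hn1 hn2 hdv hexc
    have hq2 : p ^ (2 * f) = q * q := by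
      rw [two_mul, pow_add]
    rw [hq2] at hn2
    have hpq : p ∣ q := by
      rw [hqdef]
      exact dvd_pow_self p (by omega)
    obtain ⟨hh1, hh2, hh3⟩ := arith_part2 hp2 hf hm2 hpm hmp hfpos hn1 hn2 hdv hexc hpq
    exact hZ n hh1 hh2 (Or.inl hh3)
end

section
/- Let p be a prime, f ≥ 1 an integer, q = p^f, ξ = q−1, and let ℓ be an integer with 0 < ℓ < ξ, with base-p digits m_j (extended f-periodically to all j ∈ ℤ) and with ℓ_{[i]} = Σ_{j=0}^{f−1} m_{j+i} p^{j+i} for i ≥ 0. For 1 ≤ j ≤ f set g^{(j)} = ξ·((Σ_{s=0}^{j−1} p^{2f+s+1−j}) − p^{f+1−j}). Let N ≥ 1 be an integer, let 𝒟 and ℰ be finite subsets of ℤ_{≥0}, and set r = q^N − 1 − p^{f−1}·(1+p+⋯+p^{f−1}); o_i = q^N − 1 − p^i·(ξ + q·(1+p+⋯+p^{f−1})) for 0 ≤ i < f; r_i = q^N − 1 + ℓ_{[i]} − p^i·ξ for i ∈ 𝒟; n_i^{(0)} = q^N − 1 + q²·ℓ_{[i]} − 2·p^{2f+i}·ξ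 and n_i^{(j)} = n_i^{(0)} + p^i·g^{(j)} (1 ≤ j ≤ f) for i ∈ ℰ. Assume r, all o_i, all r_i and all n_i^{(j)} are nonnegative. Then: (1) n_i^{(j)} < n_i^{(j')} for all i ∈ ℰ and 0 ≤ j < j' ≤ f; n_i^{(1)} − n_i^{(0)} = q·p^i·ξ²; and n_i^{(j)} + p^{i+1−j+f}·ξ·(p^{f−1}+1) = n_i^{(j+1)} + p^{i−j+f}·ξ for 1 ≤ j < f; (2) binom(r+1, m) ≡ 0 (mod p) for 1 ≤ m ≤ p^{f−1}−1; (3) for 0 ≤ i < f: binom(o_i+1, p^i) ≡ 1 (mod p) and binom(o_i+1, m) ≡ 0 (mod p) for all m ∈ {1,…,p^i·q−1} with m ≠ p^i; (4) for i ∈ 𝒟: binom(r_i+1, m) ≡ 0 (mod p) for 1 ≤ m ≤ p^i−1; (5) for i ∈ ℰ: binom(n_i^{(0)}+1, p^{i+2f}) ≡ m_i + 2 (mod p) and binom(n_i^{(0)}+1, m) ≡ 0 (mod p) for all m ∈ {1,…,2·p^{i+2f}−1} with m ≠ p^{i+2f}; (6) for i ∈ ℰ and 1 ≤ j ≤ f: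 binom(n_i^{(j)}+1, p^{i+1−j+f}) ≡ 1 (mod p) and binom(n_i^{(j)}+1, m) ≡ 0 (mod p) for all m ∈ {1,…,p^{i+1−j+2f}−1} with m ≠ p^{i+1−j+f}; (7) ℓ ≡ n_i^{(j)} (mod ξ) for i ∈ ℰ and 0 ≤ j ≤ f, and ℓ ≡ r_i (mod ξ) for i ∈ 𝒟; (8) if ℓ = (p−2)·ξ/(p−1) then ℓ ≡ r ≡ o_i (mod ξ) for all 0 ≤ i < f. -/
open scoped Classical

/-- The base-`p` digit of `ℓ` at position `j`, extended `f`-periodically to all `j : ℤ`. -/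
noncomputable def dig (p f ℓ : ℕ) (j : ℤ) : ℕ := ℓ / p ^ (j % (f : ℤ)).toNat % p

/-- `ℓ_{[i]} = ∑_{j=0}^{f-1} m_{j+i} p^{j+i}`. -/
noncomputable def lbr (p f ℓ : ℕ) (i : ℕ) : ℕ :=
  ∑ j ∈ Finset.range f, dig p f ℓ ((j : ℤ) + (i : ℤ)) * p ^ (j + i)

/-- `g^{(j)} = ξ·((∑_{s=0}^{j-1} p^{2f+s+1-j}) − p^{f+1-j})`. -/
noncomputable def gg (p f : ℕ) (j : ℕ) : ℤ :=
  ((p : ℤ) ^ f - 1) *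
    ((∑ s ∈ Finset.range j, (p : ℤ) ^ (2 * f + s + 1 - j)) - (p : ℤ) ^ (f + 1 - j))

namespace St4b

lemma modEq_sum {α : Type*} (n : ℤ) {s : Finset α} {F G : α → ℤ}
    (h : ∀ a ∈ s, F a ≡ G a [ZMOD n]) :
    (∑ a ∈ s, F a) ≡ ∑ a ∈ s, G a [ZMOD n] := by
  classical
  induction s using Finset.induction_on with
  | empty => simp [Int.ModEq.refl]
  | @insert x s' hx ih =>
    rw [Finset.sum_insert hx, Finset.sum_insert hx]
    exact (h x (Finset.mem_insert_self x s')).add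
      (ih (fun a ha => h a (Finset.mem_insert_of_mem ha)))

lemma rot1 {M : Type*} [AddCommMonoid M] (f : ℕ) (u : ℕ → M) :
    ∑ j ∈ Finset.range f, u ((j + 1) % f) = ∑ j ∈ Finset.range f, u (j % f) := by
  cases f with
  | zero => simp
  | succ f' =>
    have e1 : ∑ j ∈ Finset.range (f'+1), u ((j + 1) % (f'+1))
        = (∑ j ∈ Finset.range f', u (j+1)) + u 0 := by
      rw [Finset.sum_range_succ, Nat.mod_self]
      congr 1
      exact Finset.sum_congr rfl fun j hj => by
        rw [Finset.mem_range] at hj; rw [Nat.mod_eq_of_lt (by omega)]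
    have e2 : ∑ j ∈ Finset.range (f'+1), u (j % (f'+1))
        = (∑ j ∈ Finset.range f', u (j+1)) + u 0 := by
      rw [Finset.sum_range_succ', Nat.zero_mod]
      congr 1
      exact Finset.sum_congr rfl fun j hj => by
        rw [Finset.mem_range] at hj; rw [Nat.mod_eq_of_lt (by omega)]
    rw [e1, e2]

lemma sum_rot {M : Type*} [AddCommMonoid M] (f : ℕ) (t : ℕ → M) :
    ∀ i : ℕ, ∑ j ∈ Finset.range f, t ((j + i) % f) = ∑ j ∈ Finset.range f, t (j % f) := by
  intro i
  induction i with
  | zero => simp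
  | succ i ih =>
    have h1 : ∑ j ∈ Finset.range f, t ((j + (i+1)) % f)
        = ∑ j ∈ Finset.range f, (fun x => t ((x + i) % f)) ((j + 1) % f) := by
      refine Finset.sum_congr rfl fun j _ => ?_
      simp only []
      rw [Nat.mod_add_mod]
      have h : j + (i+1) = j + 1 + i := by omega
      rw [h]
    rw [h1, rot1 f (fun x => t ((x + i) % f))]
    calc ∑ j ∈ Finset.range f, t ((j % f + i) % f)
        = ∑ j ∈ Finset.range f, t ((j + i) % f) := by
          refine Finset.sum_congr rfl fun j _ => ?_
          rw [Nat.mod_add_mod]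
      _ = ∑ j ∈ Finset.range f, t (j % f) := ih

lemma sumdig (p ℓ : ℕ) : ∀ f : ℕ,
    ∑ k ∈ Finset.range f, ℓ / p ^ k % p * p ^ k = ℓ % p ^ f := by
  intro f
  induction f with
  | zero => simp [Nat.mod_one]
  | succ f ih =>
    rw [Finset.sum_range_succ, ih]
    have h1 : ℓ % p ^ (f+1) / p ^ f = ℓ / p ^ f % p := by
      rw [pow_succ]
      exact Nat.mod_mul_right_div_self ℓ (p ^ f) p
    have h2 : ℓ % p ^ (f+1) % p ^ f = ℓ % p ^ f := by
      exact Nat.mod_mod_of_dvd ℓ (pow_dvd_pow p (Nat.le_succ f))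
    have h3 := Nat.div_add_mod (ℓ % p ^ (f+1)) (p ^ f)
    rw [h1, h2] at h3
    calc ℓ % p ^ f + ℓ / p ^ f % p * p ^ f
        = p ^ f * (ℓ / p ^ f % p) + ℓ % p ^ f := by ring
      _ = ℓ % p ^ (f+1) := h3

lemma geom_nat (p : ℕ) (hp : 0 < p) : ∀ f : ℕ,
    ∑ k ∈ Finset.range f, (p - 1) * p ^ k = p ^ f - 1 := by
  intro f
  induction f with
  | zero => simp
  | succ f ih =>
    rw [Finset.sum_range_succ, ih, pow_succ]
    have hX : 1 ≤ p ^ f := Nat.one_le_pow _ _ hp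
    have h1 : (p - 1) * p ^ f = p ^ f * p - p ^ f := by
      rw [Nat.sub_mul, one_mul, mul_comm]
    rw [h1]
    have h2 : p ^ f ≤ p ^ f * p := Nat.le_mul_of_pos_right _ hp
    omega

/-- `p^n ≡ p^(n % f)` modulo `p^f - 1`. -/
lemma pow_modEq (p f : ℕ) : ∀ n : ℕ,
    ((p : ℤ) ^ n) ≡ (p : ℤ) ^ (n % f) [ZMOD ((p : ℤ) ^ f - 1)] := by
  intro n
  have hn : n = f * (n / f) + n % f := (Nat.div_add_mod' n f).symm.trans (by ring)
  have h1 : ((p : ℤ) ^ f) ≡ 1 [ZMOD ((p : ℤ) ^ f - 1)] :=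
    Int.ModEq.symm (Int.modEq_iff_dvd.mpr ⟨1, by ring⟩)
  calc (p : ℤ) ^ n = ((p : ℤ) ^ f) ^ (n / f) * (p : ℤ) ^ (n % f) := by
        rw [← pow_mul, ← pow_add, ← hn]
    _ ≡ 1 ^ (n / f) * (p : ℤ) ^ (n % f) [ZMOD ((p : ℤ) ^ f - 1)] :=
        Int.ModEq.mul (h1.pow _) (Int.ModEq.refl _)
    _ = (p : ℤ) ^ (n % f) := by rw [one_pow, one_mul]

end St4b

namespace St4

/-- Lucas' theorem, Nat.ModEq form. -/
lemma lucas {p : ℕ} (hp : p.Prime) (n k : ℕ) :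
    Nat.choose n k ≡ Nat.choose (n % p) (k % p) * Nat.choose (n / p) (k / p) [MOD p] := by
  haveI : Fact p.Prime := ⟨hp⟩
  exact Choose.choose_modEq_choose_mod_mul_choose_div_nat

lemma choose_zero {p : ℕ} (hp : p.Prime) :
    ∀ a n m : ℕ, p ^ a ∣ n → ¬ p ^ a ∣ m → Nat.choose n m ≡ 0 [MOD p] := by
  intro a
  induction a with
  | zero => intro n m _ hm; exact absurd (one_dvd m) (by simpa using hm)
  | succ a ih =>
    intro n m hn hm
    have hp0 : 0 < p := hp.pos
    have hpn : p ∣ n := dvd_trans (dvd_pow_self p (Nat.succ_ne_zero a)) hn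
    have hn0 : n % p = 0 := Nat.mod_eq_zero_of_dvd hpn
    refine (lucas hp n m).trans ?_
    by_cases hmp : m % p = 0
    · have hpm : p ∣ m := Nat.dvd_of_mod_eq_zero hmp
      have h1 : p ^ a ∣ n / p := by
        rcases hn with ⟨c, hc⟩
        refine ⟨c, ?_⟩
        rw [hc, pow_succ, mul_comm (p^a) p, mul_assoc, Nat.mul_div_cancel_left _ hp0]
      have h2 : ¬ p ^ a ∣ m / p := by
        intro h
        apply hm
        have : p * p ^ a ∣ p * (m / p) := mul_dvd_mul_left p h
        rwa [Nat.mul_div_cancel' hpm, ← pow_succ'] at this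
      rw [hn0, hmp]
      simpa using ih (n / p) (m / p) h1 h2
    · rw [hn0, Nat.choose_eq_zero_of_lt (Nat.pos_of_ne_zero hmp), zero_mul]

lemma choose_pow_mul {p : ℕ} (hp : p.Prime) :
    ∀ a x y : ℕ, Nat.choose (p ^ a * x) (p ^ a * y) ≡ Nat.choose x y [MOD p] := by
  intro a
  induction a with
  | zero => intro x y; simp [Nat.ModEq.refl]
  | succ a ih =>
    intro x y
    have hp0 : 0 < p := hp.pos
    have hx : p ^ (a+1) * x = p * (p ^ a * x) := by ring
    have hy : p ^ (a+1) * y = p * (p ^ a * y) := by ring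
    refine (lucas hp _ _).trans ?_
    rw [hx, hy, Nat.mul_mod_right, Nat.mul_mod_right, Nat.mul_div_cancel_left _ hp0,
      Nat.mul_div_cancel_left _ hp0]
    simpa using ih x y

lemma choose_pow_one {p : ℕ} (hp : p.Prime) (a T : ℕ) :
    Nat.choose (p ^ a * T) (p ^ a) ≡ T [MOD p] := by
  have := choose_pow_mul hp a T 1
  rw [mul_one, Nat.choose_one_right] at this
  exact this

/-- Shape `n = p^a + p^b * M` with `a < b`. -/
lemma shape_one {p : ℕ} (hp : p.Prime) (a b M : ℕ) (hab : a < b) :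
    Nat.choose (p ^ a + p ^ b * M) (p ^ a) ≡ 1 [MOD p] ∧
    ∀ m : ℕ, 1 ≤ m → m < p ^ b → m ≠ p ^ a →
      Nat.choose (p ^ a + p ^ b * M) m ≡ 0 [MOD p] := by
  have hp0 : 0 < p := hp.pos
  have hp2 : 2 ≤ p := hp.two_le
  obtain ⟨c, hc⟩ : ∃ c, b = a + (c + 1) := ⟨b - a - 1, by omega⟩
  have hfac : p ^ a + p ^ b * M = p ^ a * (1 + p ^ (c+1) * M) := by
    rw [hc, pow_add]; ring
  constructor
  · rw [hfac]
    refine (choose_pow_one hp a _).trans ?_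
    have : p ∣ p ^ (c+1) * M := dvd_mul_of_dvd_left (dvd_pow_self p (Nat.succ_ne_zero c)) M
    calc (1 + p ^ (c+1) * M) ≡ 1 + 0 [MOD p] := Nat.ModEq.add_left 1 ((Nat.modEq_zero_iff_dvd).mpr this)
      _ = 1 := by ring
  · intro m h1 h2 h3
    by_cases hd : p ^ a ∣ m
    · obtain ⟨k, rfl⟩ := hd
      have hk2 : 2 ≤ k := by
        rcases Nat.lt_or_ge k 2 with hk | hk
        · interval_cases k
          · simp at h1
          · simp at h3
        · exact hk
      have hkc : k < p ^ (c+1) := by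
        rw [hc, pow_add] at h2
        exact lt_of_mul_lt_mul_left h2 (Nat.zero_le _)
      rw [hfac]
      refine (choose_pow_mul hp a _ k).trans ?_
      -- now show choose (1 + p^(c+1) * M) k ≡ 0 [MOD p]
      refine (lucas hp _ _).trans ?_
      have hmod : (1 + p ^ (c+1) * M) % p = 1 := by
        obtain ⟨t, ht⟩ : p ∣ p ^ (c+1) * M :=
          dvd_mul_of_dvd_left (dvd_pow_self p (Nat.succ_ne_zero c)) M
        rw [ht, mul_comm, Nat.add_mul_mod_self_right, Nat.mod_eq_of_lt (by omega)]
      have hdiv : (1 + p ^ (c+1) * M) / p = p ^ c * M := by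
        have h : p ^ (c+1) * M = p * (p ^ c * M) := by ring
        rw [h, Nat.add_mul_div_left _ _ hp0, Nat.div_eq_of_lt (by omega), zero_add]
      rw [hmod, hdiv]
      rcases Nat.lt_or_ge (k % p) 2 with hkp | hkp
      · have hkdiv : 1 ≤ k / p := by
          rcases Nat.eq_zero_or_pos (k / p) with h0 | h0
          · have hdm := Nat.div_add_mod k p
            rw [h0, mul_zero, zero_add] at hdm
            omega
          · exact h0
        have hkdivlt : k / p < p ^ c := by
          have : k < p ^ c * p := by rw [← pow_succ]; exact hkc
          exact Nat.div_lt_of_lt_mul (by rwa [mul_comm] at this)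
        have hz : Nat.choose (p ^ c * M) (k / p) ≡ 0 [MOD p] :=
          choose_zero hp c _ _ (Dvd.intro _ rfl)
            (fun h => absurd (Nat.le_of_dvd (by omega) h) (by omega))
        calc Nat.choose 1 (k % p) * Nat.choose (p ^ c * M) (k / p)
            ≡ Nat.choose 1 (k % p) * 0 [MOD p] := hz.mul_left _
          _ = 0 := by ring
      · rw [Nat.choose_eq_zero_of_lt (by omega : 1 < k % p), zero_mul]
    · exact choose_zero hp a _ m ⟨1 + p ^ (c+1) * M, hfac⟩ hd

/-- Shape `n = p^a * T`, range `m < 2 p^a`. -/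
lemma shape_T {p : ℕ} (hp : p.Prime) (a T : ℕ) :
    ∀ m : ℕ, 1 ≤ m → m < 2 * p ^ a → m ≠ p ^ a →
      Nat.choose (p ^ a * T) m ≡ 0 [MOD p] := by
  intro m h1 h2 h3
  by_cases hd : p ^ a ∣ m
  · obtain ⟨k, rfl⟩ := hd
    have hpa : 0 < p ^ a := pow_pos hp.pos a
    have : k = 1 := by
      rcases Nat.lt_or_ge k 2 with hk | hk
      · interval_cases k
        · simp at h1
        · rfl
      · exfalso; nlinarith
    subst this
    simp at h3
  · exact choose_zero hp a _ m (Dvd.intro _ rfl) hd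

end St4


namespace St4c

lemma dig_nat (p f ℓ a : ℕ) : dig p f ℓ ((a : ℕ) : ℤ) = ℓ / p ^ (a % f) % p := by
  unfold dig
  rw [show (((a : ℕ) : ℤ) % (f : ℤ)).toNat = a % f from by
    rw [← Int.natCast_mod, Int.toNat_natCast]]

noncomputable def Lsh (p f ℓ i : ℕ) : ℕ :=
  ∑ j ∈ Finset.range f, dig p f ℓ ((j : ℤ) + (i : ℤ)) * p ^ j

lemma lbr_eq (p f ℓ i : ℕ) : lbr p f ℓ i = p ^ i * Lsh p f ℓ i := by
  unfold lbr Lsh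
  rw [Finset.mul_sum]
  exact Finset.sum_congr rfl fun j _ => by rw [pow_add]; ring

lemma dig_cast (p f ℓ j i : ℕ) :
    dig p f ℓ ((j : ℤ) + (i : ℤ)) = ℓ / p ^ ((j + i) % f) % p := by
  have h : ((j : ℤ) + (i : ℤ)) = (((j + i : ℕ) : ℕ) : ℤ) := by push_cast; ring
  rw [h, dig_nat]

/-- there is a base-`p` digit of `ℓ` among positions `< f` which is `≤ p - 2`. -/
lemma exists_digit_small (p f ℓ : ℕ) (hp2 : 2 ≤ p) (hℓ1 : ℓ < p ^ f - 1) :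
    ∃ k, k < f ∧ ℓ / p ^ k % p ≤ p - 2 := by
  by_contra h
  push_neg at h
  have hall : ∀ k, k < f → ℓ / p ^ k % p = p - 1 := by
    intro k hk
    have h1 := h k hk
    have h2 : ℓ / p ^ k % p < p := Nat.mod_lt _ (by omega)
    omega
  have hs := St4b.sumdig p ℓ f
  rw [Finset.sum_congr rfl (fun k hk => by
    rw [hall k (Finset.mem_range.mp hk)])] at hs
  rw [St4b.geom_nat p (by omega) f] at hs
  have hℓf : ℓ % p ^ f = ℓ := Nat.mod_eq_of_lt (by omega)
  omega

lemma Lsh_le (p f ℓ i : ℕ) (hp2 : 2 ≤ p) (hf : 1 ≤ f) (hℓ1 : ℓ < p ^ f - 1) :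
    Lsh p f ℓ i ≤ p ^ f - 2 := by
  obtain ⟨k0, hk0f, hk0⟩ := exists_digit_small p f ℓ hp2 hℓ1
  set j0 := (k0 + (f - i % f)) % f with hj0def
  have hj0f : j0 < f := Nat.mod_lt _ (by omega)
  have hrot : (j0 + i) % f = k0 := by
    have h1 : (j0 + i) % f = (j0 % f + i % f) % f := by rw [Nat.add_mod]
    have h2 : j0 % f = j0 := Nat.mod_eq_of_lt hj0f
    have h3 : (j0 + i % f) % f = ((k0 + (f - i % f)) % f + i % f) % f := by rw [hj0def]
    have h4 : ((k0 + (f - i % f)) % f + i % f) % f = (k0 + (f - i % f) + i % f) % f :=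
      Nat.mod_add_mod _ _ _
    have h5 : k0 + (f - i % f) + i % f = k0 + f := by
      have : i % f ≤ f := le_of_lt (Nat.mod_lt _ (by omega))
      omega
    rw [h1, h2, h3, h4, h5, Nat.add_mod_right, Nat.mod_eq_of_lt hk0f]
  -- key bound : Lsh + p ^ j0 ≤ p ^ f - 1
  have hbound : Lsh p f ℓ i + p ^ j0 ≤ p ^ f - 1 := by
    have hp0 : 0 < p := by omega
    have hEq : Lsh p f ℓ i + p ^ j0
        = ∑ j ∈ Finset.range f,
            (dig p f ℓ ((j : ℤ) + (i : ℤ)) * p ^ j + if j = j0 then p ^ j else 0) := by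
      rw [Finset.sum_add_distrib]
      unfold Lsh
      congr 1
      rw [Finset.sum_ite_eq' (Finset.range f) j0 (fun j => p ^ j),
        if_pos (Finset.mem_range.mpr hj0f)]
    rw [hEq]
    calc ∑ j ∈ Finset.range f,
            (dig p f ℓ ((j : ℤ) + (i : ℤ)) * p ^ j + if j = j0 then p ^ j else 0)
        ≤ ∑ j ∈ Finset.range f, (p - 1) * p ^ j := by
          refine Finset.sum_le_sum fun j hj => ?_
          by_cases hjj : j = j0
          · subst hjj
            rw [if_pos rfl, dig_cast, hrot]
            have h1 : ℓ / p ^ k0 % p + 1 ≤ p - 1 := by omega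
            calc ℓ / p ^ k0 % p * p ^ j0 + p ^ j0
                = (ℓ / p ^ k0 % p + 1) * p ^ j0 := by ring
              _ ≤ (p - 1) * p ^ j0 := Nat.mul_le_mul_right _ h1
          · rw [if_neg hjj, add_zero]
            have : dig p f ℓ ((j : ℤ) + (i : ℤ)) < p := by
              rw [dig_cast]; exact Nat.mod_lt _ hp0
            exact Nat.mul_le_mul_right _ (by omega)
      _ = p ^ f - 1 := St4b.geom_nat p hp0 f
  have : 1 ≤ p ^ j0 := Nat.one_le_pow _ _ (by omega)
  omega

lemma Lsh_modEq_dig (p f ℓ i : ℕ) (hf : 1 ≤ f) :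
    Lsh p f ℓ i ≡ dig p f ℓ (i : ℤ) [MOD p] := by
  obtain ⟨f', rfl⟩ : ∃ f', f = f' + 1 := ⟨f - 1, by omega⟩
  unfold Lsh
  rw [Finset.sum_range_succ']
  have h0 : dig p (f' + 1) ℓ (((0 : ℕ) : ℤ) + (i : ℤ)) * p ^ 0 = dig p (f' + 1) ℓ (i : ℤ) := by
    norm_num
  rw [h0]
  have hdvd : p ∣ ∑ j ∈ Finset.range f', dig p (f' + 1) ℓ ((↑(j + 1) : ℤ) + (i : ℤ)) * p ^ (j + 1) :=
    Finset.dvd_sum fun j _ => Dvd.dvd.mul_left (dvd_pow_self p (Nat.succ_ne_zero j)) _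
  calc (∑ j ∈ Finset.range f', dig p (f' + 1) ℓ ((↑(j + 1) : ℤ) + (i : ℤ)) * p ^ (j + 1))
        + dig p (f' + 1) ℓ (i : ℤ)
      ≡ 0 + dig p (f' + 1) ℓ (i : ℤ) [MOD p] :=
        Nat.ModEq.add_right _ ((Nat.modEq_zero_iff_dvd).mpr hdvd)
    _ = dig p (f' + 1) ℓ (i : ℤ) := by ring

lemma lbr_modEq (p f ℓ i : ℕ) (hp2 : 2 ≤ p) (hf : 1 ≤ f) (hℓ : ℓ < p ^ f) :
    (lbr p f ℓ i : ℤ) ≡ (ℓ : ℤ) [ZMOD ((p : ℤ) ^ f - 1)] := by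
  set ξ : ℤ := (p : ℤ) ^ f - 1 with hξ
  have hcast : (lbr p f ℓ i : ℤ)
      = ∑ j ∈ Finset.range f, ((ℓ / p ^ ((j + i) % f) % p : ℕ) : ℤ) * (p : ℤ) ^ (j + i) := by
    unfold lbr
    rw [Nat.cast_sum]
    refine Finset.sum_congr rfl fun j _ => ?_
    rw [dig_cast]
    push_cast
    ring
  set t : ℕ → ℤ := fun k => ((ℓ / p ^ (k % f) % p : ℕ) : ℤ) * (p : ℤ) ^ (k % f) with ht
  have hstep : (lbr p f ℓ i : ℤ) ≡ ∑ j ∈ Finset.range f, t ((j + i) % f) [ZMOD ξ] := by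
    rw [hcast]
    refine St4b.modEq_sum ξ fun j _ => ?_
    have h1 : t ((j + i) % f)
        = ((ℓ / p ^ ((j + i) % f) % p : ℕ) : ℤ) * (p : ℤ) ^ ((j + i) % f) := by
      rw [ht]
      simp only []
      rw [Nat.mod_mod_of_dvd _ dvd_rfl]
    rw [h1]
    exact Int.ModEq.mul_left _ (St4b.pow_modEq p f (j + i))
  have hrot : ∑ j ∈ Finset.range f, t ((j + i) % f) = ∑ j ∈ Finset.range f, t (j % f) :=
    St4b.sum_rot f t i
  have hfinal : ∑ j ∈ Finset.range f, t (j % f) = (ℓ : ℤ) := by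
    have h2 : ∑ j ∈ Finset.range f, t (j % f)
        = ((∑ j ∈ Finset.range f, ℓ / p ^ j % p * p ^ j : ℕ) : ℤ) := by
      push_cast
      refine Finset.sum_congr rfl fun j hj => ?_
      rw [Finset.mem_range] at hj
      rw [ht]
      simp only []
      rw [Nat.mod_mod_of_dvd _ dvd_rfl, Nat.mod_eq_of_lt hj]
      push_cast
      ring
    rw [h2, St4b.sumdig p ℓ f, Nat.mod_eq_of_lt hℓ]
  calc (lbr p f ℓ i : ℤ) ≡ ∑ j ∈ Finset.range f, t ((j + i) % f) [ZMOD ξ] := hstep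
    _ = (ℓ : ℤ) := by rw [hrot, hfinal]

lemma gg_succ (p f j : ℕ) :
    gg p f (j + 1) = gg p f j
      + ((p : ℤ) ^ f - 1) *
        ((p : ℤ) ^ (2 * f - j) + (p : ℤ) ^ (f + 1 - j) - (p : ℤ) ^ (f - j)) := by
  unfold gg
  rw [Finset.sum_range_succ']
  have hsum : (∑ s ∈ Finset.range j, (p : ℤ) ^ (2 * f + (s + 1) + 1 - (j + 1)))
      = ∑ s ∈ Finset.range j, (p : ℤ) ^ (2 * f + s + 1 - j) :=
    Finset.sum_congr rfl fun s _ => by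
      rw [show 2 * f + (s + 1) + 1 - (j + 1) = 2 * f + s + 1 - j from by omega]
  rw [hsum, show 2 * f + 0 + 1 - (j + 1) = 2 * f - j from by omega,
    show f + 1 - (j + 1) = f - j from by omega]
  ring

lemma xi_ge (p f : ℕ) (hp2 : 2 ≤ p) (hf : 1 ≤ f) : (1 : ℤ) ≤ (p : ℤ) ^ f - 1 := by
  have h : (2 : ℤ) ≤ (p : ℤ) := by exact_mod_cast hp2
  have h2 : (2 : ℤ) ≤ (p : ℤ) ^ f := le_trans h (le_self_pow₀ (by linarith) (by omega))
  omega

lemma gg_strictMono (p f : ℕ) (hp2 : 2 ≤ p) (hf : 1 ≤ f) : StrictMono (gg p f) := by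
  refine strictMono_nat_of_lt_succ fun j => ?_
  rw [gg_succ]
  have hξ : (1 : ℤ) ≤ (p : ℤ) ^ f - 1 := xi_ge p f hp2 hf
  have h1 : (p : ℤ) ^ (f - j) ≤ (p : ℤ) ^ (f + 1 - j) :=
    pow_le_pow_right₀ (by exact_mod_cast (le_trans (by norm_num) hp2)) (by omega)
  have h2 : (1 : ℤ) ≤ (p : ℤ) ^ (2 * f - j) := one_le_pow₀ (by exact_mod_cast (le_trans (by norm_num) hp2))
  nlinarith

lemma gg_one (p f : ℕ) : gg p f 1 = ((p : ℤ) ^ f - 1) * ((p : ℤ) ^ (2 * f) - (p : ℤ) ^ f) := by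
  unfold gg
  rw [Finset.sum_range_one, show 2 * f + 0 + 1 - 1 = 2 * f from by omega,
    show f + 1 - 1 = f from by omega]

lemma gg_pos (p f j : ℕ) (hp2 : 2 ≤ p) (hf : 1 ≤ f) (hj : 1 ≤ j) : 0 < gg p f j := by
  have h1 : gg p f 1 ≤ gg p f j := (gg_strictMono p f hp2 hf).le_iff_le.mpr hj
  have hξ : (1 : ℤ) ≤ (p : ℤ) ^ f - 1 := xi_ge p f hp2 hf
  have h2 : (p : ℤ) ^ f < (p : ℤ) ^ (2 * f) :=
    pow_lt_pow_right₀ (by exact_mod_cast Nat.lt_of_lt_of_le Nat.one_lt_two hp2) (by omega)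
  rw [gg_one] at h1
  nlinarith

lemma gg_closed (p f j : ℕ) (hj : j ≤ f) :
    gg p f j = ((p : ℤ) ^ f - 1) *
      ((p : ℤ) ^ (f + (f - j) + 1) * (∑ s ∈ Finset.range j, (p : ℤ) ^ s)
        - (p : ℤ) ^ ((f - j) + 1)) := by
  unfold gg
  have hsum : (∑ s ∈ Finset.range j, (p : ℤ) ^ (2 * f + s + 1 - j))
      = ∑ s ∈ Finset.range j, (p : ℤ) ^ (f + (f - j) + 1) * (p : ℤ) ^ s :=
    Finset.sum_congr rfl fun s _ => by
      rw [← pow_add, show f + (f - j) + 1 + s = 2 * f + s + 1 - j from by omega]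
  rw [hsum, ← Finset.mul_sum, show f + 1 - j = (f - j) + 1 from by omega]

/-- `p^i * (∑ s<f, p^s) ≡ ∑ s<f, p^s` modulo `ξ`. -/
lemma pow_mul_geom_modEq (p f : ℕ) (hp2 : 2 ≤ p) (hf : 1 ≤ f) : ∀ i : ℕ,
    (p : ℤ) ^ i * (∑ s ∈ Finset.range f, (p : ℤ) ^ s)
      ≡ (∑ s ∈ Finset.range f, (p : ℤ) ^ s) [ZMOD ((p : ℤ) ^ f - 1)] := by
  intro i
  induction i with
  | zero => simp [Int.ModEq.refl]
  | succ i ih =>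
    have hstep : (p : ℤ) * (∑ s ∈ Finset.range f, (p : ℤ) ^ s)
        ≡ (∑ s ∈ Finset.range f, (p : ℤ) ^ s) [ZMOD ((p : ℤ) ^ f - 1)] := by
      refine (Int.modEq_iff_dvd.mpr ⟨1, ?_⟩).symm
      have := geom_sum_mul ((p : ℤ)) f
      linear_combination this
    calc (p : ℤ) ^ (i + 1) * (∑ s ∈ Finset.range f, (p : ℤ) ^ s)
        = (p : ℤ) ^ i * ((p : ℤ) * (∑ s ∈ Finset.range f, (p : ℤ) ^ s)) := by ring
      _ ≡ (p : ℤ) ^ i * (∑ s ∈ Finset.range f, (p : ℤ) ^ s) [ZMOD ((p : ℤ) ^ f - 1)] :=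
          Int.ModEq.mul_left _ hstep
      _ ≡ (∑ s ∈ Finset.range f, (p : ℤ) ^ s) [ZMOD ((p : ℤ) ^ f - 1)] := ih

end St4c

set_option maxHeartbeats 1600000 in
/-- Numerical relations and binomial congruences for the exponents
`r`, `o_i`, `r_i`, `n_i^{(j)}` used in the construction of §4.1 of the paper
(`q = p^f`, `ξ = q−1`). The assumption that the integers `r, o_i, r_i, n_i^{(j)}` are
nonnegative is encoded by presenting them as natural numbers equal to the defining
integer expressions. -/
theorem stmt4 (p f : ℕ) (hp : p.Prime) (hf : 1 ≤ f)
    (ℓ : ℕ) (hℓ0 : 0 < ℓ) (hℓ1 : ℓ < p ^ f - 1)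
    (N : ℕ) (hN : 1 ≤ N) (𝒟 ℰ : Finset ℕ)
    (r : ℕ)
    (hr : (r : ℤ) = (p : ℤ) ^ (f * N) - 1
        - (p : ℤ) ^ (f - 1) * ∑ s ∈ Finset.range f, (p : ℤ) ^ s)
    (o : ℕ → ℕ)
    (ho : ∀ i, i < f → (o i : ℤ) = (p : ℤ) ^ (f * N) - 1
        - (p : ℤ) ^ i * (((p : ℤ) ^ f - 1) + (p : ℤ) ^ f * ∑ s ∈ Finset.range f, (p : ℤ) ^ s))
    (rD : ℕ → ℕ)
    (hrD : ∀ i ∈ 𝒟, (rD i : ℤ) = (p : ℤ) ^ (f * N) - 1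
        + (lbr p f ℓ i : ℤ) - (p : ℤ) ^ i * ((p : ℤ) ^ f - 1))
    (nE : ℕ → ℕ → ℕ)
    (hnE0 : ∀ i ∈ ℰ, (nE i 0 : ℤ) = (p : ℤ) ^ (f * N) - 1
        + (p : ℤ) ^ (2 * f) * (lbr p f ℓ i : ℤ) - 2 * (p : ℤ) ^ (2 * f + i) * ((p : ℤ) ^ f - 1))
    (hnEj : ∀ i ∈ ℰ, ∀ j, 1 ≤ j → j ≤ f →
        (nE i j : ℤ) = (nE i 0 : ℤ) + (p : ℤ) ^ i * gg p f j) :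
    -- (1)
    (∀ i ∈ ℰ,
      (∀ j j' : ℕ, j < j' → j' ≤ f → nE i j < nE i j') ∧
      (nE i 1 : ℤ) - (nE i 0 : ℤ) = (p : ℤ) ^ f * (p : ℤ) ^ i * ((p : ℤ) ^ f - 1) ^ 2 ∧
      (∀ j, 1 ≤ j → j < f →
        (nE i j : ℤ) + (p : ℤ) ^ (i + 1 + f - j) * ((p : ℤ) ^ f - 1) * ((p : ℤ) ^ (f - 1) + 1)
          = (nE i (j + 1) : ℤ) + (p : ℤ) ^ (i + f - j) * ((p : ℤ) ^ f - 1))) ∧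
    -- (2)
    (∀ m : ℕ, 1 ≤ m → m ≤ p ^ (f - 1) - 1 → Nat.choose (r + 1) m ≡ 0 [MOD p]) ∧
    -- (3)
    (∀ i, i < f → Nat.choose (o i + 1) (p ^ i) ≡ 1 [MOD p] ∧
      (∀ m : ℕ, 1 ≤ m → m ≤ p ^ i * p ^ f - 1 → m ≠ p ^ i →
        Nat.choose (o i + 1) m ≡ 0 [MOD p])) ∧
    -- (4)
    (∀ i ∈ 𝒟, ∀ m : ℕ, 1 ≤ m → m ≤ p ^ i - 1 → Nat.choose (rD i + 1) m ≡ 0 [MOD p]) ∧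
    -- (5)
    (∀ i ∈ ℰ, Nat.choose (nE i 0 + 1) (p ^ (i + 2 * f)) ≡ dig p f ℓ (i : ℤ) + 2 [MOD p] ∧
      (∀ m : ℕ, 1 ≤ m → m ≤ 2 * p ^ (i + 2 * f) - 1 → m ≠ p ^ (i + 2 * f) →
        Nat.choose (nE i 0 + 1) m ≡ 0 [MOD p])) ∧
    -- (6)
    (∀ i ∈ ℰ, ∀ j, 1 ≤ j → j ≤ f →
      Nat.choose (nE i j + 1) (p ^ (i + 1 + f - j)) ≡ 1 [MOD p] ∧
      (∀ m : ℕ, 1 ≤ m → m ≤ p ^ (i + 1 + 2 * f - j) - 1 → m ≠ p ^ (i + 1 + f - j) →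
        Nat.choose (nE i j + 1) m ≡ 0 [MOD p])) ∧
    -- (7)
    (∀ i ∈ ℰ, ∀ j, j ≤ f → (ℓ : ℤ) ≡ (nE i j : ℤ) [ZMOD ((p : ℤ) ^ f - 1)]) ∧
    (∀ i ∈ 𝒟, (ℓ : ℤ) ≡ (rD i : ℤ) [ZMOD ((p : ℤ) ^ f - 1)]) ∧
    -- (8)
    (ℓ * (p - 1) = (p - 2) * (p ^ f - 1) →
      ((ℓ : ℤ) ≡ (r : ℤ) [ZMOD ((p : ℤ) ^ f - 1)] ∧
        ∀ i, i < f → (ℓ : ℤ) ≡ (o i : ℤ) [ZMOD ((p : ℤ) ^ f - 1)])) := by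
  haveI : Fact p.Prime := ⟨hp⟩
  have hp2 : 2 ≤ p := hp.two_le
  have hp0 : 0 < p := hp.pos
  have hpz : (2 : ℤ) ≤ (p : ℤ) := by exact_mod_cast hp2
  have hpz1 : (1 : ℤ) ≤ (p : ℤ) := by linarith
  have hξ1 : (1 : ℤ) ≤ (p : ℤ) ^ f - 1 := St4c.xi_ge p f hp2 hf
  have hℓpf : ℓ < p ^ f := by
    have : 1 ≤ p ^ f := Nat.one_le_pow _ _ hp0
    omega
  -- convenient integer facts
  have hexp : ∀ a b : ℕ, (p : ℤ) ^ a < (p : ℤ) ^ b → a < b := by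
    intro a b h
    by_contra hc
    push_neg at hc
    exact absurd (pow_le_pow_right₀ hpz1 hc) (not_le.mpr h)
  have hlbrZ : ∀ i : ℕ, (lbr p f ℓ i : ℤ) = (p : ℤ) ^ i * (St4c.Lsh p f ℓ i : ℤ) := by
    intro i
    rw [St4c.lbr_eq]
    push_cast
    ring
  have hLle : ∀ i : ℕ, (St4c.Lsh p f ℓ i : ℤ) ≤ (p : ℤ) ^ f - 2 := by
    intro i
    have h := St4c.Lsh_le p f ℓ i hp2 hf hℓ1
    have hpf2 : 2 ≤ p ^ f := by
      calc 2 ≤ p := hp2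
        _ = p ^ 1 := (pow_one p).symm
        _ ≤ p ^ f := Nat.pow_le_pow_right hp0 hf
    have h2 := (Nat.cast_le (α := ℤ)).mpr h
    rw [Nat.cast_sub hpf2] at h2
    exact_mod_cast h2
  have hSpf : (p : ℤ) ^ (f - 1) ≤ ∑ s ∈ Finset.range f, (p : ℤ) ^ s :=
    Finset.single_le_sum (f := fun s => (p : ℤ) ^ s)
      (fun s _ => pow_nonneg (by linarith) s) (Finset.mem_range.mpr (by omega))
  have hSnn : (0 : ℤ) ≤ ∑ s ∈ Finset.range f, (p : ℤ) ^ s :=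
    Finset.sum_nonneg fun s _ => pow_nonneg (by linarith) s
  -- the bound 3f + i < fN for i ∈ ℰ
  have hbE : ∀ i ∈ ℰ, 3 * f + i + 1 ≤ f * N := by
    intro i hi
    have h := hnE0 i hi
    rw [hlbrZ i] at h
    have hnn : (0 : ℤ) ≤ (nE i 0 : ℤ) := Int.natCast_nonneg _
    have e1 : (p : ℤ) ^ (2 * f) * ((p : ℤ) ^ i * (St4c.Lsh p f ℓ i : ℤ))
        = (p : ℤ) ^ (2 * f + i) * (St4c.Lsh p f ℓ i : ℤ) := by rw [pow_add]; ring
    rw [e1] at h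
    have e2 : (p : ℤ) ^ (2 * f + i) * (p : ℤ) ^ f = (p : ℤ) ^ (3 * f + i) := by
      rw [← pow_add]; congr 1; omega
    have t1 : (St4c.Lsh p f ℓ i : ℤ) + (p : ℤ) ^ f ≤ 2 * ((p : ℤ) ^ f - 1) := by
      have := hLle i; linarith
    have t2 : (p : ℤ) ^ (2 * f + i) * ((St4c.Lsh p f ℓ i : ℤ) + (p : ℤ) ^ f)
        ≤ (p : ℤ) ^ (2 * f + i) * (2 * ((p : ℤ) ^ f - 1)) :=
      mul_le_mul_of_nonneg_left t1 (pow_nonneg (by linarith) _)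
    have e3 : (p : ℤ) ^ (2 * f + i) * ((St4c.Lsh p f ℓ i : ℤ) + (p : ℤ) ^ f)
        = (p : ℤ) ^ (2 * f + i) * (St4c.Lsh p f ℓ i : ℤ) + (p : ℤ) ^ (3 * f + i) := by
      rw [← e2]; ring
    have e4 : (p : ℤ) ^ (2 * f + i) * (2 * ((p : ℤ) ^ f - 1))
        = 2 * (p : ℤ) ^ (2 * f + i) * ((p : ℤ) ^ f - 1) := by ring
    have hb : (p : ℤ) ^ (3 * f + i) < (p : ℤ) ^ (f * N) := by linarith
    have := hexp _ _ hb
    omega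
  -- shape for (2): p^(f-1) divides r+1
  have S2 : p ^ (f - 1) ∣ r + 1 := by
    obtain ⟨c, hc⟩ : ∃ c, f * N = (f - 1) + c := by
      refine ⟨f * N - (f - 1), ?_⟩
      have : f ≤ f * N := Nat.le_mul_of_pos_right f (by omega)
      omega
    have key : ((r + 1 : ℕ) : ℤ)
        = (p : ℤ) ^ (f - 1) * ((p : ℤ) ^ c - ∑ s ∈ Finset.range f, (p : ℤ) ^ s) := by
      push_cast
      rw [hr, hc, pow_add]
      ring
    have : ((p ^ (f - 1) : ℕ) : ℤ) ∣ ((r + 1 : ℕ) : ℤ) := by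
      refine ⟨(p : ℤ) ^ c - ∑ s ∈ Finset.range f, (p : ℤ) ^ s, ?_⟩
      rw [key]; push_cast; ring
    exact_mod_cast this
  -- shape for (3)
  have S3 : ∀ i, i < f → ∃ M : ℕ, o i + 1 = p ^ i + p ^ (f + i) * M := by
    intro i hi
    have ho' := ho i hi
    have hnn : (0 : ℤ) ≤ (o i : ℤ) := Int.natCast_nonneg _
    have hfiN : f + i ≤ f * N := by
      have t1 : (p : ℤ) ^ f * (p : ℤ) ^ (f - 1) ≤ (p : ℤ) ^ f * ∑ s ∈ Finset.range f, (p : ℤ) ^ s :=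
        mul_le_mul_of_nonneg_left hSpf (pow_nonneg (by linarith) f)
      have t2 : (p : ℤ) ^ i * ((p : ℤ) ^ f * (p : ℤ) ^ (f - 1))
          ≤ (p : ℤ) ^ i * ((p : ℤ) ^ f * ∑ s ∈ Finset.range f, (p : ℤ) ^ s) :=
        mul_le_mul_of_nonneg_left t1 (pow_nonneg (by linarith) i)
      have t3 : (0 : ℤ) ≤ (p : ℤ) ^ i * ((p : ℤ) ^ f - 1) :=
        mul_nonneg (pow_nonneg (by linarith) i) (by linarith)
      have e1 : (p : ℤ) ^ i * ((p : ℤ) ^ f * (p : ℤ) ^ (f - 1)) = (p : ℤ) ^ (2 * f - 1 + i) := by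
        rw [show 2 * f - 1 + i = i + (f + (f - 1)) from by omega, pow_add, pow_add]
      have e2 : (p : ℤ) ^ i * (((p : ℤ) ^ f - 1) + (p : ℤ) ^ f * ∑ s ∈ Finset.range f, (p : ℤ) ^ s)
          = (p : ℤ) ^ i * ((p : ℤ) ^ f - 1)
            + (p : ℤ) ^ i * ((p : ℤ) ^ f * ∑ s ∈ Finset.range f, (p : ℤ) ^ s) := by ring
      rw [e2] at ho'
      have hb : (p : ℤ) ^ (2 * f - 1 + i) < (p : ℤ) ^ (f * N) := by
        rw [← e1]; linarith
      have := hexp _ _ hb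
      omega
    obtain ⟨c, hc⟩ : ∃ c, f * N = (f + i) + c := ⟨f * N - (f + i), by omega⟩
    set Mz : ℤ := (p : ℤ) ^ c - 1 - ∑ s ∈ Finset.range f, (p : ℤ) ^ s with hMzdef
    have key : ((o i + 1 : ℕ) : ℤ) = (p : ℤ) ^ i + (p : ℤ) ^ (f + i) * Mz := by
      push_cast
      rw [ho', hc, pow_add, hMzdef, pow_add]
      ring
    have hMnn : 0 ≤ Mz := by
      by_contra hneg
      push_neg at hneg
      have hM1 : Mz ≤ -1 := by omega
      have h1 : (p : ℤ) ^ (f + i) * Mz ≤ -(p : ℤ) ^ (f + i) := by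
        nlinarith [pow_pos (show (0:ℤ) < (p:ℤ) from by linarith) (f + i)]
      have h2 : (p : ℤ) ^ i < (p : ℤ) ^ (f + i) :=
        pow_lt_pow_right₀ (by linarith) (by omega)
      have h3 : (1 : ℤ) ≤ ((o i + 1 : ℕ) : ℤ) := by exact_mod_cast Nat.succ_le_succ (Nat.zero_le _)
      linarith
    refine ⟨Mz.toNat, ?_⟩
    have hcast : ((o i + 1 : ℕ) : ℤ) = ((p ^ i + p ^ (f + i) * Mz.toNat : ℕ) : ℤ) := by
      push_cast [Int.toNat_of_nonneg hMnn]
      exact key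
    exact_mod_cast hcast
  -- shape for (4)
  have S4 : ∀ i ∈ 𝒟, p ^ i ∣ rD i + 1 := by
    intro i hi
    have h := hrD i hi
    rw [hlbrZ i] at h
    have hnn : (0 : ℤ) ≤ (rD i : ℤ) := Int.natCast_nonneg _
    have hiN : i ≤ f * N := by
      have t1 : (p : ℤ) ^ i * ((St4c.Lsh p f ℓ i : ℤ) + 1) ≤ (p : ℤ) ^ i * ((p : ℤ) ^ f - 1) :=
        mul_le_mul_of_nonneg_left (by have := hLle i; linarith) (pow_nonneg (by linarith) i)
      have e1 : (p : ℤ) ^ i * ((St4c.Lsh p f ℓ i : ℤ) + 1)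
          = (p : ℤ) ^ i * (St4c.Lsh p f ℓ i : ℤ) + (p : ℤ) ^ i := by ring
      rw [e1] at t1
      have hb : (p : ℤ) ^ i < (p : ℤ) ^ (f * N) := by linarith
      have := hexp _ _ hb
      omega
    obtain ⟨c, hc⟩ : ∃ c, f * N = i + c := ⟨f * N - i, by omega⟩
    have key : ((rD i + 1 : ℕ) : ℤ)
        = (p : ℤ) ^ i * ((p : ℤ) ^ c + (St4c.Lsh p f ℓ i : ℤ) - (p : ℤ) ^ f + 1) := by
      push_cast
      rw [h, hc, pow_add]
      ring
    have : ((p ^ i : ℕ) : ℤ) ∣ ((rD i + 1 : ℕ) : ℤ) := by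
      refine ⟨(p : ℤ) ^ c + (St4c.Lsh p f ℓ i : ℤ) - (p : ℤ) ^ f + 1, ?_⟩
      rw [key]; push_cast; ring
    exact_mod_cast this
  -- shape for (5)
  have S5 : ∀ i ∈ ℰ, ∃ T : ℕ, nE i 0 + 1 = p ^ (i + 2 * f) * T ∧
      T ≡ St4c.Lsh p f ℓ i + 2 [MOD p] := by
    intro i hi
    have h := hnE0 i hi
    rw [hlbrZ i] at h
    have hb := hbE i hi
    obtain ⟨c, hc⟩ : ∃ c, f * N = (2 * f + i) + (c + 1) := ⟨f * N - (2 * f + i) - 1, by omega⟩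
    set Tz : ℤ := (p : ℤ) ^ (c + 1) + (St4c.Lsh p f ℓ i : ℤ) + 2 - 2 * (p : ℤ) ^ f with hTzdef
    have key : ((nE i 0 + 1 : ℕ) : ℤ) = (p : ℤ) ^ (i + 2 * f) * Tz := by
      push_cast
      rw [h, hc, hTzdef]
      rw [pow_add ((p : ℤ)) (2 * f + i) (c + 1), pow_add ((p : ℤ)) (2 * f) i,
        pow_add ((p : ℤ)) (i) (2 * f)]
      ring
    have h1 : (1 : ℤ) ≤ ((nE i 0 + 1 : ℕ) : ℤ) := by exact_mod_cast Nat.succ_le_succ (Nat.zero_le _)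
    have hTnn : 0 ≤ Tz := by
      by_contra hneg
      push_neg at hneg
      have hT1 : Tz ≤ -1 := by omega
      have hppos : (0 : ℤ) < (p : ℤ) ^ (i + 2 * f) :=
        pow_pos (by linarith) _
      nlinarith
    have hTmodZ : Tz ≡ (St4c.Lsh p f ℓ i : ℤ) + 2 [ZMOD (p : ℤ)] := by
      have ef : (p : ℤ) ^ f = (p : ℤ) ^ (f - 1) * (p : ℤ) := by
        rw [← pow_succ, show f - 1 + 1 = f from by omega]
      refine Int.modEq_iff_dvd.mpr ⟨2 * (p : ℤ) ^ (f - 1) - (p : ℤ) ^ c, ?_⟩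
      rw [hTzdef, ef, pow_succ]
      ring
    refine ⟨Tz.toNat, ?_, ?_⟩
    · have hcast : ((nE i 0 + 1 : ℕ) : ℤ) = ((p ^ (i + 2 * f) * Tz.toNat : ℕ) : ℤ) := by
        push_cast [Int.toNat_of_nonneg hTnn]
        exact key
      exact_mod_cast hcast
    · have : ((Tz.toNat : ℕ) : ℤ) ≡ ((St4c.Lsh p f ℓ i + 2 : ℕ) : ℤ) [ZMOD ((p : ℕ) : ℤ)] := by
        rw [Int.toNat_of_nonneg hTnn]
        push_cast
        exact hTmodZ
      exact Int.natCast_modEq_iff.mp this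
  -- shape for (6)
  have S6 : ∀ i ∈ ℰ, ∀ j, 1 ≤ j → j ≤ f →
      ∃ M : ℕ, nE i j + 1 = p ^ (i + 1 + f - j) + p ^ (i + 1 + 2 * f - j) * M := by
    intro i hi j hj1 hjf
    obtain ⟨j', rfl⟩ : ∃ j', j = j' + 1 := ⟨j - 1, by omega⟩
    obtain ⟨k, hk⟩ : ∃ k, f = (j' + 1) + k := ⟨f - (j' + 1), by omega⟩
    have hb := hbE i hi
    obtain ⟨c, hc⟩ : ∃ c, f * N = (i + f + k + 1) + c := ⟨f * N - (i + f + k + 1), by omega⟩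
    have h := hnEj i hi (j' + 1) hj1 hjf
    rw [hnE0 i hi, hlbrZ i, St4c.gg_closed p f (j' + 1) hjf,
      show f - (j' + 1) = k from by omega] at h
    set Sj : ℤ := ∑ s ∈ Finset.range (j' + 1), (p : ℤ) ^ s with hSj
    set Mz : ℤ := (p : ℤ) ^ c + (p : ℤ) ^ j' * ((St4c.Lsh p f ℓ i : ℤ) + 2)
        - 2 * (p : ℤ) ^ (f + j') + (p : ℤ) ^ f * Sj - Sj - 1 with hMzdef
    have key : ((nE (i) (j' + 1) + 1 : ℕ) : ℤ)
        = (p : ℤ) ^ (i + k + 1) + (p : ℤ) ^ (i + f + k + 1) * Mz := by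
      push_cast
      rw [h, hc, hMzdef, hk]
      ring
    have h1 : (1 : ℤ) ≤ ((nE (i) (j' + 1) + 1 : ℕ) : ℤ) := by
      exact_mod_cast Nat.succ_le_succ (Nat.zero_le _)
    have hMnn : 0 ≤ Mz := by
      by_contra hneg
      push_neg at hneg
      have hM1 : Mz ≤ -1 := by omega
      have hab : (p : ℤ) ^ (i + k + 1) < (p : ℤ) ^ (i + f + k + 1) :=
        pow_lt_pow_right₀ (by linarith) (by omega)
      have hppos : (0 : ℤ) < (p : ℤ) ^ (i + f + k + 1) := pow_pos (by linarith) _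
      nlinarith
    refine ⟨Mz.toNat, ?_⟩
    have hcast : ((nE (i) (j' + 1) + 1 : ℕ) : ℤ)
        = ((p ^ (i + 1 + f - (j' + 1)) + p ^ (i + 1 + 2 * f - (j' + 1)) * Mz.toNat : ℕ) : ℤ) := by
      push_cast [Int.toNat_of_nonneg hMnn]
      rw [show i + 1 + f - (j' + 1) = i + k + 1 from by omega,
        show i + 1 + 2 * f - (j' + 1) = i + f + k + 1 from by omega]
      exact key
    exact_mod_cast hcast
  -- ξ-congruence helpers
  have cpow : ∀ n : ℕ, n % f = 0 → ((p : ℤ) ^ n ≡ 1 [ZMOD ((p : ℤ) ^ f - 1)]) := by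
    intro n hn
    have := St4b.pow_modEq p f n
    rwa [hn, pow_zero] at this
  have cfN : (p : ℤ) ^ (f * N) ≡ 1 [ZMOD ((p : ℤ) ^ f - 1)] := cpow _ (Nat.mul_mod_right f N)
  have c2f : (p : ℤ) ^ (2 * f) ≡ 1 [ZMOD ((p : ℤ) ^ f - 1)] := cpow _ (Nat.mul_mod_left 2 f)
  have base7 : ∀ i ∈ ℰ, (ℓ : ℤ) ≡ (nE i 0 : ℤ) [ZMOD ((p : ℤ) ^ f - 1)] := by
    intro i hi
    have hlb := St4c.lbr_modEq p f ℓ i hp2 hf hℓpf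
    have c3 : 2 * (p : ℤ) ^ (2 * f + i) * ((p : ℤ) ^ f - 1) ≡ 0 [ZMOD ((p : ℤ) ^ f - 1)] :=
      Int.modEq_zero_iff_dvd.mpr ⟨2 * (p : ℤ) ^ (2 * f + i), by ring⟩
    have hcomb : (nE i 0 : ℤ) ≡ 1 - 1 + 1 * (ℓ : ℤ) - 0 [ZMOD ((p : ℤ) ^ f - 1)] := by
      rw [hnE0 i hi]
      exact ((cfN.sub_right 1).add (c2f.mul hlb)).sub c3
    have e : (1 : ℤ) - 1 + 1 * (ℓ : ℤ) - 0 = (ℓ : ℤ) := by ring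
    rw [e] at hcomb
    exact hcomb.symm
  have P7a : ∀ i ∈ ℰ, ∀ j, j ≤ f → (ℓ : ℤ) ≡ (nE i j : ℤ) [ZMOD ((p : ℤ) ^ f - 1)] := by
    intro i hi j hjf
    rcases Nat.eq_zero_or_pos j with hj0 | hjpos
    · subst hj0; exact base7 i hi
    · have hgg : ((p : ℤ) ^ f - 1) ∣ gg p f j := ⟨_, rfl⟩
      have c5 : (p : ℤ) ^ i * gg p f j ≡ 0 [ZMOD ((p : ℤ) ^ f - 1)] :=
        Int.modEq_zero_iff_dvd.mpr (hgg.mul_left _)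
      rw [hnEj i hi j hjpos hjf]
      have := (base7 i hi).add c5.symm
      simpa using this
  have P7b : ∀ i ∈ 𝒟, (ℓ : ℤ) ≡ (rD i : ℤ) [ZMOD ((p : ℤ) ^ f - 1)] := by
    intro i hi
    have hlb := St4c.lbr_modEq p f ℓ i hp2 hf hℓpf
    have cξi : (p : ℤ) ^ i * ((p : ℤ) ^ f - 1) ≡ 0 [ZMOD ((p : ℤ) ^ f - 1)] :=
      Int.modEq_zero_iff_dvd.mpr ⟨(p : ℤ) ^ i, by ring⟩
    have hcomb : (rD i : ℤ) ≡ 1 - 1 + (ℓ : ℤ) - 0 [ZMOD ((p : ℤ) ^ f - 1)] := by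
      rw [hrD i hi]
      exact ((cfN.sub_right 1).add hlb).sub cξi
    have e : (1 : ℤ) - 1 + (ℓ : ℤ) - 0 = (ℓ : ℤ) := by ring
    rw [e] at hcomb
    exact hcomb.symm
  -- part (1)
  have P1 : ∀ i ∈ ℰ,
      (∀ j j' : ℕ, j < j' → j' ≤ f → nE i j < nE i j') ∧
      (nE i 1 : ℤ) - (nE i 0 : ℤ) = (p : ℤ) ^ f * (p : ℤ) ^ i * ((p : ℤ) ^ f - 1) ^ 2 ∧
      (∀ j, 1 ≤ j → j < f →
        (nE i j : ℤ) + (p : ℤ) ^ (i + 1 + f - j) * ((p : ℤ) ^ f - 1) * ((p : ℤ) ^ (f - 1) + 1)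
          = (nE i (j + 1) : ℤ) + (p : ℤ) ^ (i + f - j) * ((p : ℤ) ^ f - 1)) := by
    intro i hi
    refine ⟨?_, ?_, ?_⟩
    · intro j j' hjj' hj'f
      have key : (nE i j : ℤ) < (nE i j' : ℤ) := by
        rcases Nat.eq_zero_or_pos j with hj0 | hjpos
        · subst hj0
          rw [hnEj i hi j' (by omega) hj'f]
          have hg := St4c.gg_pos p f j' hp2 hf (by omega)
          have hpp : (0 : ℤ) < (p : ℤ) ^ i := pow_pos (by linarith) i
          nlinarith
        · rw [hnEj i hi j hjpos (by omega), hnEj i hi j' (by omega) hj'f]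
          have := mul_lt_mul_of_pos_left (St4c.gg_strictMono p f hp2 hf hjj')
            (pow_pos (show (0:ℤ) < (p:ℤ) from by linarith) i)
          linarith
      exact_mod_cast key
    · rw [hnEj i hi 1 le_rfl hf, St4c.gg_one]
      ring
    · intro j hj1 hjf
      obtain ⟨k, hk⟩ : ∃ k, f = j + k + 1 := ⟨f - j - 1, by omega⟩
      rw [hnEj i hi j hj1 (by omega), hnEj i hi (j + 1) (by omega) (by omega), St4c.gg_succ]
      rw [show i + 1 + f - j = i + k + 2 from by omega,
        show f - 1 = j + k from by omega,
        show 2 * f - j = f + k + 1 from by omega,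
        show f + 1 - j = k + 2 from by omega,
        show f - j = k + 1 from by omega,
        show i + f - j = i + k + 1 from by omega]
      rw [hk]
      ring
  -- part (2)
  have P2 : ∀ m : ℕ, 1 ≤ m → m ≤ p ^ (f - 1) - 1 → Nat.choose (r + 1) m ≡ 0 [MOD p] := by
    intro m h1 h2
    refine St4.choose_zero hp (f - 1) _ m S2 fun hd => ?_
    have h3 := Nat.le_of_dvd (by omega) hd
    have h4 : 1 ≤ p ^ (f - 1) := Nat.one_le_pow _ _ hp0
    omega
  -- part (3)
  have P3 : ∀ i, i < f → Nat.choose (o i + 1) (p ^ i) ≡ 1 [MOD p] ∧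
      (∀ m : ℕ, 1 ≤ m → m ≤ p ^ i * p ^ f - 1 → m ≠ p ^ i →
        Nat.choose (o i + 1) m ≡ 0 [MOD p]) := by
    intro i hi
    obtain ⟨M, hM⟩ := S3 i hi
    have hs := St4.shape_one hp i (f + i) M (by omega)
    constructor
    · rw [hM]; exact hs.1
    · intro m h1 h2 h3
      rw [hM]
      refine hs.2 m h1 ?_ h3
      have he : p ^ i * p ^ f = p ^ (f + i) := by rw [pow_add]; ring
      have h4 : 1 ≤ p ^ (f + i) := Nat.one_le_pow _ _ hp0
      omega
  -- part (4)
  have P4 : ∀ i ∈ 𝒟, ∀ m : ℕ, 1 ≤ m → m ≤ p ^ i - 1 → Nat.choose (rD i + 1) m ≡ 0 [MOD p] := by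
    intro i hi m h1 h2
    refine St4.choose_zero hp i _ m (S4 i hi) fun hd => ?_
    have h3 := Nat.le_of_dvd (by omega) hd
    have h4 : 1 ≤ p ^ i := Nat.one_le_pow _ _ hp0
    omega
  -- part (5)
  have P5 : ∀ i ∈ ℰ, Nat.choose (nE i 0 + 1) (p ^ (i + 2 * f)) ≡ dig p f ℓ (i : ℤ) + 2 [MOD p] ∧
      (∀ m : ℕ, 1 ≤ m → m ≤ 2 * p ^ (i + 2 * f) - 1 → m ≠ p ^ (i + 2 * f) →
        Nat.choose (nE i 0 + 1) m ≡ 0 [MOD p]) := by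
    intro i hi
    obtain ⟨T, hT, hTm⟩ := S5 i hi
    constructor
    · rw [hT]
      refine (St4.choose_pow_one hp _ T).trans ?_
      exact hTm.trans (Nat.ModEq.add_right 2 (St4c.Lsh_modEq_dig p f ℓ i hf))
    · intro m h1 h2 h3
      rw [hT]
      refine St4.shape_T hp _ T m h1 ?_ h3
      have h4 : 1 ≤ p ^ (i + 2 * f) := Nat.one_le_pow _ _ hp0
      omega
  -- part (6)
  have P6 : ∀ i ∈ ℰ, ∀ j, 1 ≤ j → j ≤ f →
      Nat.choose (nE i j + 1) (p ^ (i + 1 + f - j)) ≡ 1 [MOD p] ∧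
      (∀ m : ℕ, 1 ≤ m → m ≤ p ^ (i + 1 + 2 * f - j) - 1 → m ≠ p ^ (i + 1 + f - j) →
        Nat.choose (nE i j + 1) m ≡ 0 [MOD p]) := by
    intro i hi j hj1 hjf
    obtain ⟨M, hM⟩ := S6 i hi j hj1 hjf
    have hab : i + 1 + f - j < i + 1 + 2 * f - j := by omega
    have hs := St4.shape_one hp _ _ M hab
    constructor
    · rw [hM]; exact hs.1
    · intro m h1 h2 h3
      rw [hM]
      refine hs.2 m h1 ?_ h3
      have h4 : 1 ≤ p ^ (i + 1 + 2 * f - j) := Nat.one_le_pow _ _ hp0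
      omega
  -- part (8)
  have P8 : ℓ * (p - 1) = (p - 2) * (p ^ f - 1) →
      ((ℓ : ℤ) ≡ (r : ℤ) [ZMOD ((p : ℤ) ^ f - 1)] ∧
        ∀ i, i < f → (ℓ : ℤ) ≡ (o i : ℤ) [ZMOD ((p : ℤ) ^ f - 1)]) := by
    intro h8
    have hpf2 : 2 ≤ p ^ f := by
      calc 2 ≤ p := hp2
        _ = p ^ 1 := (pow_one p).symm
        _ ≤ p ^ f := Nat.pow_le_pow_right hp0 hf
    have hlZ : (ℓ : ℤ) * ((p : ℤ) - 1) = ((p : ℤ) - 2) * ((p : ℤ) ^ f - 1) := by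
      have hcast := congrArg (fun n : ℕ => (n : ℤ)) h8
      simp only [Nat.cast_mul] at hcast
      rw [Nat.cast_sub (show 1 ≤ p from by omega), Nat.cast_sub hp2,
        Nat.cast_sub (show 1 ≤ p ^ f from by omega)] at hcast
      push_cast at hcast
      exact hcast
    have hgeom : (∑ s ∈ Finset.range f, (p : ℤ) ^ s) * ((p : ℤ) - 1) = (p : ℤ) ^ f - 1 :=
      geom_sum_mul _ f
    have hℓeq : (ℓ : ℤ) = ((p : ℤ) - 2) * ∑ s ∈ Finset.range f, (p : ℤ) ^ s := by
      have hz : (((ℓ : ℤ) - ((p : ℤ) - 2) * ∑ s ∈ Finset.range f, (p : ℤ) ^ s)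
          * ((p : ℤ) - 1)) = 0 := by
        linear_combination hlZ - ((p : ℤ) - 2) * hgeom
      rcases mul_eq_zero.mp hz with h | h
      · linarith
      · linarith
    have hlm : (ℓ : ℤ) ≡ -(∑ s ∈ Finset.range f, (p : ℤ) ^ s) [ZMOD ((p : ℤ) ^ f - 1)] := by
      refine Int.modEq_iff_dvd.mpr ⟨-1, ?_⟩
      rw [hℓeq]
      linear_combination -hgeom
    constructor
    · have hrm : (r : ℤ) ≡ -(∑ s ∈ Finset.range f, (p : ℤ) ^ s) [ZMOD ((p : ℤ) ^ f - 1)] := by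
        rw [hr]
        have c6 := St4c.pow_mul_geom_modEq p f hp2 hf (f - 1)
        have hcm := (cfN.sub_right (1 : ℤ)).sub c6
        have e : (1 : ℤ) - 1 - (∑ s ∈ Finset.range f, (p : ℤ) ^ s)
            = -(∑ s ∈ Finset.range f, (p : ℤ) ^ s) := by ring
        rwa [e] at hcm
      exact hlm.trans hrm.symm
    · intro i hi
      have cξ0 : ((p : ℤ) ^ f - 1) ≡ 0 [ZMOD ((p : ℤ) ^ f - 1)] :=
        Int.modEq_zero_iff_dvd.mpr dvd_rfl
      have cpf : (p : ℤ) ^ f ≡ 1 [ZMOD ((p : ℤ) ^ f - 1)] := cpow f (Nat.mod_self f)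
      have hin := cξ0.add (cpf.mul_right (∑ s ∈ Finset.range f, (p : ℤ) ^ s))
      have hmul := hin.mul_left ((p : ℤ) ^ i)
      have e2 : (p : ℤ) ^ i * ((0 : ℤ) + 1 * ∑ s ∈ Finset.range f, (p : ℤ) ^ s)
          = (p : ℤ) ^ i * ∑ s ∈ Finset.range f, (p : ℤ) ^ s := by ring
      rw [e2] at hmul
      have hfin := hmul.trans (St4c.pow_mul_geom_modEq p f hp2 hf i)
      have hoi : (o i : ℤ) ≡ 1 - 1 - (∑ s ∈ Finset.range f, (p : ℤ) ^ s)
          [ZMOD ((p : ℤ) ^ f - 1)] := by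
        rw [ho i hi]
        exact (cfN.sub_right 1).sub hfin
      have e3 : (1 : ℤ) - 1 - (∑ s ∈ Finset.range f, (p : ℤ) ^ s)
          = -(∑ s ∈ Finset.range f, (p : ℤ) ^ s) := by ring
      rw [e3] at hoi
      exact hlm.trans hoi.symm
  exact ⟨P1, P2, P3, P4, P5, P6, P7a, P7b, P8⟩
end

section
/- Let p be a prime, f ≥ 1 an integer, q = p^f, and let ℓ be an integer with 0 < ℓ < q−1. Then for every i ∈ E(ℓ) one has ℓ_{[i]} ≥ p^i·(q − (1 + p + ⋯ + p^{f−1})). -/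
/-- `i ∈ E(ℓ)`: there is an integer `r < i` with `m_r = p-1` and `m_s = p-2`
for all `r < s < i` (digits extended `f`-periodically). -/
def Eprop (p f ℓ : ℕ) (j : ℤ) : Prop :=
  ∃ r : ℤ, r < j ∧ dig p f ℓ r = p - 1 ∧ ∀ s : ℤ, r < s → s < j → dig p f ℓ s = p - 2

lemma dig_add_f_mul (p f ℓ : ℕ) (j t : ℤ) : dig p f ℓ (j + f * t) = dig p f ℓ j := by
  unfold dig; rw [Int.add_mul_emod_self_left]

lemma dig_add_f (p f ℓ : ℕ) (j : ℤ) : dig p f ℓ (j + f) = dig p f ℓ j := by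
  simpa using dig_add_f_mul p f ℓ j 1

/-- For `i ∈ E(ℓ)` one has `ℓ_{[i]} ≥ p^i (q − (1 + p + ⋯ + p^{f-1}))`. -/
theorem stmt5 (p f : ℕ) (hp : p.Prime) (hf : 1 ≤ f)
    (ℓ : ℕ) (hℓ0 : 0 < ℓ) (hℓ1 : ℓ < p ^ f - 1) :
    ∀ i : ℕ, i < f → Eprop p f ℓ (i : ℤ) →
      (lbr p f ℓ i : ℤ) ≥ (p : ℤ) ^ i * ((p : ℤ) ^ f - ∑ s ∈ Finset.range f, (p : ℤ) ^ s) := by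
  rintro i hif ⟨r, hri, hr, hbet⟩
  have hp2 : 2 ≤ p := hp.two_le
  have hpz2 : (2 : ℤ) ≤ (p : ℤ) := by exact_mod_cast hp2
  have hfz : (0:ℤ) < (f:ℤ) := by exact_mod_cast hf
  -- normalize r into [i - f, i)
  set q0 : ℤ := ((i:ℤ) - 1 - r) / f with hq0
  set r' : ℤ := r + f * q0 with hr'def
  have hiq : (f:ℤ) * q0 + ((i:ℤ)-1-r) % f = (i:ℤ) - 1 - r := Int.mul_ediv_add_emod _ _
  have hm0 : 0 ≤ ((i:ℤ)-1-r) % f := Int.emod_nonneg _ hfz.ne'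
  have hm1 : ((i:ℤ)-1-r) % f < f := Int.emod_lt_of_pos _ hfz
  have hq0nn : 0 ≤ q0 := Int.ediv_nonneg (by omega) hfz.le
  have hrr' : r ≤ r' := by
    have : 0 ≤ (f:ℤ) * q0 := mul_nonneg hfz.le hq0nn
    omega
  have hr'eq : r' = (i:ℤ) - 1 - ((i:ℤ)-1-r) % f := by omega
  have hr'lt : r' < i := by omega
  have hr'ge : (i:ℤ) - f ≤ r' := by omega
  have hr' : dig p f ℓ r' = p - 1 := by rw [hr'def, dig_add_f_mul]; exact hr
  -- the pivot position k
  set k : ℕ := (r' - ((i:ℤ) - f)).toNat with hkdef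
  have hkz : (k:ℤ) = r' - i + f := by
    rw [hkdef, Int.toNat_of_nonneg (by omega)]; ring
  have hkf : k < f := by
    have : (k:ℤ) < f := by omega
    exact_mod_cast this
  have hdk : dig p f ℓ ((i:ℤ) + k) = p - 1 := by
    have : (i:ℤ) + k = r' + f := by omega
    rw [this, dig_add_f]; exact hr'
  have hdj : ∀ j : ℕ, k < j → j < f → dig p f ℓ ((i:ℤ) + j) = p - 2 := by
    intro j hkj hjf
    have hjz : (k:ℤ) < (j:ℤ) := by exact_mod_cast hkj
    have hjfz : (j:ℤ) < (f:ℤ) := by exact_mod_cast hjf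
    have he : (i:ℤ) + j = ((i:ℤ) + j - f) + f := by ring
    rw [he, dig_add_f]
    exact hbet _ (by omega) (by omega)
  -- digit bounds / casts
  have hcast1 : ((p - 1 : ℕ) : ℤ) = (p:ℤ) - 1 := by omega
  have hcast2 : ((p - 2 : ℕ) : ℤ) = (p:ℤ) - 2 := by omega
  -- abbreviations
  set S : ℤ := ∑ j ∈ Finset.range f, (dig p f ℓ ((i:ℤ) + j) : ℤ) * (p:ℤ)^j with hS
  have hlbr : (lbr p f ℓ i : ℤ) = (p:ℤ)^i * S := by
    rw [hS, Finset.mul_sum]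
    unfold lbr
    push_cast
    apply Finset.sum_congr rfl
    intro j _
    rw [add_comm ((j:ℤ)) ((i:ℤ)), pow_add]
    ring
  set G : ℤ := ∑ s ∈ Finset.range f, (p:ℤ)^s with hG
  set Gk : ℤ := ∑ s ∈ Finset.range k, (p:ℤ)^s with hGk
  have hGgeo : G * ((p:ℤ) - 1) = (p:ℤ)^f - 1 := geom_sum_mul _ _
  have hGkgeo : Gk * ((p:ℤ) - 1) = (p:ℤ)^k - 1 := geom_sum_mul _ _
  have hGknn : 0 ≤ Gk := Finset.sum_nonneg fun s _ => by positivity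
  -- the difference sum
  set g : ℕ → ℤ := fun j => ((dig p f ℓ ((i:ℤ) + j) : ℤ) - ((p:ℤ) - 2)) * (p:ℤ)^j with hg
  have hsplit : S - ((p:ℤ) - 2) * G = ∑ j ∈ Finset.range f, g j := by
    rw [hS, hG, Finset.mul_sum, ← Finset.sum_sub_distrib]
    apply Finset.sum_congr rfl
    intro j _
    rw [hg]; ring
  have hT : 1 ≤ ∑ j ∈ Finset.range f, g j := by
    rw [Finset.range_eq_Ico, ← Finset.sum_Ico_consecutive g (Nat.zero_le k) hkf.le,
      Finset.sum_eq_sum_Ico_succ_bot hkf g]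
    have hz : ∑ j ∈ Finset.Ico (k+1) f, g j = 0 := by
      apply Finset.sum_eq_zero
      intro j hj
      rw [Finset.mem_Ico] at hj
      rw [hg]
      simp only []
      rw [hdj j (by omega) hj.2, hcast2, sub_self, zero_mul]
    have hgk : g k = (p:ℤ)^k := by
      rw [hg]; simp only []; rw [hdk, hcast1]; ring
    have hlow : -((p:ℤ)^k - 1) ≤ ∑ j ∈ Finset.Ico 0 k, g j := by
      have h1 : ∑ j ∈ Finset.Ico 0 k, (-((p:ℤ) - 2)) * (p:ℤ)^j ≤ ∑ j ∈ Finset.Ico 0 k, g j := by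
        apply Finset.sum_le_sum
        intro j _
        rw [hg]
        apply mul_le_mul_of_nonneg_right _ (by positivity)
        have : (0:ℤ) ≤ (dig p f ℓ ((i:ℤ) + j) : ℤ) := Int.natCast_nonneg _
        linarith
      have h2 : ∑ j ∈ Finset.Ico 0 k, (-((p:ℤ) - 2)) * (p:ℤ)^j = -(((p:ℤ) - 2) * Gk) := by
        rw [hGk, Finset.range_eq_Ico, ← Finset.mul_sum, neg_mul]
      have h3 : ((p:ℤ) - 2) * Gk ≤ ((p:ℤ) - 1) * Gk :=
        mul_le_mul_of_nonneg_right (by linarith) hGknn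
      have h4 : ((p:ℤ) - 1) * Gk = (p:ℤ)^k - 1 := by rw [mul_comm]; exact hGkgeo
      linarith
    linarith [hz, hgk, hlow]
  have hkey : (p:ℤ)^f - G ≤ S := by
    have h5 : ((p:ℤ) - 2) * G = (p:ℤ)^f - 1 - G := by linear_combination hGgeo
    linarith [hsplit ▸ hT]
  rw [hlbr, ge_iff_le]
  exact mul_le_mul_of_nonneg_left hkey (by positivity)
end

section
/- Let p be a prime, f ≥ 1, q = p^f, ξ = q−1, N ≥ 1 an integer, and let ℓ be an integer with 0 < ℓ < q−1, with base-p digits m_i and with ℓ^{(i)} := ℓ_{[i]}/p^i (an integer). Set 𝒟 = {0 ≤ i < f : m_i ≠ p−1} and ℰ = {i ∈ E(ℓ) : m_i ≠ p−2}. For i ∈ 𝒟 set r_i = q^N − 1 + ℓ_{[i]} − p^i·ξ; for 0 ≤ i < f set o_i = q^N − 1 − p^i·(ξ + q·(1+p+⋯+p^{f−1})); for i ∈ ℰ set m_i^{(0)} = q^N − 1 − 2·p^i·ξ + ℓ_{[i]}, and for 1 ≤ j ≤ f set p_{i,j} = p^{i+1−j} if i+1 ≥ j and p_{i,j} = p^{i+1−j+f}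 if i+1 < j, and m_i^{(j)} = q^N − 1 + p_{i,j}·(p^{j−1}·q·ℓ^{(i)} − ξ·(p^{j−1}·q + 1 − q·(1+p+⋯+p^{j−2}))). Then: (a) for i ∈ 𝒟, p^i divides r_i+1 but p^{i+1} does not; for i ∈ ℰ, p^i divides m_i^{(0)}+1 but p^{i+1} does not; for i ∈ ℰ and 1 ≤ j ≤ f, p_{i,j} divides m_i^{(j)}+1 but p·p_{i,j} does not; for 0 ≤ i < f, p^i divides o_i+1 but p^{i+1} does not. (b) r_{i1} ≠ r_{i2} for all distinct i1, i2 ∈ 𝒟; m_{i1}^{(j1)} ≠ m_{i2}^{(j2)} for all i1, i2 ∈ ℰ and 0 ≤ j1, j2 ≤ f with (i1,j1) ≠ (i2,j2); r_{i1} ≠ m_{i2}^{(j2)} for all i1 ∈ 𝒟, i2 ∈ ℰ and 0 ≤ j2 ≤ f; and if ℓ = (p−2)·ξ/(p−1) then o_{i1} ≠ r_{i2} for all 0 ≤ i1 < f and all i2 ∈ 𝒟. -/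
open scoped Classical

/-- `ℓ^{(i)} = ℓ_{[i]} / p^i`. -/
noncomputable def lrot (p f ℓ : ℕ) (i : ℕ) : ℕ :=
  ∑ j ∈ Finset.range f, dig p f ℓ ((j : ℤ) + (i : ℤ)) * p ^ j

/-- `r_i = q^N − 1 + ℓ_{[i]} − p^i ξ`. -/
noncomputable def rDi (p f ℓ N i : ℕ) : ℤ :=
  (p : ℤ) ^ (f * N) - 1 + (lbr p f ℓ i : ℤ) - (p : ℤ) ^ i * ((p : ℤ) ^ f - 1)

/-- `o_i = q^N − 1 − p^i (ξ + q (1 + p + ⋯ + p^{f-1}))`. -/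
noncomputable def oi (p f N i : ℕ) : ℤ :=
  (p : ℤ) ^ (f * N) - 1
    - (p : ℤ) ^ i * (((p : ℤ) ^ f - 1) + (p : ℤ) ^ f * ∑ s ∈ Finset.range f, (p : ℤ) ^ s)

/-- `m_i^{(0)} = q^N − 1 − 2 p^i ξ + ℓ_{[i]}`. -/
noncomputable def m0i (p f ℓ N i : ℕ) : ℤ :=
  (p : ℤ) ^ (f * N) - 1 - 2 * (p : ℤ) ^ i * ((p : ℤ) ^ f - 1) + (lbr p f ℓ i : ℤ)

/-- `p_{i,j}`. -/
noncomputable def pij (p f i j : ℕ) : ℕ :=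
  if j ≤ i + 1 then p ^ (i + 1 - j) else p ^ (i + 1 + f - j)

/-- `m_i^{(j)}` for `1 ≤ j ≤ f`. -/
noncomputable def mji (p f ℓ N i j : ℕ) : ℤ :=
  (p : ℤ) ^ (f * N) - 1 + (pij p f i j : ℤ) *
    ((p : ℤ) ^ (j - 1) * (p : ℤ) ^ f * (lrot p f ℓ i : ℤ)
      - ((p : ℤ) ^ f - 1) * ((p : ℤ) ^ (j - 1) * (p : ℤ) ^ f + 1
          - (p : ℤ) ^ f * ∑ s ∈ Finset.range (j - 1), (p : ℤ) ^ s))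

/-- `m_i^{(j)}` for `0 ≤ j ≤ f`. -/
noncomputable def Mij (p f ℓ N i j : ℕ) : ℤ :=
  if j = 0 then m0i p f ℓ N i else mji p f ℓ N i j

def eE (f i j : ℕ) : ℕ := if j ≤ i + 1 then i + 1 - j else i + 1 + f - j

noncomputable def SS (p t : ℕ) : ℤ := ∑ s ∈ Finset.range t, (p : ℤ) ^ s

noncomputable def BB (p f ℓ i t : ℕ) : ℤ :=
  (p : ℤ) ^ t * ((lrot p f ℓ i : ℤ) - (p : ℤ) ^ f + 1) + ((p : ℤ) ^ f - 1) * SS p t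

noncomputable def AA (p f ℓ i t : ℕ) : ℤ :=
  (p : ℤ) ^ f * BB p f ℓ i t - ((p : ℤ) ^ f - 1)

lemma eE_lt (f i j : ℕ) (h1 : 1 ≤ j) (hj : j ≤ f) (hi : i < f) : eE f i j < f := by
  unfold eE; split <;> omega

lemma eE_inj (f i1 i2 j : ℕ) (hi1 : i1 < f) (hi2 : i2 < f) (h1 : 1 ≤ j) (hj : j ≤ f)
    (h : eE f i1 j = eE f i2 j) : i1 = i2 := by
  unfold eE at h; split at h <;> split at h <;> omega

lemma pij_eq (p f i j : ℕ) : (pij p f i j : ℤ) = (p : ℤ) ^ (eE f i j) := by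
  unfold pij eE; split <;> push_cast <;> ring

lemma SS_split (p t1 t2 : ℕ) (h : t1 ≤ t2) :
    SS p t2 = SS p t1 + (p : ℤ) ^ t1 * SS p (t2 - t1) := by
  unfold SS
  rw [show t2 = t1 + (t2 - t1) by omega, Finset.sum_range_add, Finset.mul_sum]
  congr 2
  · congr 1; omega
  · funext k; rw [pow_add]

lemma SS_head (p u : ℕ) (hu : 1 ≤ u) : SS p u = 1 + (p : ℤ) * SS p (u - 1) := by
  unfold SS
  rw [show u = (u - 1) + 1 by omega, Finset.sum_range_succ', Finset.mul_sum]
  simp [pow_succ, mul_comm]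
  ring

lemma digit_sum (p x : ℕ) (k : ℕ) :
    ∑ j ∈ Finset.range k, x / p^j % p * p^j = x % p^k := by
  induction k with
  | zero => simp [Nat.mod_one]
  | succ k ih => rw [Finset.sum_range_succ, ih, pow_succ, Nat.mod_mul, mul_comm]

lemma dig_nat (p f ℓ : ℕ) (hf : 0 < f) (i : ℕ) : dig p f ℓ (i : ℤ) = ℓ / p ^ (i % f) % p := by
  have : ((i : ℤ) % (f : ℤ)).toNat = i % f := by
    have : ((i : ℤ) % (f : ℤ)) = ((i % f : ℕ) : ℤ) := by
      push_cast; ring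
    rw [this, Int.toNat_natCast]
  unfold dig
  rw [this]

lemma dig_nat_add (p f ℓ : ℕ) (hf : 0 < f) (a b : ℕ) :
    dig p f ℓ ((a : ℤ) + (b : ℤ)) = ℓ / p ^ ((a + b) % f) % p := by
  rw [← Nat.cast_add, dig_nat p f ℓ hf]

lemma lrot_eq (p f ℓ : ℕ) (hp : 0 < p) (hf : 0 < f) (hℓ : ℓ < p ^ f) (i : ℕ) :
    lrot p f ℓ i = ℓ / p ^ (i % f) + ℓ % p ^ (i % f) * p ^ (f - i % f) := by
  obtain ⟨i', hi'def, hi'⟩ : ∃ i', i % f = i' ∧ i' < f := ⟨i % f, rfl, Nat.mod_lt _ hf⟩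
  rw [hi'def]
  have hsum : lrot p f ℓ i = ∑ j ∈ Finset.range f, ℓ / p ^ ((j + i') % f) % p * p ^ j := by
    unfold lrot
    refine Finset.sum_congr rfl fun j hj => ?_
    rw [dig_nat_add p f ℓ hf]
    have e1 : (j + i) % f = (j + i') % f := by
      conv_lhs => rw [Nat.add_mod]
      conv_rhs => rw [Nat.add_mod]
      rw [hi'def, Nat.mod_eq_of_lt hi']
    rw [e1]
  have hsplit : ∑ j ∈ Finset.range f, ℓ / p ^ ((j + i') % f) % p * p ^ j
      = (∑ j ∈ Finset.range (f - i'), ℓ / p ^ ((j + i') % f) % p * p ^ j)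
        + ∑ j ∈ Finset.range i', ℓ / p ^ (((f - i') + j + i') % f) % p * p ^ ((f - i') + j) := by
    rw [← Finset.sum_range_add, Nat.sub_add_cancel hi'.le]
  have hA : (∑ j ∈ Finset.range (f - i'), ℓ / p ^ ((j + i') % f) % p * p ^ j) = ℓ / p ^ i' := by
    have h1 : ∀ j ∈ Finset.range (f - i'), ℓ / p ^ ((j + i') % f) % p * p ^ j
        = (ℓ / p ^ i') / p ^ j % p * p ^ j := by
      intro j hj
      simp only [Finset.mem_range] at hj
      have e1 : (j + i') % f = j + i' := Nat.mod_eq_of_lt (by omega)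
      rw [e1, Nat.div_div_eq_div_mul, ← pow_add, Nat.add_comm j i']
    rw [Finset.sum_congr rfl h1, digit_sum, Nat.mod_eq_of_lt]
    rw [Nat.div_lt_iff_lt_mul (Nat.pow_pos hp)]
    calc ℓ < p ^ f := hℓ
    _ = p ^ (f - i') * p ^ i' := by rw [← pow_add]; congr 1; omega
  have hB : (∑ j ∈ Finset.range i', ℓ / p ^ (((f - i') + j + i') % f) % p * p ^ ((f - i') + j))
      = ℓ % p ^ i' * p ^ (f - i') := by
    have h1 : ∀ j ∈ Finset.range i', ℓ / p ^ (((f - i') + j + i') % f) % p * p ^ ((f - i') + j)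
        = (ℓ / p ^ j % p * p ^ j) * p ^ (f - i') := by
      intro j hj
      simp only [Finset.mem_range] at hj
      have e2 : (f - i') + j + i' = f + j := by omega
      have e1 : ((f - i') + j + i') % f = j := by
        rw [e2, Nat.add_mod_left, Nat.mod_eq_of_lt (by omega)]
      rw [e1, pow_add]
      ring
    rw [Finset.sum_congr rfl h1, ← Finset.sum_mul, digit_sum]
  rw [hsum, hsplit, hA, hB]

lemma lrot_pos (p f ℓ : ℕ) (hp : 0 < p) (hf : 0 < f) (hℓ0 : 0 < ℓ) (hℓ : ℓ < p ^ f) (i : ℕ) :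
    0 < lrot p f ℓ i := by
  rw [lrot_eq p f ℓ hp hf hℓ i]
  have hc : 0 < p ^ (f - i % f) := Nat.pow_pos hp
  rcases Nat.eq_zero_or_pos (ℓ / p ^ (i % f)) with ha | ha
  · have hdm := Nat.div_add_mod ℓ (p ^ (i % f))
    have hb : 0 < ℓ % p ^ (i % f) := by
      rcases Nat.eq_zero_or_pos (ℓ % p ^ (i % f)) with hb | hb
      · rw [ha, hb, Nat.mul_zero, Nat.add_zero] at hdm; omega
      · exact hb
    calc 0 < ℓ % p ^ (i % f) * p ^ (f - i % f) := Nat.mul_pos hb hc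
    _ ≤ _ := Nat.le_add_left _ _
  · exact Nat.add_pos_left ha _

lemma lrot_le (p f ℓ : ℕ) (hp : 0 < p) (hf : 0 < f) (hℓ : ℓ + 2 ≤ p ^ f) (i : ℕ) :
    lrot p f ℓ i + 2 ≤ p ^ f := by
  rw [lrot_eq p f ℓ hp hf (by omega) i]
  have hdm := Nat.div_add_mod ℓ (p ^ (i % f))
  have hP1 : 0 < p ^ (i % f) := Nat.pow_pos hp
  have hP2 : 0 < p ^ (f - i % f) := Nat.pow_pos hp
  have hPP : p ^ (i % f) * p ^ (f - i % f) = p ^ f := by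
    rw [← pow_add]; congr 1
    have : i % f < f := Nat.mod_lt _ hf
    omega
  obtain ⟨a, hadef⟩ : ∃ a, ℓ / p ^ (i % f) = a := ⟨_, rfl⟩
  obtain ⟨b, hbdef⟩ : ∃ b, ℓ % p ^ (i % f) = b := ⟨_, rfl⟩
  rw [hadef, hbdef] at hdm ⊢
  have hblt : b < p ^ (i % f) := hbdef ▸ Nat.mod_lt _ hP1
  have halt : a < p ^ (f - i % f) := by
    by_contra hcon
    push_neg at hcon
    have : p ^ (i % f) * p ^ (f - i % f) ≤ p ^ (i % f) * a := Nat.mul_le_mul_left _ hcon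
    omega
  rcases Nat.lt_or_ge (b + 1) (p ^ (i % f)) with hb1 | hb1
  · -- b + 2 ≤ P1
    have h1 : (b + 1) * p ^ (f - i % f) ≤ (p ^ (i % f) - 1) * p ^ (f - i % f) :=
      Nat.mul_le_mul_right _ (by omega)
    have h2 : (p ^ (i % f) - 1) * p ^ (f - i % f) = p ^ f - p ^ (f - i % f) := by
      rw [Nat.sub_mul, hPP, Nat.one_mul]
    nlinarith
  · have hb2 : b + 1 = p ^ (i % f) := by omega
    have ha2 : a + 2 ≤ p ^ (f - i % f) := by
      by_contra hcon
      push_neg at hcon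
      have ha3 : p ^ (f - i % f) ≤ a + 1 := by omega
      have : p ^ (i % f) * p ^ (f - i % f) ≤ p ^ (i % f) * (a + 1) := Nat.mul_le_mul_left _ ha3
      rw [Nat.mul_add, Nat.mul_one] at this
      omega
    have h1 : b * p ^ (f - i % f) = p ^ f - p ^ (f - i % f) := by
      rw [show b = p ^ (i % f) - 1 by omega, Nat.sub_mul, Nat.one_mul, hPP]
    have hP2le : p ^ (f - i % f) ≤ p ^ f := Nat.pow_le_pow_right hp (by omega)
    rw [h1]
    omega

lemma lrot_mod (p f ℓ : ℕ) (hp : 0 < p) (hf : 0 < f) (hℓ : ℓ < p ^ f) (i : ℕ) :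
    lrot p f ℓ i % p = dig p f ℓ (i : ℤ) := by
  rw [lrot_eq p f ℓ hp hf hℓ i, dig_nat p f ℓ hf]
  have hif : i % f < f := Nat.mod_lt _ hf
  rw [show p ^ (f - i % f) = p ^ (f - i % f - 1) * p by rw [← pow_succ]; congr 1; omega]
  rw [← Nat.mul_assoc, Nat.add_mul_mod_self_right]

lemma lbr_eq (p f ℓ : ℕ) (i : ℕ) : lbr p f ℓ i = p ^ i * lrot p f ℓ i := by
  unfold lbr lrot
  rw [Finset.mul_sum]
  refine Finset.sum_congr rfl fun j hj => ?_
  rw [pow_add]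
  ring


lemma lbr_cast (p f ℓ i : ℕ) : (lbr p f ℓ i : ℤ) = (p : ℤ) ^ i * (lrot p f ℓ i : ℤ) := by
  rw [lbr_eq]; push_cast; ring

lemma pow_split (p : ℕ) (a n : ℕ) (h : a ≤ n) :
    (p : ℤ) ^ n = (p : ℤ) ^ a * (p : ℤ) ^ (n - a) := by
  rw [← pow_add]; congr 1; omega

lemma rDi_decomp (p f ℓ N i : ℕ) (hi : i < f) (hN : 1 ≤ N) :
    rDi p f ℓ N i + 1
      = (p : ℤ) ^ i * ((p : ℤ) ^ (f * N - i) + (lrot p f ℓ i : ℤ) - ((p : ℤ) ^ f - 1)) := by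
  have hfN : f ≤ f * N := Nat.le_mul_of_pos_right f (by omega)
  unfold rDi
  rw [lbr_cast, pow_split p i (f * N) (by omega)]
  ring

lemma m0i_decomp (p f ℓ N i : ℕ) (hi : i < f) (hN : 1 ≤ N) :
    m0i p f ℓ N i + 1
      = (p : ℤ) ^ i * ((p : ℤ) ^ (f * N - i) + (lrot p f ℓ i : ℤ) - 2 * ((p : ℤ) ^ f - 1)) := by
  have hfN : f ≤ f * N := Nat.le_mul_of_pos_right f (by omega)
  unfold m0i
  rw [lbr_cast, pow_split p i (f * N) (by omega)]
  ring

lemma oi_decomp (p f N i : ℕ) (hi : i < f) (hN : 1 ≤ N) :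
    oi p f N i + 1
      = (p : ℤ) ^ i * ((p : ℤ) ^ (f * N - i) - ((p : ℤ) ^ f - 1) - (p : ℤ) ^ f * SS p f) := by
  have hfN : f ≤ f * N := Nat.le_mul_of_pos_right f (by omega)
  unfold oi SS
  rw [pow_split p i (f * N) (by omega)]
  ring

lemma mji_decomp (p f ℓ N i j : ℕ) (hi : i < f) (h1 : 1 ≤ j) (hj : j ≤ f) (hN : 1 ≤ N) :
    mji p f ℓ N i j + 1
      = (p : ℤ) ^ (eE f i j) * ((p : ℤ) ^ (f * N - eE f i j) + AA p f ℓ i (j - 1)) := by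
  have hfN : f ≤ f * N := Nat.le_mul_of_pos_right f (by omega)
  have he : eE f i j < f := eE_lt f i j h1 hj hi
  unfold mji
  rw [pij_eq, pow_split p (eE f i j) (f * N) (by omega)]
  unfold AA BB SS
  ring

/-- Exact `p`-divisibilities and pairwise distinctness of the exponents
`r_i`, `o_i`, `m_i^{(j)}` (with `𝒟 = {i < f : m_i ≠ p−1}`,
`ℰ = {i ∈ E(ℓ) : m_i ≠ p−2}`). -/
theorem stmt6 (p f : ℕ) (hp : p.Prime) (hf : 1 ≤ f) (N : ℕ) (hN : 1 ≤ N)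
    (ℓ : ℕ) (hℓ0 : 0 < ℓ) (hℓ1 : ℓ < p ^ f - 1) :
    -- (a)
    ((∀ i, i < f → dig p f ℓ (i : ℤ) ≠ p - 1 →
        ((p : ℤ) ^ i ∣ rDi p f ℓ N i + 1) ∧ ¬ ((p : ℤ) ^ (i + 1) ∣ rDi p f ℓ N i + 1)) ∧
      (∀ i, i < f → Eprop p f ℓ (i : ℤ) → dig p f ℓ (i : ℤ) ≠ p - 2 →
        ((p : ℤ) ^ i ∣ m0i p f ℓ N i + 1) ∧ ¬ ((p : ℤ) ^ (i + 1) ∣ m0i p f ℓ N i + 1)) ∧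
      (∀ i, i < f → Eprop p f ℓ (i : ℤ) → dig p f ℓ (i : ℤ) ≠ p - 2 →
        ∀ j, 1 ≤ j → j ≤ f →
          ((pij p f i j : ℤ) ∣ mji p f ℓ N i j + 1) ∧
          ¬ ((p : ℤ) * (pij p f i j : ℤ) ∣ mji p f ℓ N i j + 1)) ∧
      (∀ i, i < f →
        ((p : ℤ) ^ i ∣ oi p f N i + 1) ∧ ¬ ((p : ℤ) ^ (i + 1) ∣ oi p f N i + 1))) ∧
    -- (b)
    ((∀ i1 i2, i1 < f → i2 < f → dig p f ℓ (i1 : ℤ) ≠ p - 1 → dig p f ℓ (i2 : ℤ) ≠ p - 1 →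
        i1 ≠ i2 → rDi p f ℓ N i1 ≠ rDi p f ℓ N i2) ∧
      (∀ i1 i2, i1 < f → i2 < f →
        Eprop p f ℓ (i1 : ℤ) → dig p f ℓ (i1 : ℤ) ≠ p - 2 →
        Eprop p f ℓ (i2 : ℤ) → dig p f ℓ (i2 : ℤ) ≠ p - 2 →
        ∀ j1 j2, j1 ≤ f → j2 ≤ f → (i1, j1) ≠ (i2, j2) →
          Mij p f ℓ N i1 j1 ≠ Mij p f ℓ N i2 j2) ∧
      (∀ i1 i2, i1 < f → i2 < f → dig p f ℓ (i1 : ℤ) ≠ p - 1 →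
        Eprop p f ℓ (i2 : ℤ) → dig p f ℓ (i2 : ℤ) ≠ p - 2 →
        ∀ j2, j2 ≤ f → rDi p f ℓ N i1 ≠ Mij p f ℓ N i2 j2) ∧
      (ℓ * (p - 1) = (p - 2) * (p ^ f - 1) →
        ∀ i1 i2, i1 < f → i2 < f → dig p f ℓ (i2 : ℤ) ≠ p - 1 →
          oi p f N i1 ≠ rDi p f ℓ N i2)) := by
  
  have hp2 : 2 ≤ p := hp.two_le
  haveI : Fact p.Prime := ⟨hp⟩
  have hp0 : 0 < p := by omega
  have hq2 : 2 ≤ p ^ f := by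
    calc 2 ≤ p := hp2
    _ = p ^ 1 := (pow_one p).symm
    _ ≤ p ^ f := Nat.pow_le_pow_right hp0 hf
  have hℓq : ℓ < p ^ f := by omega
  have hℓ2 : ℓ + 2 ≤ p ^ f := by omega
  have hPne : ((p : ℤ)) ≠ 0 := Int.natCast_ne_zero.2 (by omega)
  have hfN : f ≤ f * N := Nat.le_mul_of_pos_right f (by omega)
  have hQ2 : (2 : ℤ) ≤ (p : ℤ) ^ f := by exact_mod_cast hq2
  have hm : ∀ i : ℕ, dig p f ℓ (i : ℤ) < p := fun i => by
    rw [dig_nat p f ℓ (by omega)]; exact Nat.mod_lt _ hp0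
  have hL1 : ∀ i, 1 ≤ lrot p f ℓ i := fun i => lrot_pos p f ℓ hp0 (by omega) hℓ0 hℓq i
  have hL2 : ∀ i, lrot p f ℓ i + 2 ≤ p ^ f := fun i => lrot_le p f ℓ hp0 (by omega) hℓ2 i
  have hL1' : ∀ i, (1 : ℤ) ≤ (lrot p f ℓ i : ℤ) := fun i => by exact_mod_cast hL1 i
  have hL2' : ∀ i, (lrot p f ℓ i : ℤ) ≤ (p : ℤ) ^ f - 2 := fun i => by
    have h : ((lrot p f ℓ i + 2 : ℕ) : ℤ) ≤ ((p ^ f : ℕ) : ℤ) := by exact_mod_cast hL2 i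
    push_cast at h; linarith
  -- casting into ZMod p
  have hcastLN : ∀ i : ℕ, ((lrot p f ℓ i : ℕ) : ZMod p)
      = ((dig p f ℓ (i : ℤ) : ℕ) : ZMod p) := fun i => by
    rw [← lrot_mod p f ℓ hp0 (by omega) hℓq i, ZMod.natCast_mod]
  have notdvd : ∀ (c : ℤ) (r : ℕ), (c : ZMod p) = (r : ZMod p) → 0 < r → r < p →
      ¬ ((p : ℤ) ∣ c) := by
    intro c r hc h1 h2 hd
    rw [← ZMod.intCast_zmod_eq_zero_iff_dvd] at hd
    rw [hc] at hd
    have h3 : p ∣ r := (ZMod.natCast_eq_zero_iff r p).1 hd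
    have := Nat.le_of_dvd h1 h3
    omega
  have nd_shift : ∀ (c : ℤ) (i s : ℕ), 1 ≤ s → s ≤ 2 → dig p f ℓ (i : ℤ) + s ≠ p →
      (c : ZMod p) = ((dig p f ℓ (i : ℤ) + s : ℕ) : ZMod p) → ¬ ((p : ℤ) ∣ c) := by
    intro c i s hs1 hs2 hsp hc
    have hdig := hm i
    rcases Nat.lt_or_ge (dig p f ℓ (i : ℤ) + s) p with h | h
    · exact notdvd c _ hc (by omega) h
    · have hps : dig p f ℓ (i : ℤ) + s = p + 1 := by omega
      refine notdvd c 1 ?_ (by omega) (by omega)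
      rw [hc, hps]
      push_cast
      rw [ZMod.natCast_self]
      ring
  have pdvd_cancel : ∀ (c : ℤ) (a : ℕ), ¬ ((p : ℤ) ∣ c) →
      ¬ ((p : ℤ) ^ (a + 1) ∣ (p : ℤ) ^ a * c) := by
    intro c a hc hd
    rw [pow_succ] at hd
    exact hc ((mul_dvd_mul_iff_left (pow_ne_zero a hPne)).1 hd)
  -- cofactor casts
  have castCr : ∀ i, i < f → ((((p : ℤ) ^ (f * N - i) + (lrot p f ℓ i : ℤ)
        - ((p : ℤ) ^ f - 1) : ℤ)) : ZMod p) = ((dig p f ℓ (i : ℤ) + 1 : ℕ) : ZMod p) := by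
    intro i hi
    push_cast
    rw [ZMod.natCast_self, hcastLN i,
      zero_pow (by omega : f * N - i ≠ 0), zero_pow (by omega : f ≠ 0)]
    push_cast
    ring
  have castC0 : ∀ i, i < f → ((((p : ℤ) ^ (f * N - i) + (lrot p f ℓ i : ℤ)
        - 2 * ((p : ℤ) ^ f - 1) : ℤ)) : ZMod p) = ((dig p f ℓ (i : ℤ) + 2 : ℕ) : ZMod p) := by
    intro i hi
    push_cast
    rw [ZMod.natCast_self, hcastLN i,
      zero_pow (by omega : f * N - i ≠ 0), zero_pow (by omega : f ≠ 0)]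
    push_cast
    ring
  have castCj : ∀ i j, i < f → 1 ≤ j → j ≤ f →
      ((((p : ℤ) ^ (f * N - eE f i j) + AA p f ℓ i (j - 1) : ℤ)) : ZMod p)
        = ((1 : ℕ) : ZMod p) := by
    intro i j hi h1 hj
    have he := eE_lt f i j h1 hj hi
    unfold AA
    push_cast
    rw [ZMod.natCast_self,
      zero_pow (by omega : f * N - eE f i j ≠ 0), zero_pow (by omega : f ≠ 0)]
    ring
  have castCo : ∀ i, i < f → ((((p : ℤ) ^ (f * N - i) - ((p : ℤ) ^ f - 1)
        - (p : ℤ) ^ f * SS p f : ℤ)) : ZMod p) = ((1 : ℕ) : ZMod p) := by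
    intro i hi
    push_cast
    rw [ZMod.natCast_self,
      zero_pow (by omega : f * N - i ≠ 0), zero_pow (by omega : f ≠ 0)]
    ring
  have castSS : ∀ u, 1 ≤ u → ((SS p u : ℤ) : ZMod p) = 1 := by
    intro u hu
    rw [SS_head p u hu]
    push_cast
    rw [ZMod.natCast_self]
    ring
  -- non-divisibility of cofactors
  have nd_r : ∀ i, i < f → dig p f ℓ (i : ℤ) ≠ p - 1 →
      ¬ ((p : ℤ) ∣ ((p : ℤ) ^ (f * N - i) + (lrot p f ℓ i : ℤ) - ((p : ℤ) ^ f - 1))) :=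
    fun i hi hd => nd_shift _ i 1 le_rfl one_le_two (by have := hm i; omega) (castCr i hi)
  have nd_0 : ∀ i, i < f → dig p f ℓ (i : ℤ) ≠ p - 2 →
      ¬ ((p : ℤ) ∣ ((p : ℤ) ^ (f * N - i) + (lrot p f ℓ i : ℤ) - 2 * ((p : ℤ) ^ f - 1))) :=
    fun i hi hd => nd_shift _ i 2 one_le_two le_rfl (by have := hm i; omega) (castC0 i hi)
  have nd_j : ∀ i j, i < f → 1 ≤ j → j ≤ f →
      ¬ ((p : ℤ) ∣ ((p : ℤ) ^ (f * N - eE f i j) + AA p f ℓ i (j - 1))) :=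
    fun i j hi h1 hj => notdvd _ 1 (castCj i j hi h1 hj) one_pos (by omega)
  have nd_o : ∀ i, i < f →
      ¬ ((p : ℤ) ∣ ((p : ℤ) ^ (f * N - i) - ((p : ℤ) ^ f - 1) - (p : ℤ) ^ f * SS p f)) :=
    fun i hi => notdvd _ 1 (castCo i hi) one_pos (by omega)
  -- valuation distinctness helper
  have vneq : ∀ (x y c d : ℤ) (a b : ℕ), x = (p : ℤ) ^ a * c → y = (p : ℤ) ^ b * d →
      ¬ ((p : ℤ) ∣ c) → ¬ ((p : ℤ) ∣ d) → a ≠ b → x ≠ y := by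
    intro x y c d a b hx hy hc hd hab heq
    rcases Nat.lt_or_ge a b with h | h
    · apply pdvd_cancel c a hc
      rw [← hx, heq, hy]
      exact dvd_mul_of_dvd_left (pow_dvd_pow _ (by omega)) d
    · apply pdvd_cancel d b hd
      rw [← hy, ← heq, hx]
      exact dvd_mul_of_dvd_left (pow_dvd_pow _ (by omega)) c
  have cancel : ∀ (c d : ℤ) (a : ℕ), (p : ℤ) ^ a * c = (p : ℤ) ^ a * d → c = d :=
    fun c d a h => mul_left_cancel₀ (pow_ne_zero a hPne) h
  -- the BB distinctness core (for j1 ≠ j2, both ≥ 1)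
  have hBBne : ∀ i1 i2 t1 t2 : ℕ, dig p f ℓ (i1 : ℤ) ≠ p - 2 → t1 < t2 →
      BB p f ℓ i1 t1 ≠ BB p f ℓ i2 t2 := by
    intro i1 i2 t1 t2 hd1 ht heq
    have hu : 1 ≤ t2 - t1 := by omega
    have hsplit := SS_split p t1 t2 (by omega)
    have hps := pow_split p t1 t2 (by omega)
    have hbr : (p : ℤ) ^ t1 * (((lrot p f ℓ i1 : ℤ) - (p : ℤ) ^ f + 1)
        - (p : ℤ) ^ (t2 - t1) * ((lrot p f ℓ i2 : ℤ) - (p : ℤ) ^ f + 1)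
        - ((p : ℤ) ^ f - 1) * SS p (t2 - t1)) = 0 := by
      unfold BB at heq
      rw [hsplit, hps] at heq
      ring_nf
      ring_nf at heq
      linarith
    have hbr0 : ((lrot p f ℓ i1 : ℤ) - (p : ℤ) ^ f + 1)
        - (p : ℤ) ^ (t2 - t1) * ((lrot p f ℓ i2 : ℤ) - (p : ℤ) ^ f + 1)
        - ((p : ℤ) ^ f - 1) * SS p (t2 - t1) = 0 := by
      rcases mul_eq_zero.1 hbr with h | h
      · exact absurd h (pow_ne_zero t1 hPne)
      · exact h
    have hcast : ((((lrot p f ℓ i1 : ℤ) - (p : ℤ) ^ f + 1)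
        - (p : ℤ) ^ (t2 - t1) * ((lrot p f ℓ i2 : ℤ) - (p : ℤ) ^ f + 1)
        - ((p : ℤ) ^ f - 1) * SS p (t2 - t1) : ℤ) : ZMod p)
          = ((dig p f ℓ (i1 : ℤ) + 2 : ℕ) : ZMod p) := by
      push_cast
      rw [ZMod.natCast_self, hcastLN i1, castSS (t2 - t1) hu,
        zero_pow (by omega : t2 - t1 ≠ 0), zero_pow (by omega : f ≠ 0)]
      push_cast
      ring
    have := nd_shift _ i1 2 one_le_two le_rfl (by have := hm i1; omega) hcast
    rw [hbr0] at this
    exact this (dvd_zero _)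
  -- the Q-divisibility helpers
  have hQdvdL : ∀ i2 j2 (c : ℤ), i2 < f → 1 ≤ j2 → j2 ≤ f →
      c - ((p : ℤ) ^ f - 1) * 0 = AA p f ℓ i2 (j2 - 1) → ¬ ((p : ℤ) ^ f ∣ c + ((p : ℤ) ^ f - 1)) →
      False := by
    intro i2 j2 c hi2 h1 hj2 hc hnd
    apply hnd
    unfold AA at hc
    exact ⟨BB p f ℓ i2 (j2 - 1), by linarith⟩
  constructor
  · refine ⟨?_, ?_, ?_, ?_⟩
    · intro i hi hd
      rw [rDi_decomp p f ℓ N i hi hN]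
      exact ⟨dvd_mul_right _ _, pdvd_cancel _ i (nd_r i hi hd)⟩
    · intro i hi _ hd
      rw [m0i_decomp p f ℓ N i hi hN]
      exact ⟨dvd_mul_right _ _, pdvd_cancel _ i (nd_0 i hi hd)⟩
    · intro i hi _ hd j h1 hj
      rw [mji_decomp p f ℓ N i j hi h1 hj hN, pij_eq,
        show (p : ℤ) * (p : ℤ) ^ (eE f i j) = (p : ℤ) ^ (eE f i j + 1) by rw [pow_succ]; ring]
      exact ⟨dvd_mul_right _ _, pdvd_cancel _ _ (nd_j i j hi h1 hj)⟩
    · intro i hi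
      rw [oi_decomp p f N i hi hN]
      exact ⟨dvd_mul_right _ _, pdvd_cancel _ i (nd_o i hi)⟩
  · have hr_ne_mj : ∀ i1 i2 j2, i1 < f → i2 < f → dig p f ℓ (i1 : ℤ) ≠ p - 1 →
        1 ≤ j2 → j2 ≤ f → rDi p f ℓ N i1 + 1 ≠ mji p f ℓ N i2 j2 + 1 := by
      intro i1 i2 j2 hi1 hi2 hd1 h1 hj2 heq
      by_cases he : i1 = eE f i2 j2
      · rw [rDi_decomp p f ℓ N i1 hi1 hN, mji_decomp p f ℓ N i2 j2 hi2 h1 hj2 hN, ← he] at heq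
        have hc := cancel _ _ i1 heq
        have hc2 : (lrot p f ℓ i1 : ℤ) = AA p f ℓ i2 (j2 - 1) + ((p : ℤ) ^ f - 1) := by
          linarith [hc]
        unfold AA at hc2
        have hdvd : (p : ℤ) ^ f ∣ (lrot p f ℓ i1 : ℤ) := ⟨BB p f ℓ i2 (j2 - 1), by linarith⟩
        have := Int.le_of_dvd (by linarith [hL1' i1]) hdvd
        linarith [hL2' i1]
      · exact vneq _ _ _ _ i1 (eE f i2 j2) (rDi_decomp p f ℓ N i1 hi1 hN)
          (mji_decomp p f ℓ N i2 j2 hi2 h1 hj2 hN) (nd_r i1 hi1 hd1)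
          (nd_j i2 j2 hi2 h1 hj2) he heq
    have hm0_ne_mj : ∀ i1 i2 j2, i1 < f → i2 < f → dig p f ℓ (i1 : ℤ) ≠ p - 2 →
        1 ≤ j2 → j2 ≤ f → m0i p f ℓ N i1 + 1 ≠ mji p f ℓ N i2 j2 + 1 := by
      intro i1 i2 j2 hi1 hi2 hd1 h1 hj2 heq
      by_cases he : i1 = eE f i2 j2
      · rw [m0i_decomp p f ℓ N i1 hi1 hN, mji_decomp p f ℓ N i2 j2 hi2 h1 hj2 hN, ← he] at heq
        have hc := cancel _ _ i1 heq
        have hc2 : (lrot p f ℓ i1 : ℤ) + 1 = AA p f ℓ i2 (j2 - 1) + 2 * ((p : ℤ) ^ f - 1) + 1 := by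
          linarith [hc]
        unfold AA at hc2
        have hdvd : (p : ℤ) ^ f ∣ (lrot p f ℓ i1 : ℤ) + 1 := ⟨BB p f ℓ i2 (j2 - 1) + 1, by linarith⟩
        have := Int.le_of_dvd (by linarith [hL1' i1]) hdvd
        linarith [hL2' i1]
      · exact vneq _ _ _ _ i1 (eE f i2 j2) (m0i_decomp p f ℓ N i1 hi1 hN)
          (mji_decomp p f ℓ N i2 j2 hi2 h1 hj2 hN) (nd_0 i1 hi1 hd1)
          (nd_j i2 j2 hi2 h1 hj2) he heq
    have hmj_ne_mj : ∀ i1 i2 j1 j2, i1 < f → i2 < f →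
        dig p f ℓ (i1 : ℤ) ≠ p - 2 → dig p f ℓ (i2 : ℤ) ≠ p - 2 →
        1 ≤ j1 → j1 ≤ f → 1 ≤ j2 → j2 ≤ f → (i1, j1) ≠ (i2, j2) →
        mji p f ℓ N i1 j1 + 1 ≠ mji p f ℓ N i2 j2 + 1 := by
      intro i1 i2 j1 j2 hi1 hi2 hd1 hd2 h11 hj1 h12 hj2 hpair heq
      by_cases he : eE f i1 j1 = eE f i2 j2
      · rw [mji_decomp p f ℓ N i1 j1 hi1 h11 hj1 hN,
          mji_decomp p f ℓ N i2 j2 hi2 h12 hj2 hN, ← he] at heq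
        have hc := cancel _ _ (eE f i1 j1) heq
        have hAA : AA p f ℓ i1 (j1 - 1) = AA p f ℓ i2 (j2 - 1) := by
          linarith [hc]
        have hBB : BB p f ℓ i1 (j1 - 1) = BB p f ℓ i2 (j2 - 1) := by
          unfold AA at hAA
          have h2 : (p : ℤ) ^ f * BB p f ℓ i1 (j1 - 1) = (p : ℤ) ^ f * BB p f ℓ i2 (j2 - 1) := by
            linarith
          exact mul_left_cancel₀ (by positivity) h2
        rcases Nat.lt_trichotomy j1 j2 with hj | hj | hj
        · exact hBBne i1 i2 (j1 - 1) (j2 - 1) hd1 (by omega) hBB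
        · exact hpair (by rw [eE_inj f i1 i2 j1 hi1 hi2 h11 hj1 (hj ▸ he), hj])
        · exact hBBne i2 i1 (j2 - 1) (j1 - 1) hd2 (by omega) hBB.symm
      · exact vneq _ _ _ _ (eE f i1 j1) (eE f i2 j2)
          (mji_decomp p f ℓ N i1 j1 hi1 h11 hj1 hN)
          (mji_decomp p f ℓ N i2 j2 hi2 h12 hj2 hN)
          (nd_j i1 j1 hi1 h11 hj1) (nd_j i2 j2 hi2 h12 hj2) he heq
    have hM0 : ∀ i, Mij p f ℓ N i 0 = m0i p f ℓ N i := fun i => if_pos rfl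
    have hMj : ∀ i j, j ≠ 0 → Mij p f ℓ N i j = mji p f ℓ N i j := fun i j h => if_neg h
    refine ⟨?_, ?_, ?_, ?_⟩
    · intro i1 i2 hi1 hi2 hd1 hd2 hne heq
      exact vneq _ _ _ _ i1 i2 (rDi_decomp p f ℓ N i1 hi1 hN) (rDi_decomp p f ℓ N i2 hi2 hN)
        (nd_r i1 hi1 hd1) (nd_r i2 hi2 hd2) hne (by rw [heq])
    · intro i1 i2 hi1 hi2 _ hd1 _ hd2 j1 j2 hj1 hj2 hpair heq
      have heq1 : Mij p f ℓ N i1 j1 + 1 = Mij p f ℓ N i2 j2 + 1 := by rw [heq]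
      rcases Nat.eq_zero_or_pos j1 with hz1 | hz1 <;> rcases Nat.eq_zero_or_pos j2 with hz2 | hz2
      · subst hz1; subst hz2
        rw [hM0 i1, hM0 i2] at heq1
        have hne : i1 ≠ i2 := fun h => hpair (by rw [h])
        exact vneq _ _ _ _ i1 i2 (m0i_decomp p f ℓ N i1 hi1 hN) (m0i_decomp p f ℓ N i2 hi2 hN)
          (nd_0 i1 hi1 hd1) (nd_0 i2 hi2 hd2) hne heq1
      · subst hz1
        rw [hM0 i1, hMj i2 j2 (by omega)] at heq1
        exact hm0_ne_mj i1 i2 j2 hi1 hi2 hd1 hz2 hj2 heq1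
      · subst hz2
        rw [hMj i1 j1 (by omega), hM0 i2] at heq1
        exact hm0_ne_mj i2 i1 j1 hi2 hi1 hd2 hz1 hj1 heq1.symm
      · rw [hMj i1 j1 (by omega), hMj i2 j2 (by omega)] at heq1
        exact hmj_ne_mj i1 i2 j1 j2 hi1 hi2 hd1 hd2 hz1 hj1 hz2 hj2 hpair heq1
    · intro i1 i2 hi1 hi2 hd1 _ hd2 j2 hj2 heq
      have heq1 : rDi p f ℓ N i1 + 1 = Mij p f ℓ N i2 j2 + 1 := by rw [heq]
      rcases Nat.eq_zero_or_pos j2 with hz2 | hz2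
      · subst hz2
        rw [hM0 i2] at heq1
        by_cases he : i1 = i2
        · rw [← he] at heq1
          rw [rDi_decomp p f ℓ N i1 hi1 hN, m0i_decomp p f ℓ N i1 hi1 hN] at heq1
          have hc := cancel _ _ i1 heq1
          linarith [hQ2]
        · exact vneq _ _ _ _ i1 i2 (rDi_decomp p f ℓ N i1 hi1 hN)
            (m0i_decomp p f ℓ N i2 hi2 hN) (nd_r i1 hi1 hd1) (nd_0 i2 hi2 hd2) he heq1
      · rw [hMj i2 j2 (by omega)] at heq1
        exact hr_ne_mj i1 i2 j2 hi1 hi2 hd1 hz2 hj2 heq1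
    · intro _ i1 i2 hi1 hi2 hd2 heq
      have heq1 : oi p f N i1 + 1 = rDi p f ℓ N i2 + 1 := by rw [heq]
      by_cases he : i1 = i2
      · rw [← he] at heq1
        rw [oi_decomp p f N i1 hi1 hN, rDi_decomp p f ℓ N i1 hi1 hN] at heq1
        have hc := cancel _ _ i1 heq1
        have hSS : (0 : ℤ) ≤ SS p f := by
          unfold SS
          exact Finset.sum_nonneg fun s _ => pow_nonneg (by positivity) s
        nlinarith [hL1' i1, hQ2]
      · exact vneq _ _ _ _ i1 i2 (oi_decomp p f N i1 hi1 hN)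
          (rDi_decomp p f ℓ N i2 hi2 hN) (nd_o i1 hi1) (nd_r i2 hi2 hd2) he heq1
end
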